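/- arXiv:1011.4539 — 8 statements merged into one kernel-verified Lean document; each statement's English description precedes it below -/
import Mathlib

section
/- For 1 ≤ k < n, the quantities f_{k,n} satisfy the recursion f_{k+1,n} = q^{k-1}(q-1)·(f_{k,n}·[n-k]_q − f_{k,n-1}), and the initial values are f_{1,n} = q^{n-1} − 1. -/
/-- `[a]_q = 1 + q + ⋯ + q^(a-1)`. -/
def qNum (q a : ℕ) : ℕ := ∑ i ∈ Finset.range a, q ^ i

/-- Number of `k × n` matrices over `F` of rank `k` with all diagonal entries zero. -/
noncomputable def fcount (F : Type) [Field F] [Fintype F] (k n : ℕ) : ℕ :=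
  Nat.card {A : Matrix (Fin k) (Fin n) F //
    A.rank = k ∧ ∀ (i : Fin k) (j : Fin n), (i : ℕ) = (j : ℕ) → A i j = 0}

/-!
Split a matrix counted by `f_{k+1,n}` into its first `k` rows `B`, a matrix counted by `f_{k,n}`,
and its last row `v`, which must vanish at position `k` and avoid the row space `W` of `B`.
Inside the hyperplane `H = {v | v k = 0}` there are `q^(n-1) - |H ∩ W|` such rows, and
`|H ∩ W|` is `q^k` if column `k` of `B` vanishes and `q^(k-1)` otherwise. Deleting that zero
column identifies the matrices `B` of the first kind with those counted by `f_{k,n-1}`, so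
`f_{k+1,n} = f_{k,n} q^(n-1) - f_{k,n-1} q^k - (f_{k,n} - f_{k,n-1}) q^(k-1)`,
which rearranges to the recursion. For `k = 0`, where `f_{0,n} = 1`, the same count gives
`f_{1,n} = q^(n-1) - 1`.
-/

open Matrix Submodule Module
open scoped Finset

lemma Matrix.rank_eq_card_iff_linearIndependent_row {m n F : Type*} [Field F] [Fintype m]
    [Fintype n] (A : Matrix m n F) : A.rank = Fintype.card m ↔ LinearIndependent F A.row := by
  rw [A.rank_eq_finrank_span_row, linearIndependent_iff_card_eq_finrank_span, Set.finrank,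
    eq_comm]

variable {F : Type*} [Field F]

lemma finrank_ker_inf_add_one {V : Type*} [AddCommGroup V] [Module F V] (W : Submodule F V)
    [FiniteDimensional F W] {φ : V →ₗ[F] F} (h : ¬ W ≤ LinearMap.ker φ) :
    finrank F (LinearMap.ker φ ⊓ W : Submodule F V) + 1 = finrank F W := by
  have hsurj : LinearMap.range (φ.domRestrict W) = ⊤ := by
    refine (Ideal.eq_bot_or_top _).resolve_left fun h0 => h fun x hx => ?_
    simpa using LinearMap.congr_fun (LinearMap.range_eq_bot.mp h0) ⟨x, hx⟩
  have hker : finrank F (LinearMap.ker (φ.domRestrict W)) =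
      finrank F (LinearMap.ker φ ⊓ W : Submodule F V) := by
    rw [LinearMap.ker_domRestrict, inf_comm, ← map_comap_subtype, finrank_map_subtype_eq]
  rw [← hker, ← LinearMap.finrank_range_add_finrank_ker (φ.domRestrict W), hsurj, finrank_top,
    finrank_self, add_comm]

lemma ncard_sdiff_add_pow_finrank_inf [Fintype F] {V : Type*} [AddCommGroup V] [Module F V]
    (H W : Submodule F V) [Finite H] :
    ((H : Set V) \ W).ncard + Fintype.card F ^ finrank F (H ⊓ W : Submodule F V) =
      Fintype.card F ^ finrank F H := by
  have : Finite (H ⊓ W : Submodule F V) :=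
    Finite.of_injective _ (Submodule.inclusion_injective inf_le_left)
  have h := Set.ncard_inter_add_ncard_sdiff_eq_ncard (H : Set V) W (Set.toFinite _)
  rw [← coe_inf] at h
  rw [← Nat.card_eq_fintype_card, ← Module.natCard_eq_pow_finrank,
    ← Module.natCard_eq_pow_finrank, add_comm]
  exact h

def coordHyperplane (F : Type*) [Field F] {n : ℕ} (p : Fin n) : Submodule F (Fin n → F) :=
  LinearMap.ker (LinearMap.proj p)

@[simp]
lemma mem_coordHyperplane {n : ℕ} {p : Fin n} {v : Fin n → F} :
    v ∈ coordHyperplane F p ↔ v p = 0 :=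
  Iff.rfl

lemma finrank_coordHyperplane {n : ℕ} (p : Fin n) :
    finrank F (coordHyperplane F p) = n - 1 := by
  have hsurj : LinearMap.range (LinearMap.proj (R := F) (φ := fun _ : Fin n => F) p) = ⊤ :=
    LinearMap.range_eq_top.mpr fun x => ⟨fun _ => x, rfl⟩
  have := LinearMap.finrank_range_add_finrank_ker (LinearMap.proj (R := F) (φ := fun _ => F) p)
  rw [hsurj, finrank_top, finrank_self, finrank_fin_fun] at this
  unfold coordHyperplane
  omega

lemma disjoint_coordHyperplane_ker_funLeft_succAbove {m : ℕ} (p : Fin (m + 1)) :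
    Disjoint (coordHyperplane F p) (LinearMap.ker (LinearMap.funLeft F F p.succAbove)) := by
  refine Submodule.disjoint_def.mpr fun v hp hv => funext fun j => ?_
  rcases p.eq_self_or_eq_succAbove j with rfl | ⟨i, rfl⟩
  · exact hp
  · exact congrFun hv i

def fullRankZeroDiag (F : Type*) [Field F] (k n : ℕ) : Set (Matrix (Fin k) (Fin n) F) :=
  {A | A.rank = k ∧ ∀ (i : Fin k) (j : Fin n), (i : ℕ) = j → A i j = 0}

lemma mem_fullRankZeroDiag {k n : ℕ} {A : Matrix (Fin k) (Fin n) F} :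
    A ∈ fullRankZeroDiag F k n ↔
      LinearIndependent F A.row ∧ ∀ (i : Fin k) (j : Fin n), (i : ℕ) = j → A i j = 0 := by
  exact and_congr_left' (by simpa using A.rank_eq_card_iff_linearIndependent_row)

lemma card_fullRankZeroDiag_zero (n : ℕ) : Nat.card (fullRankZeroDiag F 0 n) = 1 := by
  have : fullRankZeroDiag F 0 n = Set.univ :=
    Set.eq_univ_of_forall fun A => ⟨by rw [Subsingleton.elim A 0, rank_zero], fun i => i.elim0⟩
  rw [this, Nat.card_univ]
  simp

lemma snoc_mem_fullRankZeroDiag_iff {k n : ℕ} {p : Fin n} (hp : (p : ℕ) = k)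
    (B : Matrix (Fin k) (Fin n) F) (v : Fin n → F) :
    Matrix.of (Fin.snoc B.row v) ∈ fullRankZeroDiag F (k + 1) n ↔
      B ∈ fullRankZeroDiag F k n ∧
        v ∈ (coordHyperplane F p : Set (Fin n → F)) \ span F (Set.range B.row) := by
  have hlast : (∀ j : Fin n, k = (j : ℕ) → v j = 0) ↔ v p = 0 :=
    ⟨fun h => h p hp.symm, fun h j hj => Fin.ext (hp.trans hj) ▸ h⟩
  have hsnoc : (Matrix.of (Fin.snoc B.row v)).row = Fin.snoc B.row v := rfl
  simp only [mem_fullRankZeroDiag, Matrix.of_apply, hsnoc, linearIndependent_finSnoc,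
    Matrix.row_apply, Fin.forall_fin_succ', Fin.snoc_castSucc, Fin.snoc_last, Fin.val_castSucc,
    Fin.val_last, hlast, Set.mem_sdiff, SetLike.mem_coe, mem_coordHyperplane]
  tauto

def fullRankZeroDiagSuccEquiv {k n : ℕ} {p : Fin n} (hp : (p : ℕ) = k) :
    fullRankZeroDiag F (k + 1) n ≃ Σ B : fullRankZeroDiag F k n,
      ↥((coordHyperplane F p : Set (Fin n → F)) \ span F (Set.range B.1.row)) where
  toFun A :=
    have h := (snoc_mem_fullRankZeroDiag_iff hp (Matrix.of (Fin.init A.1.row))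
      (A.1.row (Fin.last k))).mp (by
        rw [show Matrix.of (Fin.snoc (Matrix.of (Fin.init A.1.row)).row _) = A.1 from
          Fin.snoc_init_self A.1.row]
        exact A.2)
    ⟨⟨_, h.1⟩, ⟨_, h.2⟩⟩
  invFun x := ⟨_, (snoc_mem_fullRankZeroDiag_iff hp _ _).mpr ⟨x.1.2, x.2.2⟩⟩
  left_inv A := Subtype.ext (Fin.snoc_init_self A.1.row)
  right_inv x := Sigma.subtype_ext
    (Subtype.ext (Fin.init_snoc (α := fun _ => Fin n → F) x.2.1 x.1.1.row))
    (Fin.snoc_last (α := fun _ => Fin n → F) x.2.1 x.1.1.row)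

open scoped Classical in
lemma card_fullRankZeroDiag_succ_eq_sum [Fintype F] {k n : ℕ} {p : Fin n} (hp : (p : ℕ) = k) :
    Nat.card (fullRankZeroDiag F (k + 1) n) = ∑ B : fullRankZeroDiag F k n,
      ((coordHyperplane F p : Set (Fin n → F)) \ span F (Set.range B.1.row)).ncard := by
  rw [Nat.card_congr (fullRankZeroDiagSuccEquiv hp), Nat.card_sigma]
  rfl

/-- Column `p ≥ k` carries no diagonal entry of a `k`-row matrix, and a zero column does not
affect the rank. -/
lemma submatrix_succAbove_mem_fullRankZeroDiag_iff {k m : ℕ} {p : Fin (m + 1)} (hp : k ≤ p)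
    {B : Matrix (Fin k) (Fin (m + 1)) F} (hB : ∀ i, B i p = 0) :
    B.submatrix id p.succAbove ∈ fullRankZeroDiag F k m ↔ B ∈ fullRankZeroDiag F k (m + 1) := by
  have hspan : span F (Set.range B.row) ≤ coordHyperplane F p :=
    span_le.mpr (Set.range_subset_iff.mpr hB)
  have hli : LinearIndependent F (B.submatrix id p.succAbove).row ↔ LinearIndependent F B.row :=
    (LinearMap.funLeft F F p.succAbove).linearIndependent_iff_of_disjoint
      ((disjoint_coordHyperplane_ker_funLeft_succAbove p).mono_left hspan)
  have hcast (i : Fin k) (j : Fin m) (hij : (i : ℕ) = j) : p.succAbove j = j.castSucc :=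
    Fin.succAbove_of_castSucc_lt _ _ (by rw [Fin.lt_def]; simp; omega)
  simp only [mem_fullRankZeroDiag, hli, Matrix.submatrix_apply, id]
  refine and_congr_right fun _ => ⟨fun h i j hij => ?_, fun h i j hij => ?_⟩
  · have hj : (j : ℕ) < m := by omega
    simpa [hcast i ⟨j, hj⟩ hij] using h i ⟨j, hj⟩ hij
  · rw [hcast i j hij]
    exact h i j.castSucc hij

lemma card_fullRankZeroDiag_col_eq_zero {k m : ℕ} {p : Fin (m + 1)} (hp : k ≤ p) :
    Nat.card {B : fullRankZeroDiag F k (m + 1) // ∀ i, B.1 i p = 0} =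
      Nat.card (fullRankZeroDiag F k m) := by
  refine Nat.card_congr
    { toFun B := ⟨B.1.1.submatrix id p.succAbove,
        (submatrix_succAbove_mem_fullRankZeroDiag_iff hp B.2).mpr B.1.2⟩
      invFun C := ⟨⟨Matrix.of fun i => p.insertNth 0 (C.1 i), ?_⟩, ?_⟩
      left_inv B := ?_
      right_inv C := ?_ }
  · have hC : ∀ i, (Matrix.of fun i => p.insertNth 0 (C.1 i) :
        Matrix (Fin k) (Fin (m + 1)) F) i p = 0 := by simp
    refine (submatrix_succAbove_mem_fullRankZeroDiag_iff hp hC).mp ?_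
    convert C.2
    ext i j
    simp
  · simp
  · refine Subtype.ext (Subtype.ext (funext fun i => ?_))
    change p.insertNth 0 (p.removeNth (B.1.1 i)) = B.1.1 i
    rw [Fin.insertNth_removeNth, Function.update_eq_iff]
    exact ⟨(B.2 i).symm, fun _ _ => rfl⟩
  · ext i j
    simp

lemma finrank_coordHyperplane_inf_span_row [DecidableEq F] {k n : ℕ} (p : Fin n)
    {B : Matrix (Fin k) (Fin n) F} (hB : B.rank = k) :
    finrank F (coordHyperplane F p ⊓ span F (Set.range B.row) : Submodule F (Fin n → F)) =
      if ∀ i, B i p = 0 then k else k - 1 := by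
  have hW : finrank F (span F (Set.range B.row)) = k := by rw [← rank_eq_finrank_span_row, hB]
  have hle : span F (Set.range B.row) ≤ coordHyperplane F p ↔ ∀ i, B i p = 0 :=
    span_le.trans Set.range_subset_iff
  split_ifs with h
  · rw [inf_eq_right.mpr (hle.mpr h), hW]
  · have := finrank_ker_inf_add_one _ (mt hle.mp h)
    unfold coordHyperplane
    omega

open scoped Classical in
lemma sum_pow_finrank_coordHyperplane_inf_span_row [Fintype F] {k m : ℕ} {p : Fin (m + 1)}
    (hp : (p : ℕ) = k) :
    ∑ B : fullRankZeroDiag F k (m + 1),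
        (Fintype.card F : ℤ) ^ finrank F (coordHyperplane F p ⊓ span F (Set.range B.1.row) :
          Submodule F (Fin (m + 1) → F)) =
      Nat.card (fullRankZeroDiag F k m) * (Fintype.card F : ℤ) ^ k +
        (Nat.card (fullRankZeroDiag F k (m + 1)) - Nat.card (fullRankZeroDiag F k m)) *
          (Fintype.card F : ℤ) ^ (k - 1) := by
  rw [Finset.sum_congr rfl fun B _ => by
      rw [finrank_coordHyperplane_inf_span_row p B.2.1, apply_ite ((Fintype.card F : ℤ) ^ ·)],
    Finset.sum_ite, Finset.sum_const, Finset.sum_const]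
  have hzero : #{B : fullRankZeroDiag F k (m + 1) | ∀ i, B.1 i p = 0} =
      Nat.card (fullRankZeroDiag F k m) := by
    rw [← Fintype.card_subtype, ← Nat.card_eq_fintype_card,
      card_fullRankZeroDiag_col_eq_zero hp.ge]
  have hsplit := Finset.card_filter_add_card_filter_not (s := Finset.univ)
    (p := fun B : fullRankZeroDiag F k (m + 1) => ∀ i, B.1 i p = 0)
  rw [Finset.card_univ, ← Nat.card_eq_fintype_card] at hsplit
  rw [nsmul_eq_mul, nsmul_eq_mul, ← hzero, ← hsplit]
  push_cast
  ring

/-- At `k = 0` the truncated exponent `k - 1` is harmless: its coefficient is `1 - 1`. -/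
lemma card_fullRankZeroDiag_succ [Fintype F] {k m : ℕ} (hk : k < m + 1) :
    (Nat.card (fullRankZeroDiag F (k + 1) (m + 1)) : ℤ) =
      Nat.card (fullRankZeroDiag F k (m + 1)) * (Fintype.card F : ℤ) ^ m -
        Nat.card (fullRankZeroDiag F k m) * (Fintype.card F : ℤ) ^ k -
        (Nat.card (fullRankZeroDiag F k (m + 1)) - Nat.card (fullRankZeroDiag F k m)) *
          (Fintype.card F : ℤ) ^ (k - 1) := by
  classical
  set p : Fin (m + 1) := ⟨k, hk⟩
  have hfiber (W : Submodule F (Fin (m + 1) → F)) :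
      ((((coordHyperplane F p : Set (Fin (m + 1) → F)) \ W).ncard : ℕ) : ℤ) =
        (Fintype.card F : ℤ) ^ m - (Fintype.card F : ℤ) ^
          finrank F (coordHyperplane F p ⊓ W : Submodule F (Fin (m + 1) → F)) := by
    have := ncard_sdiff_add_pow_finrank_inf (coordHyperplane F p) W
    rw [finrank_coordHyperplane, Nat.add_sub_cancel] at this
    rw [eq_sub_iff_add_eq]
    exact_mod_cast this
  rw [card_fullRankZeroDiag_succ_eq_sum (p := p) rfl, Nat.cast_sum,
    Finset.sum_congr rfl fun B _ => hfiber _, Finset.sum_sub_distrib,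
    sum_pow_finrank_coordHyperplane_inf_span_row (p := p) rfl, Finset.sum_const,
    Finset.card_univ, ← Nat.card_eq_fintype_card, nsmul_eq_mul]
  ring

lemma qNum_mul_sub_one (q a : ℕ) : (qNum q a : ℤ) * (q - 1) = (q : ℤ) ^ a - 1 := by
  simp [qNum, geom_sum_mul]

theorem stmt0 (F : Type) [Field F] [Fintype F] (q : ℕ) (hq : Fintype.card F = q) :
    (∀ k n : ℕ, 1 ≤ k → k < n →
      (fcount F (k + 1) n : ℤ) =
        (q : ℤ) ^ (k - 1) * ((q : ℤ) - 1) *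
          ((fcount F k n : ℤ) * (qNum q (n - k) : ℤ) - (fcount F k (n - 1) : ℤ))) ∧
    (∀ n : ℕ, 1 ≤ n → (fcount F 1 n : ℤ) = (q : ℤ) ^ (n - 1) - 1) := by
  subst hq
  have hcard (k n : ℕ) : fcount F k n = Nat.card (fullRankZeroDiag F k n) := rfl
  refine ⟨fun k n hk hkn => ?_, fun n hn => ?_⟩
  · obtain ⟨j, rfl⟩ : ∃ j, k = j + 1 := ⟨k - 1, by omega⟩
    obtain ⟨m, rfl⟩ : ∃ m, n = m + 1 := ⟨n - 1, by omega⟩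
    obtain ⟨d, rfl⟩ : ∃ d, m = j + 1 + d := ⟨m - (j + 1), by omega⟩
    rw [hcard, hcard, hcard, card_fullRankZeroDiag_succ hkn, Nat.add_sub_cancel,
      show j + 1 + d + 1 - (j + 1) = d + 1 by omega, Nat.add_sub_cancel]
    linear_combination (-(Nat.card (fullRankZeroDiag F (j + 1) (j + 1 + d + 1)) : ℤ) *
      (Fintype.card F : ℤ) ^ j) * qNum_mul_sub_one (Fintype.card F) (d + 1)
  · obtain ⟨m, rfl⟩ : ∃ m, n = m + 1 := ⟨n - 1, by omega⟩
    rw [hcard, card_fullRankZeroDiag_succ m.succ_pos, card_fullRankZeroDiag_zero,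
      card_fullRankZeroDiag_zero, Nat.add_sub_cancel]
    ring
end

section
/- For all n ≥ 1, 0 ≤ k ≤ n, and r ≥ 0, the following identity holds: q·matz(n+1, k+1, r+1) = matz(n+1, k, r+1) + q^{r+1}(q−1)·matz(n, k, r+1) − q^{r}(q−1)·matz(n, k, r). -/
open Matrix Finset

set_option linter.unusedSectionVars false
set_option maxHeartbeats 1600000
attribute [local instance] Classical.propDecidable

namespace Matz

variable {F : Type} [Field F] [Fintype F]


variable {F : Type} [Field F] [Fintype F]

/-- Append a column `w` to a matrix `N`. -/
def apCol {m o : Type} (N : Matrix m o F) (w : m → F) : Matrix m (o ⊕ Unit) F :=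
  Matrix.of fun i => Sum.elim (N i) fun _ => w i

/-- Append a row `w` to a matrix `N`. -/
def apRow {m o : Type} (N : Matrix m o F) (w : o → F) : Matrix (m ⊕ Unit) o F :=
  Matrix.of fun i j => Sum.elim (fun i' => N i' j) (fun _ => w j) i

lemma apCol_mulVec {m o : Type} [Fintype o] (N : Matrix m o F) (w : m → F) (z : o ⊕ Unit → F) :
    (apCol N w).mulVec z = N.mulVec (z ∘ Sum.inl) + z (Sum.inr ()) • w := by
  ext i
  simp [apCol, Matrix.mulVec, dotProduct, Fintype.sum_sum_type, mul_comm]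

lemma apRow_mulVec {m o : Type} [Fintype o] (N : Matrix m o F) (w : o → F) (a : o → F) :
    (apRow N w).mulVec a = Sum.elim (N.mulVec a) (fun _ => w ⬝ᵥ a) := by
  ext i
  cases i <;> rfl

lemma apRow_transpose {m o : Type} (N : Matrix m o F) (w : o → F) :
    (apRow N w)ᵀ = apCol Nᵀ w := by
  ext i j
  cases j <;> rfl

lemma range_apCol {m o : Type} [Fintype o] (N : Matrix m o F) (w : m → F) :
    LinearMap.range (apCol N w).mulVecLin
      = LinearMap.range N.mulVecLin ⊔ Submodule.span F {w} := by
  apply le_antisymm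
  · rintro _ ⟨z, rfl⟩
    rw [mulVecLin_apply, apCol_mulVec]
    exact Submodule.add_mem _ (Submodule.mem_sup_left ⟨z ∘ Sum.inl, rfl⟩)
      (Submodule.mem_sup_right (Submodule.smul_mem _ _ (Submodule.mem_span_singleton_self w)))
  · rw [sup_le_iff]
    constructor
    · rintro _ ⟨x, rfl⟩
      exact ⟨Sum.elim x 0, by rw [mulVecLin_apply, apCol_mulVec]; simp⟩
    · rw [Submodule.span_le, Set.singleton_subset_iff]
      exact ⟨Sum.elim 0 1, by rw [mulVecLin_apply, apCol_mulVec]; simp⟩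

lemma rank_apCol_of_mem {m o : Type} [Fintype o] (N : Matrix m o F) {w : m → F}
    (h : w ∈ LinearMap.range N.mulVecLin) : (apCol N w).rank = N.rank := by
  rw [Matrix.rank, Matrix.rank, range_apCol, sup_eq_left.mpr
    (Submodule.span_le.mpr (Set.singleton_subset_iff.mpr h))]

lemma rank_apCol_of_notMem {m o : Type} [Fintype m] [Fintype o] (N : Matrix m o F) {w : m → F}
    (h : w ∉ LinearMap.range N.mulVecLin) : (apCol N w).rank = N.rank + 1 := by
  have hw : w ≠ 0 := fun h0 => h (h0 ▸ (LinearMap.range N.mulVecLin).zero_mem)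
  have hinf : LinearMap.range N.mulVecLin ⊓ Submodule.span F {w} = ⊥ := by
    rw [eq_bot_iff]
    intro x hx
    obtain ⟨hx1, hx2⟩ := Submodule.mem_inf.mp hx
    rw [Submodule.mem_span_singleton] at hx2
    obtain ⟨a, rfl⟩ := hx2
    rcases eq_or_ne a 0 with rfl | ha
    · simp
    · have : w ∈ LinearMap.range N.mulVecLin := by
        have := (LinearMap.range N.mulVecLin).smul_mem a⁻¹ hx1
        rwa [smul_smul, inv_mul_cancel₀ ha, one_smul] at this
      exact absurd this h
  have hsum := Submodule.finrank_sup_add_finrank_inf_eq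
    (LinearMap.range N.mulVecLin) (Submodule.span F {w})
  rw [hinf, finrank_bot, add_zero, finrank_span_singleton hw] at hsum
  rw [Matrix.rank, Matrix.rank, range_apCol, hsum]


/-- The bordered matrix `[[B, u], [v, c]]`. -/
def brd (B : Matrix o o F) (u v : o → F) (c : F) : Matrix (o ⊕ Unit) (o ⊕ Unit) F :=
  Matrix.of fun i j =>
    Sum.elim (fun i' => Sum.elim (fun j' => B i' j') (fun _ => u i') j)
      (fun _ => Sum.elim (fun j' => v j') (fun _ => c) j) i

lemma brd_eq_apCol_apRow (B : Matrix o o F) (u v : o → F) (c : F) :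
    brd B u v c = apCol (apRow B v) (Sum.elim u fun _ => c) := by
  ext i j
  cases i <;> cases j <;> rfl

lemma brd_transpose (B : Matrix o o F) (u v : o → F) (c : F) :
    (brd B u v c)ᵀ = brd Bᵀ v u c := by
  ext i j
  cases i <;> cases j <;> rfl

@[simp] lemma brd_inl_inl {o : Type} (B : Matrix o o F) (u v : o → F) (c : F) (i j : o) :
    brd B u v c (Sum.inl i) (Sum.inl j) = B i j := rfl
@[simp] lemma brd_inl_inr {o : Type} (B : Matrix o o F) (u v : o → F) (c : F) (i : o) (j : Unit) :
    brd B u v c (Sum.inl i) (Sum.inr j) = u i := rfl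
@[simp] lemma brd_inr_inl {o : Type} (B : Matrix o o F) (u v : o → F) (c : F) (i : Unit) (j : o) :
    brd B u v c (Sum.inr i) (Sum.inl j) = v j := rfl
@[simp] lemma brd_inr_inr {o : Type} (B : Matrix o o F) (u v : o → F) (c : F) (i j : Unit) :
    brd B u v c (Sum.inr i) (Sum.inr j) = c := rfl

variable {m o : Type} [Fintype m] [Fintype o]

lemma rank_apRow_of_mem (N : Matrix m o F) {w : o → F}
    (h : w ∈ LinearMap.range Nᵀ.mulVecLin) : (apRow N w).rank = N.rank := by
  rw [← Matrix.rank_transpose (apRow N w), apRow_transpose,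
    rank_apCol_of_mem _ h, Matrix.rank_transpose]

lemma rank_apRow_of_notMem (N : Matrix m o F) {w : o → F}
    (h : w ∉ LinearMap.range Nᵀ.mulVecLin) : (apRow N w).rank = N.rank + 1 := by
  rw [← Matrix.rank_transpose (apRow N w), apRow_transpose,
    rank_apCol_of_notMem _ h, Matrix.rank_transpose]

lemma mem_range_apRow_iff (B : Matrix o o F) (u v : o → F) (c : F) :
    (Sum.elim u fun _ => c) ∈ LinearMap.range (apRow B v).mulVecLin
      ↔ ∃ a, B.mulVec a = u ∧ v ⬝ᵥ a = c := by
  constructor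
  · rintro ⟨a, ha⟩
    rw [mulVecLin_apply, apRow_mulVec] at ha
    exact ⟨a, funext fun i => congrFun ha (Sum.inl i), congrFun ha (Sum.inr ())⟩
  · rintro ⟨a, ha1, ha2⟩
    exact ⟨a, by rw [mulVecLin_apply, apRow_mulVec, ha1, ha2]⟩

/-- Rank formula A for the bordered matrix. -/
lemma rank_brd (B : Matrix o o F) (u v : o → F) (c : F) :
    (brd B u v c).rank = B.rank + (if v ∈ LinearMap.range Bᵀ.mulVecLin then 0 else 1)
      + (if ∃ a, B.mulVec a = u ∧ v ⬝ᵥ a = c then 0 else 1) := by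
  rw [brd_eq_apCol_apRow]
  by_cases hv : v ∈ LinearMap.range Bᵀ.mulVecLin <;>
    by_cases he : ∃ a, B.mulVec a = u ∧ v ⬝ᵥ a = c
  · rw [if_pos hv, if_pos he, add_zero, add_zero,
      rank_apCol_of_mem _ ((mem_range_apRow_iff B u v c).mpr he), rank_apRow_of_mem _ hv]
  · rw [if_pos hv, if_neg he, add_zero,
      rank_apCol_of_notMem _ (fun h => he ((mem_range_apRow_iff B u v c).mp h)),
      rank_apRow_of_mem _ hv]
  · rw [if_neg hv, if_pos he, add_zero,
      rank_apCol_of_mem _ ((mem_range_apRow_iff B u v c).mpr he), rank_apRow_of_notMem _ hv]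
  · rw [if_neg hv, if_neg he,
      rank_apCol_of_notMem _ (fun h => he ((mem_range_apRow_iff B u v c).mp h)),
      rank_apRow_of_notMem _ hv]

/-- Rank formula B for the bordered matrix. -/
lemma rank_brd' (B : Matrix o o F) (u v : o → F) (c : F) :
    (brd B u v c).rank = B.rank + (if u ∈ LinearMap.range B.mulVecLin then 0 else 1)
      + (if ∃ y, Bᵀ.mulVec y = v ∧ u ⬝ᵥ y = c then 0 else 1) := by
  rw [← Matrix.rank_transpose (brd B u v c), brd_transpose, rank_brd, transpose_transpose,
    Matrix.rank_transpose]

lemma split2 {α : Type} [Fintype α] (R P : α → Prop) [DecidablePred R] [DecidablePred P]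
    [DecidablePred fun a => R a ∧ P a] [DecidablePred fun a => R a ∧ ¬P a] :
    (univ.filter R).card
      = (univ.filter fun a => R a ∧ P a).card + (univ.filter fun a => R a ∧ ¬P a).card := by
  have h := Finset.card_filter_add_card_filter_not (p := P) (s := univ.filter R)
  rw [Finset.filter_filter, Finset.filter_filter] at h
  exact h.symm.trans (by congr!)

lemma card_filter_const_and {α : Type} [Fintype α] (C : Prop) (S : α → Prop)
    [DecidablePred fun a => C ∧ S a] [DecidablePred S] [Decidable C] :
    (univ.filter fun a => C ∧ S a).card = if C then (univ.filter S).card else 0 := by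
  by_cases h : C <;> simp [h]

lemma card_pair {α β : Type} [Fintype α] [Fintype β] (R : α → β → Prop)
    [DecidablePred fun p : α × β => R p.1 p.2] [∀ a, DecidablePred (R a)] :
    (univ.filter fun p : α × β => R p.1 p.2).card
      = ∑ a : α, (univ.filter fun b => R a b).card := by
  rw [Finset.card_eq_sum_card_fiberwise (f := Prod.fst) (t := univ) (fun x _ => mem_univ _)]
  refine Finset.sum_congr rfl fun a _ => ?_
  refine Finset.card_bij' (fun p _ => p.2) (fun b _ => (a, b)) ?_ ?_ ?_ ?_
  · intro p hp
    simp only [mem_filter, mem_univ, true_and] at hp ⊢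
    obtain ⟨h1, h2⟩ := hp
    rwa [← h2]
  · intro b hb
    simp only [mem_filter, mem_univ, true_and] at hb ⊢
    simpa using hb
  · intro p hp
    simp only [mem_filter, mem_univ, true_and] at hp
    exact Prod.ext hp.2.symm rfl
  · intro b hb
    rfl

lemma card_filter_mem_submodule {α : Type} [Fintype α] [DecidableEq α] (W : Submodule F (α → F))
    [DecidablePred fun u : α → F => u ∈ W] :
    (univ.filter fun u : α → F => u ∈ W).card = Fintype.card F ^ Module.finrank F W := by
  rw [← Module.card_eq_pow_finrank (K := F) (V := W), ← Fintype.card_subtype]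
  try exact Fintype.card_congr (Equiv.refl _)


variable [DecidableEq o]

lemma dot_well_defined {B : Matrix o o F} {v : o → F}
    (hv : v ∈ LinearMap.range Bᵀ.mulVecLin) {a a' : o → F}
    (h : B.mulVec a = B.mulVec a') : v ⬝ᵥ a = v ⬝ᵥ a' := by
  obtain ⟨y, rfl⟩ := hv
  rw [mulVecLin_apply, mulVec_transpose]
  calc (y ᵥ* B) ⬝ᵥ a = y ⬝ᵥ (B *ᵥ a) := (dotProduct_mulVec y B a).symm
    _ = y ⬝ᵥ (B *ᵥ a') := by rw [h]
    _ = (y ᵥ* B) ⬝ᵥ a' := dotProduct_mulVec y B a'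

lemma key (B : Matrix o o F) :
    (univ.filter fun p : (o → F) × (o → F) =>
        (∃ a, B.mulVec a = p.1 ∧ p.2 ⬝ᵥ a = (0:F)) ∧ p.2 ∈ LinearMap.range Bᵀ.mulVecLin).card
      = (univ.filter fun p : (o → F) × (o → F) =>
          (∃ a, B.mulVec a = p.1 ∧ p.2 ⬝ᵥ a = (1:F)) ∧ p.2 ∈ LinearMap.range Bᵀ.mulVecLin).card
        + Fintype.card F ^ B.rank := by
  simp only [card_pair (fun u v => (∃ a, B.mulVec a = u ∧ v ⬝ᵥ a = (0:F)) ∧ v ∈ LinearMap.range Bᵀ.mulVecLin),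
    card_pair (fun u v => (∃ a, B.mulVec a = u ∧ v ⬝ᵥ a = (1:F)) ∧ v ∈ LinearMap.range Bᵀ.mulVecLin)]
  rw [← Finset.add_sum_erase _ _ (mem_univ (0 : o → F)),
    ← Finset.add_sum_erase _ _ (mem_univ (0 : o → F))]
  have h00 : (univ.filter fun v : o → F =>
      (∃ a, B.mulVec a = 0 ∧ v ⬝ᵥ a = (0:F)) ∧ v ∈ LinearMap.range Bᵀ.mulVecLin).card
      = Fintype.card F ^ B.rank := by
    rw [Finset.filter_congr (q := fun v => v ∈ LinearMap.range Bᵀ.mulVecLin)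
      (fun v _ => ⟨And.right, fun hv => ⟨⟨0, by simp⟩, hv⟩⟩)]
    rw [card_filter_mem_submodule]
    show Fintype.card F ^ Bᵀ.rank = Fintype.card F ^ B.rank
    rw [Matrix.rank_transpose]
  have h01 : (univ.filter fun v : o → F =>
      (∃ a, B.mulVec a = 0 ∧ v ⬝ᵥ a = (1:F)) ∧ v ∈ LinearMap.range Bᵀ.mulVecLin).card = 0 := by
    rw [Finset.card_eq_zero, Finset.filter_eq_empty_iff]
    rintro v - ⟨⟨a, ha0, ha1⟩, hv⟩
    have h2 : v ⬝ᵥ a = v ⬝ᵥ (0 : o → F) := dot_well_defined hv (by rw [ha0, mulVec_zero])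
    rw [dotProduct_zero] at h2
    exact one_ne_zero (ha1 ▸ h2)
  have hterm : ∀ u : o → F, u ≠ 0 →
      (univ.filter fun v : o → F =>
        (∃ a, B.mulVec a = u ∧ v ⬝ᵥ a = (0:F)) ∧ v ∈ LinearMap.range Bᵀ.mulVecLin).card
      = (univ.filter fun v : o → F =>
        (∃ a, B.mulVec a = u ∧ v ⬝ᵥ a = (1:F)) ∧ v ∈ LinearMap.range Bᵀ.mulVecLin).card := by
    intro u hu
    by_cases hPc : u ∈ LinearMap.range B.mulVecLin
    · obtain ⟨x₀, hx₀⟩ := hPc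
      rw [mulVecLin_apply] at hx₀
      have hcong : ∀ (c : F) (v : o → F),
          ((∃ a, B.mulVec a = u ∧ v ⬝ᵥ a = c) ∧ v ∈ LinearMap.range Bᵀ.mulVecLin)
            ↔ (v ∈ LinearMap.range Bᵀ.mulVecLin ∧ v ⬝ᵥ x₀ = c) := by
        intro c v
        constructor
        · rintro ⟨⟨a, ha, hac⟩, hv⟩
          exact ⟨hv, by rw [← hac]; exact dot_well_defined hv (by rw [hx₀, ha])⟩
        · rintro ⟨hv, hc⟩
          exact ⟨⟨x₀, hx₀, hc⟩, hv⟩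
      rw [Finset.filter_congr (fun v _ => hcong 0 v), Finset.filter_congr (fun v _ => hcong 1 v)]
      obtain ⟨i, hi⟩ : ∃ i, u i ≠ 0 := by
        by_contra h
        push_neg at h
        exact hu (funext h)
      have hd : (Bᵀ.mulVec (Pi.single i 1)) ⬝ᵥ x₀ = u i := by
        rw [mulVec_transpose, ← dotProduct_mulVec, hx₀, single_dotProduct, one_mul]
      set v₀ : o → F := (u i)⁻¹ • (Bᵀ.mulVec (Pi.single i 1)) with hv₀
      have hv₀mem : v₀ ∈ LinearMap.range Bᵀ.mulVecLin :=
        Submodule.smul_mem _ _ ⟨Pi.single i 1, rfl⟩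
      have hv₀dot : v₀ ⬝ᵥ x₀ = 1 := by
        rw [hv₀, smul_dotProduct, hd, smul_eq_mul, inv_mul_cancel₀ hi]
      refine Finset.card_bij' (fun v _ => v + v₀) (fun v _ => v - v₀) ?_ ?_ ?_ ?_
      · intro v hvm
        simp only [mem_filter, mem_univ, true_and] at hvm ⊢
        exact ⟨Submodule.add_mem _ hvm.1 hv₀mem,
          by rw [add_dotProduct, hvm.2, hv₀dot, zero_add]⟩
      · intro v hvm
        simp only [mem_filter, mem_univ, true_and] at hvm ⊢
        exact ⟨Submodule.sub_mem _ hvm.1 hv₀mem,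
          by rw [sub_dotProduct, hvm.2, hv₀dot, sub_self]⟩
      · intro v _
        exact add_sub_cancel_right v v₀
      · intro v _
        exact sub_add_cancel v v₀
    · have he : ∀ (c : F), (univ.filter fun v : o → F =>
          (∃ a, B.mulVec a = u ∧ v ⬝ᵥ a = c) ∧ v ∈ LinearMap.range Bᵀ.mulVecLin).card = 0 := by
        intro c
        rw [Finset.card_eq_zero, Finset.filter_eq_empty_iff]
        rintro v - ⟨⟨a, ha, -⟩, -⟩
        exact hPc ⟨a, by rw [mulVecLin_apply]; exact ha⟩
      rw [he 0, he 1]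
  rw [h00, h01, Finset.sum_congr rfl (fun u hu => hterm u (Finset.mem_erase.mp hu).1)]
  omega

/-- number of pairs (u,v) such that the bordered matrix has rank r+1 -/
noncomputable def fib (r : ℕ) (B : Matrix o o F) (c : F) : ℕ :=
  (univ.filter fun p : (o → F) × (o → F) => (brd B p.1 p.2 c).rank = r + 1).card

lemma pw (r : ℕ) (B : Matrix o o F) :
    fib r B 0 + (if B.rank = r then Fintype.card F ^ r else 0)
      = fib r B 1 + (if B.rank = r + 1 then Fintype.card F ^ (r + 1) else 0) := by
  have hrk1 : ∀ (u v : o → F) (c : F), u ∈ LinearMap.range B.mulVecLin →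
      v ∉ LinearMap.range Bᵀ.mulVecLin → (brd B u v c).rank = B.rank + 1 := by
    intro u v c hu hv
    have hE : ¬∃ y, Bᵀ.mulVec y = v ∧ u ⬝ᵥ y = c := by
      rintro ⟨y, hy, -⟩
      exact hv ⟨y, by rw [mulVecLin_apply]; exact hy⟩
    rw [rank_brd' B u v c, if_pos hu, add_zero, if_neg hE]
  have hrk2 : ∀ (u v : o → F) (c : F), u ∉ LinearMap.range B.mulVecLin →
      v ∈ LinearMap.range Bᵀ.mulVecLin → (brd B u v c).rank = B.rank + 1 := by
    intro u v c hu hv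
    have hE : ¬∃ a, B.mulVec a = u ∧ v ⬝ᵥ a = c := by
      rintro ⟨a, ha, -⟩
      exact hu ⟨a, by rw [mulVecLin_apply]; exact ha⟩
    rw [rank_brd B u v c, if_pos hv, add_zero, if_neg hE]
  have hrk3 : ∀ (u v : o → F) (c : F), u ∉ LinearMap.range B.mulVecLin →
      v ∉ LinearMap.range Bᵀ.mulVecLin → (brd B u v c).rank = B.rank + 2 := by
    intro u v c hu hv
    have hE : ¬∃ a, B.mulVec a = u ∧ v ⬝ᵥ a = c := by
      rintro ⟨a, ha, -⟩
      exact hu ⟨a, by rw [mulVecLin_apply]; exact ha⟩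
    rw [rank_brd B u v c, if_neg hv, if_neg hE]
  have hrkE : ∀ (u v : o → F) (c : F), (∃ a, B.mulVec a = u ∧ v ⬝ᵥ a = c) →
      v ∈ LinearMap.range Bᵀ.mulVecLin → (brd B u v c).rank = B.rank := by
    intro u v c hE hv
    rw [rank_brd B u v c, if_pos hv, if_pos hE, add_zero, add_zero]
  have hrkNE : ∀ (u v : o → F) (c : F), ¬(∃ a, B.mulVec a = u ∧ v ⬝ᵥ a = c) →
      v ∈ LinearMap.range Bᵀ.mulVecLin → (brd B u v c).rank = B.rank + 1 := by
    intro u v c hE hv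
    rw [rank_brd B u v c, if_pos hv, add_zero, if_neg hE]
  have h1 : ∀ c : F, fib r B c
      = (univ.filter fun p : (o → F) × (o → F) => ((brd B p.1 p.2 c).rank = r + 1) ∧ p.1 ∈ LinearMap.range B.mulVecLin).card + (univ.filter fun p : (o → F) × (o → F) => ((brd B p.1 p.2 c).rank = r + 1) ∧ ¬(p.1 ∈ LinearMap.range B.mulVecLin)).card :=
    fun c => split2 _ _
  have h2 : ∀ c : F, (univ.filter fun p : (o → F) × (o → F) => ((brd B p.1 p.2 c).rank = r + 1) ∧ p.1 ∈ LinearMap.range B.mulVecLin).card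
      = (univ.filter fun p : (o → F) × (o → F) => (((brd B p.1 p.2 c).rank = r + 1) ∧ p.1 ∈ LinearMap.range B.mulVecLin) ∧ p.2 ∈ LinearMap.range Bᵀ.mulVecLin).card + (univ.filter fun p : (o → F) × (o → F) => (((brd B p.1 p.2 c).rank = r + 1) ∧ p.1 ∈ LinearMap.range B.mulVecLin) ∧ ¬(p.2 ∈ LinearMap.range Bᵀ.mulVecLin)).card :=
    fun c => split2 _ _
  have h3 : ∀ c : F, (univ.filter fun p : (o → F) × (o → F) => ((brd B p.1 p.2 c).rank = r + 1) ∧ ¬(p.1 ∈ LinearMap.range B.mulVecLin)).card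
      = (univ.filter fun p : (o → F) × (o → F) => (((brd B p.1 p.2 c).rank = r + 1) ∧ ¬(p.1 ∈ LinearMap.range B.mulVecLin)) ∧ p.2 ∈ LinearMap.range Bᵀ.mulVecLin).card + (univ.filter fun p : (o → F) × (o → F) => (((brd B p.1 p.2 c).rank = r + 1) ∧ ¬(p.1 ∈ LinearMap.range B.mulVecLin)) ∧ ¬(p.2 ∈ LinearMap.range Bᵀ.mulVecLin)).card :=
    fun c => split2 _ _
  have h4 : ∀ c : F, (univ.filter fun p : (o → F) × (o → F) => (((brd B p.1 p.2 c).rank = r + 1) ∧ p.1 ∈ LinearMap.range B.mulVecLin) ∧ p.2 ∈ LinearMap.range Bᵀ.mulVecLin).card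
      = (univ.filter fun p : (o → F) × (o → F) => ((((brd B p.1 p.2 c).rank = r + 1) ∧ p.1 ∈ LinearMap.range B.mulVecLin) ∧ p.2 ∈ LinearMap.range Bᵀ.mulVecLin) ∧ (∃ a, B.mulVec a = p.1 ∧ p.2 ⬝ᵥ a = c)).card + (univ.filter fun p : (o → F) × (o → F) => ((((brd B p.1 p.2 c).rank = r + 1) ∧ p.1 ∈ LinearMap.range B.mulVecLin) ∧ p.2 ∈ LinearMap.range Bᵀ.mulVecLin) ∧ ¬(∃ a, B.mulVec a = p.1 ∧ p.2 ⬝ᵥ a = c)).card :=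
    fun c => split2 _ _
  have hA2 : ∀ c : F, (univ.filter fun p : (o → F) × (o → F) => (((brd B p.1 p.2 c).rank = r + 1) ∧ p.1 ∈ LinearMap.range B.mulVecLin) ∧ ¬(p.2 ∈ LinearMap.range Bᵀ.mulVecLin)).card
      = if B.rank = r then (univ.filter fun p : (o → F) × (o → F) => p.1 ∈ LinearMap.range B.mulVecLin ∧ ¬(p.2 ∈ LinearMap.range Bᵀ.mulVecLin)).card else 0 := by
    intro c
    rw [Finset.filter_congr (q := fun p : (o → F) × (o → F) =>
      B.rank = r ∧ (p.1 ∈ LinearMap.range B.mulVecLin ∧ ¬(p.2 ∈ LinearMap.range Bᵀ.mulVecLin))) ?_]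
    · exact card_filter_const_and _ _
    · intro p _
      constructor
      · rintro ⟨⟨hR, hu⟩, hv⟩
        rw [hrk1 p.1 p.2 c hu hv] at hR
        exact ⟨by omega, hu, hv⟩
      · rintro ⟨hs, hu, hv⟩
        exact ⟨⟨by rw [hrk1 p.1 p.2 c hu hv, hs], hu⟩, hv⟩
  have hA3 : ∀ c : F, (univ.filter fun p : (o → F) × (o → F) => (((brd B p.1 p.2 c).rank = r + 1) ∧ ¬(p.1 ∈ LinearMap.range B.mulVecLin)) ∧ p.2 ∈ LinearMap.range Bᵀ.mulVecLin).card
      = if B.rank = r then (univ.filter fun p : (o → F) × (o → F) => ¬(p.1 ∈ LinearMap.range B.mulVecLin) ∧ p.2 ∈ LinearMap.range Bᵀ.mulVecLin).card else 0 := by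
    intro c
    rw [Finset.filter_congr (q := fun p : (o → F) × (o → F) =>
      B.rank = r ∧ (¬(p.1 ∈ LinearMap.range B.mulVecLin) ∧ p.2 ∈ LinearMap.range Bᵀ.mulVecLin)) ?_]
    · exact card_filter_const_and _ _
    · intro p _
      constructor
      · rintro ⟨⟨hR, hu⟩, hv⟩
        rw [hrk2 p.1 p.2 c hu hv] at hR
        exact ⟨by omega, hu, hv⟩
      · rintro ⟨hs, hu, hv⟩
        exact ⟨⟨by rw [hrk2 p.1 p.2 c hu hv, hs], hu⟩, hv⟩
  have hA4 : ∀ c : F, (univ.filter fun p : (o → F) × (o → F) => (((brd B p.1 p.2 c).rank = r + 1) ∧ ¬(p.1 ∈ LinearMap.range B.mulVecLin)) ∧ ¬(p.2 ∈ LinearMap.range Bᵀ.mulVecLin)).card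
      = if B.rank + 2 = r + 1 then (univ.filter fun p : (o → F) × (o → F) => ¬(p.1 ∈ LinearMap.range B.mulVecLin) ∧ ¬(p.2 ∈ LinearMap.range Bᵀ.mulVecLin)).card else 0 := by
    intro c
    rw [Finset.filter_congr (q := fun p : (o → F) × (o → F) =>
      B.rank + 2 = r + 1 ∧ (¬(p.1 ∈ LinearMap.range B.mulVecLin) ∧ ¬(p.2 ∈ LinearMap.range Bᵀ.mulVecLin))) ?_]
    · exact card_filter_const_and _ _
    · intro p _
      constructor
      · rintro ⟨⟨hR, hu⟩, hv⟩
        rw [hrk3 p.1 p.2 c hu hv] at hR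
        exact ⟨hR, hu, hv⟩
      · rintro ⟨hs, hu, hv⟩
        exact ⟨⟨by rw [hrk3 p.1 p.2 c hu hv, hs], hu⟩, hv⟩
  have hA1a : ∀ c : F, (univ.filter fun p : (o → F) × (o → F) => ((((brd B p.1 p.2 c).rank = r + 1) ∧ p.1 ∈ LinearMap.range B.mulVecLin) ∧ p.2 ∈ LinearMap.range Bᵀ.mulVecLin) ∧ (∃ a, B.mulVec a = p.1 ∧ p.2 ⬝ᵥ a = c)).card
      = if B.rank = r + 1 then (univ.filter fun p : (o → F) × (o → F) => (∃ a, B.mulVec a = p.1 ∧ p.2 ⬝ᵥ a = c) ∧ p.2 ∈ LinearMap.range Bᵀ.mulVecLin).card else 0 := by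
    intro c
    rw [Finset.filter_congr (q := fun p : (o → F) × (o → F) =>
      B.rank = r + 1 ∧ ((∃ a, B.mulVec a = p.1 ∧ p.2 ⬝ᵥ a = c) ∧ p.2 ∈ LinearMap.range Bᵀ.mulVecLin)) ?_]
    · exact card_filter_const_and _ _
    · intro p _
      constructor
      · rintro ⟨⟨⟨hR, hu⟩, hv⟩, hE⟩
        rw [hrkE p.1 p.2 c hE hv] at hR
        exact ⟨hR, hE, hv⟩
      · rintro ⟨hs, hE, hv⟩
        have hPc : p.1 ∈ LinearMap.range B.mulVecLin := by
          obtain ⟨a, ha, -⟩ := id hE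
          exact ⟨a, by rw [mulVecLin_apply]; exact ha⟩
        exact ⟨⟨⟨by rw [hrkE p.1 p.2 c hE hv, hs], hPc⟩, hv⟩, hE⟩
  have hA1b : ∀ c : F, (univ.filter fun p : (o → F) × (o → F) => ((((brd B p.1 p.2 c).rank = r + 1) ∧ p.1 ∈ LinearMap.range B.mulVecLin) ∧ p.2 ∈ LinearMap.range Bᵀ.mulVecLin) ∧ ¬(∃ a, B.mulVec a = p.1 ∧ p.2 ⬝ᵥ a = c)).card
      = if B.rank = r then (univ.filter fun p : (o → F) × (o → F) => ¬(∃ a, B.mulVec a = p.1 ∧ p.2 ⬝ᵥ a = c) ∧ (p.1 ∈ LinearMap.range B.mulVecLin ∧ p.2 ∈ LinearMap.range Bᵀ.mulVecLin)).card else 0 := by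
    intro c
    rw [Finset.filter_congr (q := fun p : (o → F) × (o → F) =>
      B.rank = r ∧ (¬(∃ a, B.mulVec a = p.1 ∧ p.2 ⬝ᵥ a = c) ∧ (p.1 ∈ LinearMap.range B.mulVecLin ∧ p.2 ∈ LinearMap.range Bᵀ.mulVecLin))) ?_]
    · exact card_filter_const_and _ _
    · intro p _
      constructor
      · rintro ⟨⟨⟨hR, hu⟩, hv⟩, hE⟩
        rw [hrkNE p.1 p.2 c hE hv] at hR
        exact ⟨by omega, hE, hu, hv⟩
      · rintro ⟨hs, hE, hu, hv⟩
        exact ⟨⟨⟨by rw [hrkNE p.1 p.2 c hE hv, hs], hu⟩, hv⟩, hE⟩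
  have hK1 : ∀ c : F, (univ.filter fun p : (o → F) × (o → F) => p.1 ∈ LinearMap.range B.mulVecLin ∧ p.2 ∈ LinearMap.range Bᵀ.mulVecLin).card
      = (univ.filter fun p : (o → F) × (o → F) => (p.1 ∈ LinearMap.range B.mulVecLin ∧ p.2 ∈ LinearMap.range Bᵀ.mulVecLin) ∧ (∃ a, B.mulVec a = p.1 ∧ p.2 ⬝ᵥ a = c)).card + (univ.filter fun p : (o → F) × (o → F) => (p.1 ∈ LinearMap.range B.mulVecLin ∧ p.2 ∈ LinearMap.range Bᵀ.mulVecLin) ∧ ¬(∃ a, B.mulVec a = p.1 ∧ p.2 ⬝ᵥ a = c)).card :=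
    fun c => split2 _ _
  have hK1a : ∀ c : F, (univ.filter fun p : (o → F) × (o → F) => (p.1 ∈ LinearMap.range B.mulVecLin ∧ p.2 ∈ LinearMap.range Bᵀ.mulVecLin) ∧ (∃ a, B.mulVec a = p.1 ∧ p.2 ⬝ᵥ a = c)).card = (univ.filter fun p : (o → F) × (o → F) => (∃ a, B.mulVec a = p.1 ∧ p.2 ⬝ᵥ a = c) ∧ p.2 ∈ LinearMap.range Bᵀ.mulVecLin).card := by
    intro c
    refine congrArg Finset.card (Finset.filter_congr fun p _ => ?_)
    constructor
    · rintro ⟨⟨hu, hv⟩, hE⟩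
      exact ⟨hE, hv⟩
    · rintro ⟨hE, hv⟩
      have hPc : p.1 ∈ LinearMap.range B.mulVecLin := by
        obtain ⟨a, ha, -⟩ := id hE
        exact ⟨a, by rw [mulVecLin_apply]; exact ha⟩
      exact ⟨⟨hPc, hv⟩, hE⟩
  have hK1b : ∀ c : F, (univ.filter fun p : (o → F) × (o → F) => (p.1 ∈ LinearMap.range B.mulVecLin ∧ p.2 ∈ LinearMap.range Bᵀ.mulVecLin) ∧ ¬(∃ a, B.mulVec a = p.1 ∧ p.2 ⬝ᵥ a = c)).card = (univ.filter fun p : (o → F) × (o → F) => ¬(∃ a, B.mulVec a = p.1 ∧ p.2 ⬝ᵥ a = c) ∧ (p.1 ∈ LinearMap.range B.mulVecLin ∧ p.2 ∈ LinearMap.range Bᵀ.mulVecLin)).card := by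
    intro c
    refine congrArg Finset.card (Finset.filter_congr fun p _ => ?_)
    constructor
    · rintro ⟨⟨hu, hv⟩, hE⟩
      exact ⟨hE, hu, hv⟩
    · rintro ⟨hE, hu, hv⟩
      exact ⟨⟨hu, hv⟩, hE⟩
  have hkey := key B
  have he0 : (univ.filter fun p : (o → F) × (o → F) => p.1 ∈ LinearMap.range B.mulVecLin ∧ p.2 ∈ LinearMap.range Bᵀ.mulVecLin).card
      = (univ.filter fun p : (o → F) × (o → F) => (∃ a, B.mulVec a = p.1 ∧ p.2 ⬝ᵥ a = 0) ∧ p.2 ∈ LinearMap.range Bᵀ.mulVecLin).card + (univ.filter fun p : (o → F) × (o → F) => ¬(∃ a, B.mulVec a = p.1 ∧ p.2 ⬝ᵥ a = 0) ∧ (p.1 ∈ LinearMap.range B.mulVecLin ∧ p.2 ∈ LinearMap.range Bᵀ.mulVecLin)).card := by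
    rw [hK1 0, hK1a 0, hK1b 0]
  have he1 : (univ.filter fun p : (o → F) × (o → F) => p.1 ∈ LinearMap.range B.mulVecLin ∧ p.2 ∈ LinearMap.range Bᵀ.mulVecLin).card
      = (univ.filter fun p : (o → F) × (o → F) => (∃ a, B.mulVec a = p.1 ∧ p.2 ⬝ᵥ a = 1) ∧ p.2 ∈ LinearMap.range Bᵀ.mulVecLin).card + (univ.filter fun p : (o → F) × (o → F) => ¬(∃ a, B.mulVec a = p.1 ∧ p.2 ⬝ᵥ a = 1) ∧ (p.1 ∈ LinearMap.range B.mulVecLin ∧ p.2 ∈ LinearMap.range Bᵀ.mulVecLin)).card := by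
    rw [hK1 1, hK1a 1, hK1b 1]
  rw [h1 0, h1 1, h2 0, h2 1, h3 0, h3 1, h4 0, h4 1, hA1a 0, hA1a 1, hA1b 0, hA1b 1,
    hA2 0, hA2 1, hA3 0, hA3 1, hA4 0, hA4 1]
  by_cases hs1 : B.rank = r + 1
  · have hs2 : ¬(B.rank = r) := by omega
    have hs3 : ¬(B.rank + 2 = r + 1) := by omega
    rw [hs1] at hkey
    simp only [if_pos hs1, if_neg hs2, if_neg hs3]
    omega
  · by_cases hs2 : B.rank = r
    · have hs3 : ¬(B.rank + 2 = r + 1) := by omega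
      rw [hs2] at hkey
      simp only [if_neg hs1, if_pos hs2, if_neg hs3]
      omega
    · by_cases hs3 : B.rank + 2 = r + 1
      · simp only [if_neg hs1, if_neg hs2, if_pos hs3]
      · simp only [if_neg hs1, if_neg hs2, if_neg hs3]

end Matz

/-- Number of `n × n` matrices over `F` of rank `r` whose first `k` diagonal
entries are zero. -/
noncomputable def matz (F : Type) [Field F] [Fintype F] (n k r : ℕ) : ℕ :=
  Nat.card {A : Matrix (Fin n) (Fin n) F //
    A.rank = r ∧ ∀ i : Fin n, (i : ℕ) < k → A i i = 0}

lemma matz_eq (F : Type) [Field F] [Fintype F] (m k r : ℕ) :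
    matz F m k r = (univ.filter fun A : Matrix (Fin m) (Fin m) F =>
      A.rank = r ∧ ∀ i : Fin m, (i : ℕ) < k → A i i = 0).card := by
  have h : matz F m k r = Nat.card {A : Matrix (Fin m) (Fin m) F //
      A.rank = r ∧ ∀ i : Fin m, (i : ℕ) < k → A i i = 0} := rfl
  rw [h, Nat.card_eq_fintype_card, Fintype.card_subtype]

theorem stmt4 (F : Type) [Field F] [Fintype F] (q : ℕ) (hq : Fintype.card F = q)
    (n k r : ℕ) (hn : 1 ≤ n) (hk : k ≤ n) :
    (q : ℤ) * (matz F (n + 1) (k + 1) (r + 1) : ℤ) =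
      (matz F (n + 1) k (r + 1) : ℤ) +
        (q : ℤ) ^ (r + 1) * ((q : ℤ) - 1) * (matz F n k (r + 1) : ℤ) -
        (q : ℤ) ^ r * ((q : ℤ) - 1) * (matz F n k r : ℤ) := by
  have hk1 : k < n + 1 := by omega
  -- facts about the index equivalence
  have hsymm : ∀ j : Fin n, ((finSuccEquiv' (⟨k, hk1⟩ : Fin (n + 1))).trans (Equiv.optionEquivSumPUnit (Fin n))).symm (Sum.inl j) = (⟨k, hk1⟩ : Fin (n + 1)).succAbove j := fun j => rfl
  have hf4 : ((finSuccEquiv' (⟨k, hk1⟩ : Fin (n + 1))).trans (Equiv.optionEquivSumPUnit (Fin n))).symm (Sum.inr ()) = (⟨k, hk1⟩ : Fin (n + 1)) := rfl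
  have hf3 : ∀ (j : Fin n), (j : ℕ) < k →
      ((finSuccEquiv' (⟨k, hk1⟩ : Fin (n + 1))).trans (Equiv.optionEquivSumPUnit (Fin n))).symm (Sum.inl j) = (⟨(j : ℕ), Nat.lt_succ_of_lt j.isLt⟩ : Fin (n + 1)) := by
    intro j hj
    rw [hsymm j, Fin.succAbove_of_castSucc_lt]
    · exact Fin.ext (by simp)
    · rw [Fin.lt_def]
      simpa using hj
  have hf1 : ∀ (i : Fin (n + 1)) (hi : (i : ℕ) < k),
      ((finSuccEquiv' (⟨k, hk1⟩ : Fin (n + 1))).trans (Equiv.optionEquivSumPUnit (Fin n))) i = Sum.inl (⟨(i : ℕ), lt_of_lt_of_le hi hk⟩ : Fin n) := by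
    intro i hi
    rw [Equiv.apply_eq_iff_eq_symm_apply, hf3 (⟨(i : ℕ), lt_of_lt_of_le hi hk⟩ : Fin n) (by exact hi)]
  have hf2 : ((finSuccEquiv' (⟨k, hk1⟩ : Fin (n + 1))).trans (Equiv.optionEquivSumPUnit (Fin n))) (⟨k, hk1⟩ : Fin (n + 1)) = Sum.inr () := by
    rw [Equiv.apply_eq_iff_eq_symm_apply, hf4]
  -- step 1 : matz with k+1 zero diagonal entries counts corner-zero matrices
  have hm1 : matz F (n + 1) (k + 1) (r + 1) = (univ.filter fun A : Matrix (Fin (n + 1)) (Fin (n + 1)) F => (A.rank = r + 1 ∧ ∀ i : Fin (n + 1), (i : ℕ) < k → A i i = 0) ∧ A (⟨k, hk1⟩ : Fin (n + 1)) (⟨k, hk1⟩ : Fin (n + 1)) = (0 : F)).card := by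
    rw [matz_eq]
    refine congrArg Finset.card (Finset.filter_congr fun A _ => ?_)
    constructor
    · rintro ⟨hr, hd⟩
      exact ⟨⟨hr, fun i hi => hd i (Nat.lt_succ_of_lt hi)⟩, hd (⟨k, hk1⟩ : Fin (n + 1)) (Nat.lt_succ_self k)⟩
    · rintro ⟨⟨hr, hd⟩, hc⟩
      refine ⟨hr, fun i hi => ?_⟩
      rcases Nat.lt_or_ge (i : ℕ) k with h | h
      · exact hd i h
      · have hip : i = (⟨k, hk1⟩ : Fin (n + 1)) := Fin.ext (show (i : ℕ) = k by omega)
        rw [hip]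
        exact hc
  -- step 2 : partition matz (n+1) k by the corner value
  have hm2 : matz F (n + 1) k (r + 1) = ∑ c : F, (univ.filter fun A : Matrix (Fin (n + 1)) (Fin (n + 1)) F => (A.rank = r + 1 ∧ ∀ i : Fin (n + 1), (i : ℕ) < k → A i i = 0) ∧ A (⟨k, hk1⟩ : Fin (n + 1)) (⟨k, hk1⟩ : Fin (n + 1)) = c).card := by
    rw [matz_eq]
    rw [Finset.card_eq_sum_card_fiberwise (f := fun A : Matrix (Fin (n + 1)) (Fin (n + 1)) F => A (⟨k, hk1⟩ : Fin (n + 1)) (⟨k, hk1⟩ : Fin (n + 1)))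
      (t := univ) (fun x _ => mem_univ _)]
    refine Finset.sum_congr rfl fun c _ => ?_
    rw [Finset.filter_filter]
  -- step 3 : scaling bijection between nonzero corner values
  have hdet : ∀ d0 : F, d0 ≠ 0 →
      IsUnit (Matrix.diagonal (fun i : Fin (n + 1) => if i = (⟨k, hk1⟩ : Fin (n + 1)) then d0 else 1)).det := by
    intro d0 h0
    rw [Matrix.det_diagonal, Finset.prod_ite_eq' univ (⟨k, hk1⟩ : Fin (n + 1)) (fun _ => d0), if_pos (mem_univ _)]
    exact isUnit_iff_ne_zero.mpr h0
  have hscale : ∀ c : F, c ≠ 0 → (univ.filter fun A : Matrix (Fin (n + 1)) (Fin (n + 1)) F => (A.rank = r + 1 ∧ ∀ i : Fin (n + 1), (i : ℕ) < k → A i i = 0) ∧ A (⟨k, hk1⟩ : Fin (n + 1)) (⟨k, hk1⟩ : Fin (n + 1)) = c).card = (univ.filter fun A : Matrix (Fin (n + 1)) (Fin (n + 1)) F => (A.rank = r + 1 ∧ ∀ i : Fin (n + 1), (i : ℕ) < k → A i i = 0) ∧ A (⟨k, hk1⟩ : Fin (n + 1)) (⟨k, hk1⟩ : Fin (n + 1))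 = (1 : F)).card := by
    intro c hc
    refine Finset.card_bij'
      (fun A _ => Matrix.diagonal (fun i : Fin (n + 1) => if i = (⟨k, hk1⟩ : Fin (n + 1)) then c⁻¹ else 1) * A)
      (fun A _ => Matrix.diagonal (fun i : Fin (n + 1) => if i = (⟨k, hk1⟩ : Fin (n + 1)) then c else 1) * A)
      ?_ ?_ ?_ ?_
    · intro A hA
      simp only [mem_filter, mem_univ, true_and] at hA ⊢
      obtain ⟨⟨hr, hd⟩, hcor⟩ := hA
      refine ⟨⟨?_, ?_⟩, ?_⟩
      · rw [Matrix.rank_mul_eq_right_of_isUnit_det _ _ (hdet c⁻¹ (inv_ne_zero hc))]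
        exact hr
      · intro i hi
        rw [Matrix.diagonal_mul, hd i hi, mul_zero]
      · rw [Matrix.diagonal_mul, if_pos rfl, hcor, inv_mul_cancel₀ hc]
    · intro A hA
      simp only [mem_filter, mem_univ, true_and] at hA ⊢
      obtain ⟨⟨hr, hd⟩, hcor⟩ := hA
      refine ⟨⟨?_, ?_⟩, ?_⟩
      · rw [Matrix.rank_mul_eq_right_of_isUnit_det _ _ (hdet c hc)]
        exact hr
      · intro i hi
        rw [Matrix.diagonal_mul, hd i hi, mul_zero]
      · rw [Matrix.diagonal_mul, if_pos rfl, hcor, mul_one]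
    · intro A _
      show Matrix.diagonal (fun i : Fin (n + 1) => if i = (⟨k, hk1⟩ : Fin (n + 1)) then c else 1) *
        (Matrix.diagonal (fun i : Fin (n + 1) => if i = (⟨k, hk1⟩ : Fin (n + 1)) then c⁻¹ else 1) * A) = A
      rw [← Matrix.mul_assoc, Matrix.diagonal_mul_diagonal]
      have hone : (fun i : Fin (n + 1) =>
          (if i = (⟨k, hk1⟩ : Fin (n + 1)) then c else 1) * (if i = (⟨k, hk1⟩ : Fin (n + 1)) then c⁻¹ else 1)) = fun _ => (1 : F) := by
        funext i
        by_cases h : i = (⟨k, hk1⟩ : Fin (n + 1)) <;> simp [h, mul_inv_cancel₀ hc]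
      rw [hone, Matrix.diagonal_one, Matrix.one_mul]
    · intro A _
      show Matrix.diagonal (fun i : Fin (n + 1) => if i = (⟨k, hk1⟩ : Fin (n + 1)) then c⁻¹ else 1) *
        (Matrix.diagonal (fun i : Fin (n + 1) => if i = (⟨k, hk1⟩ : Fin (n + 1)) then c else 1) * A) = A
      rw [← Matrix.mul_assoc, Matrix.diagonal_mul_diagonal]
      have hone : (fun i : Fin (n + 1) =>
          (if i = (⟨k, hk1⟩ : Fin (n + 1)) then c⁻¹ else 1) * (if i = (⟨k, hk1⟩ : Fin (n + 1)) then c else 1)) = fun _ => (1 : F) := by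
        funext i
        by_cases h : i = (⟨k, hk1⟩ : Fin (n + 1)) <;> simp [h, inv_mul_cancel₀ hc]
      rw [hone, Matrix.diagonal_one, Matrix.one_mul]
  have hsum : ∑ c : F, (univ.filter fun A : Matrix (Fin (n + 1)) (Fin (n + 1)) F => (A.rank = r + 1 ∧ ∀ i : Fin (n + 1), (i : ℕ) < k → A i i = 0) ∧ A (⟨k, hk1⟩ : Fin (n + 1)) (⟨k, hk1⟩ : Fin (n + 1)) = c).card = (univ.filter fun A : Matrix (Fin (n + 1)) (Fin (n + 1)) F => (A.rank = r + 1 ∧ ∀ i : Fin (n + 1), (i : ℕ) < k → A i i = 0) ∧ A (⟨k, hk1⟩ : Fin (n + 1)) (⟨k, hk1⟩ : Fin (n + 1)) = (0 : F)).card + (Fintype.card F - 1) * (univ.filter fun A : Matrix (Fin (n + 1)) (Fin (n + 1)) F => (A.rank = r + 1 ∧ ∀ i : Fin (n + 1), (i : ℕ) < k → A i i = 0) ∧ A (⟨k, hk1⟩ : Fin (n + 1)) (⟨k, hk1⟩ : Fin (n + 1)) = (1 : F)).card := by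
    rw [← Finset.add_sum_erase _ _ (mem_univ (0 : F))]
    congr 1
    rw [Finset.sum_congr rfl (fun c hc => hscale c (Finset.mem_erase.mp hc).1),
      Finset.sum_const, Finset.card_erase_of_mem (mem_univ _), Finset.card_univ, smul_eq_mul]
  -- step 4 : bijection with bordered matrices
  have hbij : ∀ c : F, (univ.filter fun A : Matrix (Fin (n + 1)) (Fin (n + 1)) F => (A.rank = r + 1 ∧ ∀ i : Fin (n + 1), (i : ℕ) < k → A i i = 0) ∧ A (⟨k, hk1⟩ : Fin (n + 1)) (⟨k, hk1⟩ : Fin (n + 1)) = c).card = (univ.filter fun t : Matrix (Fin n) (Fin n) F × ((Fin n → F) × (Fin n → F)) => ((Matz.brd t.1 t.2.1 t.2.2 c).rank = r + 1) ∧ ∀ i : Fin n, (i : ℕ) < k → t.1 i i = 0).card := by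
    intro c
    refine Finset.card_bij'
      (fun A _ => ((Matrix.of fun i j : Fin n =>
          A (((finSuccEquiv' (⟨k, hk1⟩ : Fin (n + 1))).trans (Equiv.optionEquivSumPUnit (Fin n))).symm (Sum.inl i)) (((finSuccEquiv' (⟨k, hk1⟩ : Fin (n + 1))).trans (Equiv.optionEquivSumPUnit (Fin n))).symm (Sum.inl j))),
        (fun i : Fin n => A (((finSuccEquiv' (⟨k, hk1⟩ : Fin (n + 1))).trans (Equiv.optionEquivSumPUnit (Fin n))).symm (Sum.inl i)) (((finSuccEquiv' (⟨k, hk1⟩ : Fin (n + 1))).trans (Equiv.optionEquivSumPUnit (Fin n))).symm (Sum.inr ()))),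
        (fun j : Fin n => A (((finSuccEquiv' (⟨k, hk1⟩ : Fin (n + 1))).trans (Equiv.optionEquivSumPUnit (Fin n))).symm (Sum.inr ())) (((finSuccEquiv' (⟨k, hk1⟩ : Fin (n + 1))).trans (Equiv.optionEquivSumPUnit (Fin n))).symm (Sum.inl j)))))
      (fun t _ => (Matz.brd t.1 t.2.1 t.2.2 c).submatrix ((finSuccEquiv' (⟨k, hk1⟩ : Fin (n + 1))).trans (Equiv.optionEquivSumPUnit (Fin n))) ((finSuccEquiv' (⟨k, hk1⟩ : Fin (n + 1))).trans (Equiv.optionEquivSumPUnit (Fin n))))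
      ?_ ?_ ?_ ?_
    · intro A hA
      simp only [mem_filter, mem_univ, true_and] at hA ⊢
      obtain ⟨⟨hr, hd⟩, hcor⟩ := hA
      have hbrdA : Matz.brd (Matrix.of fun i j : Fin n =>
            A (((finSuccEquiv' (⟨k, hk1⟩ : Fin (n + 1))).trans (Equiv.optionEquivSumPUnit (Fin n))).symm (Sum.inl i)) (((finSuccEquiv' (⟨k, hk1⟩ : Fin (n + 1))).trans (Equiv.optionEquivSumPUnit (Fin n))).symm (Sum.inl j)))
          (fun i : Fin n => A (((finSuccEquiv' (⟨k, hk1⟩ : Fin (n + 1))).trans (Equiv.optionEquivSumPUnit (Fin n))).symm (Sum.inl i)) (((finSuccEquiv' (⟨k, hk1⟩ : Fin (n + 1))).trans (Equiv.optionEquivSumPUnit (Fin n))).symm (Sum.inr ())))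
          (fun j : Fin n => A (((finSuccEquiv' (⟨k, hk1⟩ : Fin (n + 1))).trans (Equiv.optionEquivSumPUnit (Fin n))).symm (Sum.inr ())) (((finSuccEquiv' (⟨k, hk1⟩ : Fin (n + 1))).trans (Equiv.optionEquivSumPUnit (Fin n))).symm (Sum.inl j))) c
          = A.submatrix ((finSuccEquiv' (⟨k, hk1⟩ : Fin (n + 1))).trans (Equiv.optionEquivSumPUnit (Fin n))).symm ((finSuccEquiv' (⟨k, hk1⟩ : Fin (n + 1))).trans (Equiv.optionEquivSumPUnit (Fin n))).symm := by
        ext i j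
        rcases i with i | i <;> rcases j with j | j
        · rfl
        · rfl
        · rfl
        · show c = A (((finSuccEquiv' (⟨k, hk1⟩ : Fin (n + 1))).trans (Equiv.optionEquivSumPUnit (Fin n))).symm (Sum.inr i)) (((finSuccEquiv' (⟨k, hk1⟩ : Fin (n + 1))).trans (Equiv.optionEquivSumPUnit (Fin n))).symm (Sum.inr j))
          rcases i; rcases j
          rw [hf4]
          exact hcor.symm
      constructor
      · rw [hbrdA, Matrix.rank_submatrix A ((finSuccEquiv' (⟨k, hk1⟩ : Fin (n + 1))).trans (Equiv.optionEquivSumPUnit (Fin n))).symm ((finSuccEquiv' (⟨k, hk1⟩ : Fin (n + 1))).trans (Equiv.optionEquivSumPUnit (Fin n))).symm]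
        exact hr
      · intro i hi
        show A (((finSuccEquiv' (⟨k, hk1⟩ : Fin (n + 1))).trans (Equiv.optionEquivSumPUnit (Fin n))).symm (Sum.inl i)) (((finSuccEquiv' (⟨k, hk1⟩ : Fin (n + 1))).trans (Equiv.optionEquivSumPUnit (Fin n))).symm (Sum.inl i)) = 0
        rw [hf3 i hi]
        exact hd _ (by exact hi)
    · intro t ht
      simp only [mem_filter, mem_univ, true_and] at ht ⊢
      obtain ⟨hr, hd⟩ := ht
      refine ⟨⟨?_, ?_⟩, ?_⟩
      · rw [Matrix.rank_submatrix]
        exact hr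
      · intro i hi
        show Matz.brd t.1 t.2.1 t.2.2 c (((finSuccEquiv' (⟨k, hk1⟩ : Fin (n + 1))).trans (Equiv.optionEquivSumPUnit (Fin n))) i) (((finSuccEquiv' (⟨k, hk1⟩ : Fin (n + 1))).trans (Equiv.optionEquivSumPUnit (Fin n))) i) = 0
        rw [hf1 i hi]
        exact hd _ (by exact hi)
      · show Matz.brd t.1 t.2.1 t.2.2 c (((finSuccEquiv' (⟨k, hk1⟩ : Fin (n + 1))).trans (Equiv.optionEquivSumPUnit (Fin n))) (⟨k, hk1⟩ : Fin (n + 1))) (((finSuccEquiv' (⟨k, hk1⟩ : Fin (n + 1))).trans (Equiv.optionEquivSumPUnit (Fin n))) (⟨k, hk1⟩ : Fin (n + 1))) = c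
        rw [hf2]
        rfl
    · intro A hA
      simp only [mem_filter, mem_univ, true_and] at hA
      obtain ⟨⟨hr, hd⟩, hcor⟩ := hA
      have hbrdA : Matz.brd (Matrix.of fun i j : Fin n =>
            A (((finSuccEquiv' (⟨k, hk1⟩ : Fin (n + 1))).trans (Equiv.optionEquivSumPUnit (Fin n))).symm (Sum.inl i)) (((finSuccEquiv' (⟨k, hk1⟩ : Fin (n + 1))).trans (Equiv.optionEquivSumPUnit (Fin n))).symm (Sum.inl j)))
          (fun i : Fin n => A (((finSuccEquiv' (⟨k, hk1⟩ : Fin (n + 1))).trans (Equiv.optionEquivSumPUnit (Fin n))).symm (Sum.inl i)) (((finSuccEquiv' (⟨k, hk1⟩ : Fin (n + 1))).trans (Equiv.optionEquivSumPUnit (Fin n))).symm (Sum.inr ())))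
          (fun j : Fin n => A (((finSuccEquiv' (⟨k, hk1⟩ : Fin (n + 1))).trans (Equiv.optionEquivSumPUnit (Fin n))).symm (Sum.inr ())) (((finSuccEquiv' (⟨k, hk1⟩ : Fin (n + 1))).trans (Equiv.optionEquivSumPUnit (Fin n))).symm (Sum.inl j))) c
          = A.submatrix ((finSuccEquiv' (⟨k, hk1⟩ : Fin (n + 1))).trans (Equiv.optionEquivSumPUnit (Fin n))).symm ((finSuccEquiv' (⟨k, hk1⟩ : Fin (n + 1))).trans (Equiv.optionEquivSumPUnit (Fin n))).symm := by
        ext i j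
        rcases i with i | i <;> rcases j with j | j
        · rfl
        · rfl
        · rfl
        · show c = A (((finSuccEquiv' (⟨k, hk1⟩ : Fin (n + 1))).trans (Equiv.optionEquivSumPUnit (Fin n))).symm (Sum.inr i)) (((finSuccEquiv' (⟨k, hk1⟩ : Fin (n + 1))).trans (Equiv.optionEquivSumPUnit (Fin n))).symm (Sum.inr j))
          rcases i; rcases j
          rw [hf4]
          exact hcor.symm
      show (Matz.brd _ _ _ c).submatrix ((finSuccEquiv' (⟨k, hk1⟩ : Fin (n + 1))).trans (Equiv.optionEquivSumPUnit (Fin n))) ((finSuccEquiv' (⟨k, hk1⟩ : Fin (n + 1))).trans (Equiv.optionEquivSumPUnit (Fin n))) = A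
      rw [hbrdA]
      ext i j
      simp [Matrix.submatrix_apply]
    · intro t _
      refine Prod.ext ?_ (Prod.ext ?_ ?_)
      · show (Matrix.of fun i j : Fin n => ((Matz.brd t.1 t.2.1 t.2.2 c).submatrix ((finSuccEquiv' (⟨k, hk1⟩ : Fin (n + 1))).trans (Equiv.optionEquivSumPUnit (Fin n))) ((finSuccEquiv' (⟨k, hk1⟩ : Fin (n + 1))).trans (Equiv.optionEquivSumPUnit (Fin n))))
            (((finSuccEquiv' (⟨k, hk1⟩ : Fin (n + 1))).trans (Equiv.optionEquivSumPUnit (Fin n))).symm (Sum.inl i)) (((finSuccEquiv' (⟨k, hk1⟩ : Fin (n + 1))).trans (Equiv.optionEquivSumPUnit (Fin n))).symm (Sum.inl j))) = t.1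
        ext i j
        simp [Matrix.submatrix_apply]
      · show (fun i : Fin n => ((Matz.brd t.1 t.2.1 t.2.2 c).submatrix ((finSuccEquiv' (⟨k, hk1⟩ : Fin (n + 1))).trans (Equiv.optionEquivSumPUnit (Fin n))) ((finSuccEquiv' (⟨k, hk1⟩ : Fin (n + 1))).trans (Equiv.optionEquivSumPUnit (Fin n))))
            (((finSuccEquiv' (⟨k, hk1⟩ : Fin (n + 1))).trans (Equiv.optionEquivSumPUnit (Fin n))).symm (Sum.inl i)) (((finSuccEquiv' (⟨k, hk1⟩ : Fin (n + 1))).trans (Equiv.optionEquivSumPUnit (Fin n))).symm (Sum.inr ()))) = t.2.1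
        funext i
        simp [Matrix.submatrix_apply]
      · show (fun j : Fin n => ((Matz.brd t.1 t.2.1 t.2.2 c).submatrix ((finSuccEquiv' (⟨k, hk1⟩ : Fin (n + 1))).trans (Equiv.optionEquivSumPUnit (Fin n))) ((finSuccEquiv' (⟨k, hk1⟩ : Fin (n + 1))).trans (Equiv.optionEquivSumPUnit (Fin n))))
            (((finSuccEquiv' (⟨k, hk1⟩ : Fin (n + 1))).trans (Equiv.optionEquivSumPUnit (Fin n))).symm (Sum.inr ())) (((finSuccEquiv' (⟨k, hk1⟩ : Fin (n + 1))).trans (Equiv.optionEquivSumPUnit (Fin n))).symm (Sum.inl j))) = t.2.2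
        funext j
        simp [Matrix.submatrix_apply]
  -- step 5 : group by the inner matrix
  have htriple : ∀ c : F, (univ.filter fun t : Matrix (Fin n) (Fin n) F × ((Fin n → F) × (Fin n → F)) => ((Matz.brd t.1 t.2.1 t.2.2 c).rank = r + 1) ∧ ∀ i : Fin n, (i : ℕ) < k → t.1 i i = 0).card = ∑ B ∈ (univ.filter fun B : Matrix (Fin n) (Fin n) F => ∀ i : Fin n, (i : ℕ) < k → B i i = 0), Matz.fib r B c := by
    intro c
    rw [Matz.card_pair (fun B : Matrix (Fin n) (Fin n) F =>
      fun uv : (Fin n → F) × (Fin n → F) => ((Matz.brd B uv.1 uv.2 c).rank = r + 1) ∧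
        ∀ i : Fin n, (i : ℕ) < k → B i i = 0)]
    rw [Finset.sum_filter]
    refine Finset.sum_congr rfl fun B _ => ?_
    rw [Finset.filter_congr (q := fun uv : (Fin n → F) × (Fin n → F) =>
      (∀ i : Fin n, (i : ℕ) < k → B i i = 0) ∧ ((Matz.brd B uv.1 uv.2 c).rank = r + 1))
      (fun uv _ => and_comm)]
    exact Matz.card_filter_const_and _ _
  -- step 6 : summed pointwise identity
  have he0 : ∑ B ∈ (univ.filter fun B : Matrix (Fin n) (Fin n) F => ∀ i : Fin n, (i : ℕ) < k → B i i = 0), (if B.rank = r then Fintype.card F ^ r else 0)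
      = Fintype.card F ^ r * matz F n k r := by
    rw [← Finset.sum_filter, Finset.sum_const, Finset.filter_filter, smul_eq_mul, mul_comm]
    congr 1
    rw [matz_eq]
    exact congrArg Finset.card (Finset.filter_congr fun B _ => and_comm)
  have he1 : ∑ B ∈ (univ.filter fun B : Matrix (Fin n) (Fin n) F => ∀ i : Fin n, (i : ℕ) < k → B i i = 0), (if B.rank = r + 1 then Fintype.card F ^ (r + 1) else 0)
      = Fintype.card F ^ (r + 1) * matz F n k (r + 1) := by
    rw [← Finset.sum_filter, Finset.sum_const, Finset.filter_filter, smul_eq_mul, mul_comm]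
    congr 1
    rw [matz_eq]
    exact congrArg Finset.card (Finset.filter_congr fun B _ => and_comm)
  have hsummed : (∑ B ∈ (univ.filter fun B : Matrix (Fin n) (Fin n) F => ∀ i : Fin n, (i : ℕ) < k → B i i = 0), Matz.fib r B 0) + Fintype.card F ^ r * matz F n k r
      = (∑ B ∈ (univ.filter fun B : Matrix (Fin n) (Fin n) F => ∀ i : Fin n, (i : ℕ) < k → B i i = 0), Matz.fib r B 1) + Fintype.card F ^ (r + 1) * matz F n k (r + 1) := by
    have h := Finset.sum_congr rfl (fun B (_ : B ∈ (univ.filter fun B : Matrix (Fin n) (Fin n) F => ∀ i : Fin n, (i : ℕ) < k → B i i = 0)) => Matz.pw r B)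
    rw [Finset.sum_add_distrib, Finset.sum_add_distrib] at h
    rw [← he0, ← he1]
    exact h
  -- final assembly
  have H2 : matz F (n + 1) k (r + 1)
      = (univ.filter fun A : Matrix (Fin (n + 1)) (Fin (n + 1)) F => (A.rank = r + 1 ∧ ∀ i : Fin (n + 1), (i : ℕ) < k → A i i = 0) ∧ A (⟨k, hk1⟩ : Fin (n + 1)) (⟨k, hk1⟩ : Fin (n + 1)) = (0 : F)).card + (Fintype.card F - 1) * (univ.filter fun A : Matrix (Fin (n + 1)) (Fin (n + 1)) F => (A.rank = r + 1 ∧ ∀ i : Fin (n + 1), (i : ℕ) < k → A i i = 0) ∧ A (⟨k, hk1⟩ : Fin (n + 1)) (⟨k, hk1⟩ : Fin (n + 1)) = (1 : F)).card := hm2.trans hsum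
  have H3 : (univ.filter fun A : Matrix (Fin (n + 1)) (Fin (n + 1)) F => (A.rank = r + 1 ∧ ∀ i : Fin (n + 1), (i : ℕ) < k → A i i = 0) ∧ A (⟨k, hk1⟩ : Fin (n + 1)) (⟨k, hk1⟩ : Fin (n + 1)) = (0 : F)).card + Fintype.card F ^ r * matz F n k r
      = (univ.filter fun A : Matrix (Fin (n + 1)) (Fin (n + 1)) F => (A.rank = r + 1 ∧ ∀ i : Fin (n + 1), (i : ℕ) < k → A i i = 0) ∧ A (⟨k, hk1⟩ : Fin (n + 1)) (⟨k, hk1⟩ : Fin (n + 1)) = (1 : F)).card + Fintype.card F ^ (r + 1) * matz F n k (r + 1) := by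
    rw [hbij (0 : F), hbij (1 : F), htriple (0 : F), htriple (1 : F)]
    exact hsummed
  have hq1 : 1 ≤ Fintype.card F := Fintype.card_pos
  rw [hq] at H2 H3 hq1
  have Z1 := congrArg (Nat.cast : ℕ → ℤ) hm1
  have Z2 := congrArg (Nat.cast : ℕ → ℤ) H2
  have Z3 := congrArg (Nat.cast : ℕ → ℤ) H3
  push_cast [Nat.cast_sub hq1] at Z1 Z2 Z3
  linear_combination (q : ℤ) * Z1 - Z2 + ((q : ℤ) - 1) * Z3
end

section
/- Let q be odd, n ≥ 1, and 0 ≤ r ≤ n. For any two nonzero vectors v, w ∈ F_q^n whose first coordinates are zero, the number of n×n skew-symmetric matrices over F_q of rank r whose first row is v equals the number of n×n skew-symmetric matrices over F_q of rank r whose first row is w. -/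
/-!
Congruence `A ↦ P * A * Pᵀ` by an invertible `P` preserves skew-symmetry and rank, and when row `0`
of `P` is the unit vector `e₀` it turns the first row `v` of `A` into `P *ᵥ v`. So it suffices to
find such a `P` with `P *ᵥ v = w`: take `P = 1 + (w - v) uᵀ` with `u ⬝ᵥ v = 1` and `u ⬝ᵥ w ≠ 0`.
Its row `0` is `e₀` because `v 0 = w 0`, and by the matrix determinant lemma `det P = u ⬝ᵥ w`.
-/

open Matrix

theorem exists_dotProduct_eq_one_and_ne_zero {ι K : Type*} [Fintype ι] [DecidableEq ι] [Field K]
    {v w : ι → K} (hv : v ≠ 0) (hw : w ≠ 0) : ∃ u : ι → K, u ⬝ᵥ v = 1 ∧ u ⬝ᵥ w ≠ 0 := by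
  have exists_dotProduct_ne_zero : ∀ x : ι → K, x ≠ 0 → ∃ g : ι → K, g ⬝ᵥ x ≠ 0 := fun x hx => by
    obtain ⟨i, hi⟩ := Function.ne_iff.mp hx
    exact ⟨Pi.single i 1, by simpa using hi⟩
  obtain ⟨f, hf⟩ := exists_dotProduct_ne_zero v hv
  obtain ⟨g, hg⟩ := exists_dotProduct_ne_zero w hw
  by_cases hfw : f ⬝ᵥ w = 0
  · by_cases hgv : g ⬝ᵥ v = 0
    · exact ⟨(f ⬝ᵥ v)⁻¹ • f + g, by simp [add_dotProduct, hf, hgv],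
        by simp [add_dotProduct, hfw, hg]⟩
    · exact ⟨(g ⬝ᵥ v)⁻¹ • g, by simp [hgv], by simp [hgv, hg]⟩
  · exact ⟨(f ⬝ᵥ v)⁻¹ • f, by simp [hf], by simp [hf, hfw]⟩

namespace Matrix

variable {ι R : Type*} [CommRing R]

theorem one_add_vecMulVec_row [DecidableEq ι] {x u : ι → R} {i : ι} (h : x i = 0) :
    (1 + vecMulVec x u) i = Pi.single i 1 := by
  ext j
  simp [vecMulVec_apply, h, one_apply, Pi.single_apply, eq_comm]

variable [Fintype ι]

theorem mul_transpose_row (X P : Matrix ι ι R) (i : ι) : (X * Pᵀ) i = P *ᵥ X i := by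
  ext j
  simp [mul_apply, mulVec, dotProduct, mul_comm]

variable [DecidableEq ι]

theorem det_one_add_vecMulVec (x u : ι → R) : (1 + vecMulVec x u).det = 1 + u ⬝ᵥ x := by
  rw [vecMulVec_eq Unit, det_one_add_replicateCol_mul_replicateRow]

theorem one_add_vecMulVec_mulVec {x u v : ι → R} (h : u ⬝ᵥ v = 1) :
    (1 + vecMulVec x u) *ᵥ v = v + x := by
  rw [add_mulVec, one_mulVec, vecMulVec_mulVec, h]
  simp

theorem mul_row_of_row_eq_single {P : Matrix ι ι R} {i : ι} (hP : P i = Pi.single i 1)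
    (X : Matrix ι ι R) : (P * X) i = X i := by
  rw [mul_apply_eq_vecMul, hP, single_one_vecMul]
  rfl

theorem nonsing_inv_row_of_row_eq_single {P : Matrix ι ι R} (hP : IsUnit P.det) {i : ι}
    (hPi : P i = Pi.single i 1) : P⁻¹ i = Pi.single i 1 := by
  have h := mul_row_of_row_eq_single hPi P⁻¹
  rw [mul_nonsing_inv P hP] at h
  ext j
  rw [← h]
  simp [one_apply, Pi.single_apply, eq_comm]

theorem conj_mem_skew_rank_row {P : Matrix ι ι R} (hP : IsUnit P.det) {i : ι}
    (hPi : P i = Pi.single i 1) {r : ℕ} {v : ι → R} {A : Matrix ι ι R}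
    (hA : Aᵀ = -A ∧ A.rank = r ∧ A i = v) :
    (P * A * Pᵀ)ᵀ = -(P * A * Pᵀ) ∧ (P * A * Pᵀ).rank = r ∧ (P * A * Pᵀ) i = P *ᵥ v := by
  obtain ⟨hskew, hrank, hrow⟩ := hA
  refine ⟨?_, ?_, ?_⟩
  · simp [transpose_mul, hskew, Matrix.mul_assoc]
  · rw [rank_mul_eq_left_of_isUnit_det _ _ (by rwa [det_transpose]),
      rank_mul_eq_right_of_isUnit_det _ _ hP, hrank]
  · rw [mul_transpose_row, mul_row_of_row_eq_single hPi, hrow]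

noncomputable def skewRankRowCongr {P : Matrix ι ι R} (hP : IsUnit P.det) {i : ι}
    (hPi : P i = Pi.single i 1) (r : ℕ) (v : ι → R) :
    {A : Matrix ι ι R // Aᵀ = -A ∧ A.rank = r ∧ A i = v} ≃
      {A : Matrix ι ι R // Aᵀ = -A ∧ A.rank = r ∧ A i = P *ᵥ v} where
  toFun A := ⟨P * A * Pᵀ, conj_mem_skew_rank_row hP hPi A.2⟩
  invFun A := ⟨P⁻¹ * A * P⁻¹ᵀ, by
    simpa [mulVec_mulVec, nonsing_inv_mul P hP] using
      conj_mem_skew_rank_row (isUnit_nonsing_inv_det P hP)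
        (nonsing_inv_row_of_row_eq_single hP hPi) A.2⟩
  left_inv A := Subtype.ext <| by
    simp [Matrix.mul_assoc, ← transpose_mul, nonsing_inv_mul_cancel_left _ _ hP,
      nonsing_inv_mul P hP]
  right_inv A := Subtype.ext <| by
    simp [Matrix.mul_assoc, ← transpose_mul, mul_nonsing_inv_cancel_left _ _ hP,
      mul_nonsing_inv P hP]

end Matrix

theorem stmt9_general (F : Type) [Field F] (n r : ℕ) (hn : 0 < n)
    (v w : Fin n → F) (hv0 : v ⟨0, hn⟩ = 0) (hw0 : w ⟨0, hn⟩ = 0)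
    (hv : v ≠ 0) (hw : w ≠ 0) :
    Nat.card {A : Matrix (Fin n) (Fin n) F //
        Aᵀ = -A ∧ A.rank = r ∧ A ⟨0, hn⟩ = v} =
      Nat.card {A : Matrix (Fin n) (Fin n) F //
        Aᵀ = -A ∧ A.rank = r ∧ A ⟨0, hn⟩ = w} := by
  obtain ⟨u, huv, huw⟩ := exists_dotProduct_eq_one_and_ne_zero hv hw
  have hdet : IsUnit (1 + vecMulVec (w - v) u).det := by
    rw [det_one_add_vecMulVec, dotProduct_sub, huv, add_sub_cancel]
    exact huw.isUnit
  have hrow : (1 + vecMulVec (w - v) u) ⟨0, hn⟩ = Pi.single ⟨0, hn⟩ 1 :=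
    one_add_vecMulVec_row (by simp [hv0, hw0])
  have hPv : (1 + vecMulVec (w - v) u) *ᵥ v = w := by
    rw [one_add_vecMulVec_mulVec huv, add_sub_cancel]
  rw [← hPv]
  exact Nat.card_congr (skewRankRowCongr hdet hrow r v)

theorem stmt9 (F : Type) [Field F] [Fintype F] (q : ℕ) (hq : Fintype.card F = q)
    (hodd : Odd q) (n r : ℕ) (hn : 0 < n) (hr : r ≤ n)
    (v w : Fin n → F) (hv0 : v ⟨0, hn⟩ = 0) (hw0 : w ⟨0, hn⟩ = 0)
    (hv : v ≠ 0) (hw : w ≠ 0) :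
    Nat.card {A : Matrix (Fin n) (Fin n) F //
        Aᵀ = -A ∧ A.rank = r ∧ A ⟨0, hn⟩ = v} =
      Nat.card {A : Matrix (Fin n) (Fin n) F //
        Aᵀ = -A ∧ A.rank = r ∧ A ⟨0, hn⟩ = w} :=
  stmt9_general F n r hn v w hv0 hw0 hv hw
end

section
/- Let q be odd and n even. Then sk(n) = sym(n−1): the number of invertible n×n skew-symmetric matrices over F_q equals the number of invertible (n−1)×(n−1) symmetric matrices over F_q. -/
/-!
Sort the invertible `ε`-symmetric matrices (`ε = ±1`) indexed by `Fin 1 ⊕ ν` by their first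
row `(a, b)`. Congruence `A ↦ P A Pᵀ` by `P = [[1, 0], [c, G]]` with `G` invertible moves first
rows by `(a, b) ↦ (a, a c + G b)`, so every fibre is equinumerous to one of three normal forms:
`(0, 0)` (empty), `(a, 0)` with `a ≠ 0` (block diagonal, hence counted by size `ν`, and empty
for skew matrices in odd characteristic), or `(0, e₁)`, where the matrix is a hyperbolic `2 × 2`
block glued to an arbitrary invertible `ε`-symmetric matrix of size `|ν| - 1`. This gives
`sk(n+2) = (q^(n+1) - 1) q^n sk(n)` and
`sym(n+2) = (q^(n+1) - 1) q^(n+1) sym(n) + (q - 1) q^(n+1) sym(n+1)`, and induction on `m` yields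
`sk(2m+2) = sym(2m+1)` together with `sym(2m+2) = q^(2m+2) sym(2m+1)`.
-/

open Matrix

namespace EpsSymm

theorem card_inter_preimage_singleton_of_semiconj {α β : Type*} {s : Set α} {f : α → β}
    (e : α ≃ α) {σ : β → β} (hσ : σ.Injective) (hs : ∀ a, e a ∈ s ↔ a ∈ s)
    (hf : Function.Semiconj f e σ) (b : β) :
    Nat.card ↥(s ∩ f ⁻¹' {b}) = Nat.card ↥(s ∩ f ⁻¹' {σ b}) :=
  Nat.card_congr <| e.subtypeEquiv fun a => by simp [hs, hf a, hσ.eq_iff]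

theorem card_eq_sum_card_inter_preimage_singleton {α β : Type*} [Finite α] [Fintype β]
    (s : Set α) (f : α → β) : Nat.card s = ∑ b, Nat.card ↥(s ∩ f ⁻¹' {b}) := by
  rw [← Nat.card_sigma]
  exact Nat.card_congr <| (Equiv.sigmaFiberEquiv (f ∘ Subtype.val)).symm.trans <|
    Equiv.sigmaCongrRight fun b => Equiv.subtypeSubtypeEquivSubtypeInter (· ∈ s) (f · = b)

theorem sum_eq_add_card_sub_one_mul {β : Type*} [Fintype β] (f : β → ℕ) (z : β) {y : ℕ}
    (h : ∀ b ≠ z, f b = y) : ∑ b, f b = f z + (Fintype.card β - 1) * y := by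
  classical
  rw [Fintype.sum_eq_add_sum_compl z, Finset.sum_congr rfl fun b hb => h b (by simpa using hb),
    Finset.sum_const, Finset.card_compl, Finset.card_singleton, smul_eq_mul]

variable {F : Type*} [Field F]

theorem exists_isUnit_mulVec_eq {ν : Type*} [Fintype ν] [DecidableEq ν] {b b' : ν → F}
    (hb : b ≠ 0) (hb' : b' ≠ 0) : ∃ G : Matrix ν ν F, IsUnit G ∧ G *ᵥ b = b' := by
  obtain ⟨g, hg⟩ := Submodule.exists_linearEquiv_restrict_eq
    ((LinearEquiv.toSpanNonzeroSingleton F _ b hb).symm.trans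
      (LinearEquiv.toSpanNonzeroSingleton F _ b' hb'))
  have hG (v : ν → F) : LinearMap.toMatrix' (g : (ν → F) →ₗ[F] ν → F) *ᵥ v = g v :=
    LinearMap.toMatrix'_mulVec _ v
  refine ⟨LinearMap.toMatrix' g, mulVec_injective_iff_isUnit.mp fun v w h => ?_, ?_⟩
  · exact g.injective (by simpa only [hG] using h)
  · have hgb := hg ⟨b, Submodule.mem_span_singleton_self b⟩
    have h1 : (LinearEquiv.toSpanNonzeroSingleton F _ b hb).symm
        ⟨b, Submodule.mem_span_singleton_self b⟩ = 1 := by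
      rw [LinearEquiv.symm_apply_eq, LinearEquiv.toSpanNonzeroSingleton_one]
    simp only [LinearEquiv.trans_apply, h1, LinearEquiv.toSpanNonzeroSingleton_one] at hgb
    rw [hG, ← hgb]

section Congruence

variable {ι κ : Type*} [Fintype ι] [DecidableEq ι] [Fintype κ] [DecidableEq κ]

def congruenceEquiv (P : (Matrix ι ι F)ˣ) : Matrix ι ι F ≃ Matrix ι ι F where
  toFun A := P * A * (P : Matrix ι ι F)ᵀ
  invFun A := ↑P⁻¹ * A * (↑P⁻¹ : Matrix ι ι F)ᵀ
  left_inv A := by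
    simp only [Matrix.mul_assoc, ← transpose_mul, Units.inv_mul_cancel_left, Units.inv_mul,
      transpose_one, Matrix.mul_one]
  right_inv A := by
    simp only [Matrix.mul_assoc, ← transpose_mul, Units.mul_inv_cancel_left, Units.mul_inv,
      transpose_one, Matrix.mul_one]

def epsSymmUnits (ε : F) (ι : Type*) [Fintype ι] [DecidableEq ι] : Set (Matrix ι ι F) :=
  {A | Aᵀ = ε • A ∧ IsUnit A}

theorem congruenceEquiv_mem_epsSymmUnits_iff (ε : F) (P : (Matrix ι ι F)ˣ)
    (A : Matrix ι ι F) :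
    congruenceEquiv P A ∈ epsSymmUnits ε ι ↔ A ∈ epsSymmUnits ε ι := by
  have hT : (congruenceEquiv P A)ᵀ = congruenceEquiv P Aᵀ := by
    simp [congruenceEquiv, transpose_mul, Matrix.mul_assoc]
  have hS : ε • congruenceEquiv P A = congruenceEquiv P (ε • A) := by
    simp [congruenceEquiv]
  have hP : IsUnit (P : Matrix ι ι F).det := P.isUnit.map (detMonoidHom : Matrix ι ι F →* F)
  have hU : IsUnit (congruenceEquiv P A) ↔ IsUnit A := by
    simp only [isUnit_iff_isUnit_det, congruenceEquiv, Equiv.coe_fn_mk, det_transpose,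
      IsUnit.mul_iff]
    tauto
  exact and_congr (by rw [hT, hS, (congruenceEquiv P).apply_eq_iff_eq]) hU

theorem card_epsSymmUnits_congr (ε : F) (e : ι ≃ κ) :
    Nat.card (epsSymmUnits ε ι) = Nat.card (epsSymmUnits ε κ) := by
  refine Nat.card_congr <| (reindex e e).subtypeEquiv fun A => and_congr ?_ ?_
  · rw [transpose_reindex, ← (reindex e e).apply_eq_iff_eq]
    rfl
  · simp [isUnit_iff_isUnit_det]

theorem card_epsSymmUnits_fin_zero (ε : F) : Nat.card (epsSymmUnits ε (Fin 0)) = 1 := by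
  rw [Set.eq_univ_of_forall (s := epsSymmUnits ε (Fin 0)) fun A =>
    ⟨Subsingleton.elim _ _, isUnit_of_subsingleton A⟩, Nat.card_univ]
  exact Nat.card_eq_one_iff_unique.mpr ⟨inferInstance, ⟨0⟩⟩

theorem card_epsSymmUnits_fin_succ (ε : F) (n : ℕ) :
    Nat.card (epsSymmUnits ε (Fin (n + 1))) = Nat.card (epsSymmUnits ε (Fin 1 ⊕ Fin n)) :=
  card_epsSymmUnits_congr ε ((finCongr (Nat.add_comm n 1)).trans finSumFinEquiv.symm)

end Congruence

section FirstRow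

variable {ν : Type*}

def firstRow (A : Matrix (Fin 1 ⊕ ν) (Fin 1 ⊕ ν) F) : F × (ν → F) :=
  (A (.inl 0) (.inl 0), fun j => A (.inl 0) (.inr j))

def lowerBlock (c : ν → F) (G : Matrix ν ν F) : Matrix (Fin 1 ⊕ ν) (Fin 1 ⊕ ν) F :=
  fromBlocks 1 0 (replicateCol (Fin 1) c) G

variable [Fintype ν]

theorem firstRow_lowerBlock_mul_mul_transpose (c : ν → F) (G : Matrix ν ν F)
    (A : Matrix (Fin 1 ⊕ ν) (Fin 1 ⊕ ν) F) :
    firstRow (lowerBlock c G * A * (lowerBlock c G)ᵀ) =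
      ((firstRow A).1, (firstRow A).1 • c + G *ᵥ (firstRow A).2) := by
  ext j
  · simp [firstRow, lowerBlock, mul_apply, Fintype.sum_sum_type]
  · simp [firstRow, lowerBlock, mul_apply, Fintype.sum_sum_type, mulVec, dotProduct, mul_comm]

variable [DecidableEq ν]

theorem isUnit_lowerBlock (c : ν → F) {G : Matrix ν ν F} (hG : IsUnit G) :
    IsUnit (lowerBlock c G) := by
  rw [isUnit_iff_isUnit_det, lowerBlock, det_fromBlocks_zero₁₂, det_one, one_mul,
    ← isUnit_iff_isUnit_det]
  exact hG

def rowFiber (ε : F) (p : F × (ν → F)) : Set (Matrix (Fin 1 ⊕ ν) (Fin 1 ⊕ ν) F) :=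
  epsSymmUnits ε (Fin 1 ⊕ ν) ∩ firstRow ⁻¹' {p}

theorem card_rowFiber_eq_of_lowerBlock (ε : F) (c : ν → F) {G : Matrix ν ν F} (hG : IsUnit G)
    (a : F) (b : ν → F) :
    Nat.card (rowFiber ε (a, b)) = Nat.card (rowFiber ε (a, a • c + G *ᵥ b)) := by
  refine card_inter_preimage_singleton_of_semiconj
    (congruenceEquiv (isUnit_lowerBlock c hG).unit) (σ := fun p => (p.1, p.1 • c + G *ᵥ p.2))
    ?_ (congruenceEquiv_mem_epsSymmUnits_iff ε _)
    (fun A => firstRow_lowerBlock_mul_mul_transpose c G A) (a, b)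
  rintro ⟨a, b⟩ ⟨a', b'⟩ h
  simp only [Prod.mk.injEq] at h
  obtain ⟨rfl, h⟩ := h
  simpa using mulVec_injective_iff_isUnit.mpr hG (add_left_cancel h)

theorem rowFiber_zero_eq_empty (ε : F) : rowFiber ε ((0, 0) : F × (ν → F)) = ∅ := by
  refine Set.eq_empty_of_forall_notMem fun A ⟨⟨_, hA⟩, hrow⟩ => ?_
  simp only [Set.mem_preimage, Set.mem_singleton_iff, firstRow, Prod.mk.injEq, funext_iff] at hrow
  have hzero : ∀ j, A (.inl 0) j = 0 := by
    rintro (j | j)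
    · simpa [Subsingleton.elim j 0] using hrow.1
    · exact hrow.2 j
  rw [isUnit_iff_isUnit_det, det_eq_zero_of_row_eq_zero _ hzero] at hA
  exact not_isUnit_zero hA

theorem rowFiber_eq_empty_of_mul_ne {ε a : F} (h : ε * a ≠ a) (b : ν → F) :
    rowFiber ε (a, b) = ∅ := by
  refine Set.eq_empty_of_forall_notMem fun A ⟨⟨hA, _⟩, hrow⟩ => h ?_
  simp only [Set.mem_preimage, Set.mem_singleton_iff, firstRow, Prod.mk.injEq] at hrow
  simpa [hrow.1] using (congrFun (congrFun hA (.inl 0)) (.inl 0)).symm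

theorem eq_fromBlocks_of_mem_rowFiber {ε a : F} {A : Matrix (Fin 1 ⊕ ν) (Fin 1 ⊕ ν) F}
    (hA : A ∈ rowFiber ε (a, 0)) : A = fromBlocks (of fun _ _ => a) 0 0 A.toBlocks₂₂ := by
  obtain ⟨⟨hsymm, -⟩, hrow⟩ := hA
  simp only [Set.mem_preimage, Set.mem_singleton_iff, firstRow, Prod.mk.injEq, funext_iff] at hrow
  ext (i | i) (j | j)
  · simpa [Subsingleton.elim i 0, Subsingleton.elim j 0] using hrow.1
  · simpa [Subsingleton.elim i 0] using hrow.2 j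
  · simpa [Subsingleton.elim j 0, hrow.2 i] using congrFun (congrFun hsymm (.inl 0)) (.inr i)
  · rfl

theorem fromBlocks_mem_rowFiber_iff {ε a : F} (ha : a ≠ 0) (hε : ε * a = a)
    (D : Matrix ν ν F) :
    fromBlocks (of fun _ _ => a) 0 0 D ∈ rowFiber ε (a, 0) ↔ D ∈ epsSymmUnits ε ν := by
  have hrow : firstRow (fromBlocks (of fun _ _ => a) 0 0 D) = (a, 0) := by
    ext <;> simp [firstRow]
  have hsymm : (of fun _ _ => a : Matrix (Fin 1) (Fin 1) F)ᵀ = ε • of fun _ _ => a := by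
    ext; simp [hε]
  simp only [rowFiber, epsSymmUnits, Set.mem_inter_iff, Set.mem_ofPred_eq, Set.mem_preimage,
    Set.mem_singleton_iff, hrow, and_true, fromBlocks_transpose, fromBlocks_smul,
    fromBlocks_inj, hsymm, transpose_zero, smul_zero, true_and, isUnit_iff_isUnit_det,
    det_fromBlocks_zero₁₂, det_unique, of_apply, IsUnit.mul_iff, isUnit_iff_ne_zero.mpr ha]

theorem card_rowFiber_of_ne_zero {ε a : F} (ha : a ≠ 0) (hε : ε * a = a) (b : ν → F) :
    Nat.card (rowFiber ε (a, b)) = Nat.card (epsSymmUnits ε ν) := by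
  have hb : a • a⁻¹ • b + (1 : Matrix ν ν F) *ᵥ 0 = b := by simp [smul_smul, ha]
  rw [← hb, ← card_rowFiber_eq_of_lowerBlock ε _ isUnit_one]
  refine Nat.card_congr
    { toFun A := ⟨A.1.toBlocks₂₂, (fromBlocks_mem_rowFiber_iff ha hε _).1 ?_⟩
      invFun D := ⟨_, (fromBlocks_mem_rowFiber_iff ha hε _).2 D.2⟩
      left_inv A := Subtype.ext (eq_fromBlocks_of_mem_rowFiber A.2).symm
      right_inv D := rfl }
  rw [← eq_fromBlocks_of_mem_rowFiber A.2]
  exact A.2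

end FirstRow

section Hyperbolic

variable {μ : Type*}

def hyperbolicBlock (ε x : F) : Matrix (Fin 1 ⊕ Fin 1) (Fin 1 ⊕ Fin 1) F :=
  fromBlocks 0 1 (ε • 1) (x • 1)

def hyperbolicBlockInv (ε x : F) : Matrix (Fin 1 ⊕ Fin 1) (Fin 1 ⊕ Fin 1) F :=
  fromBlocks (-(ε * x) • 1) (ε • 1) 1 0

theorem hyperbolicBlockInv_mul {ε : F} (hε : ε * ε = 1) (x : F) :
    hyperbolicBlockInv ε x * hyperbolicBlock ε x = 1 := by
  simp [hyperbolicBlockInv, hyperbolicBlock, fromBlocks_multiply, smul_smul, hε, mul_comm x ε,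
    ← fromBlocks_one]

/-- The block matrix `[[0, 1, 0], [ε, x, c], [0, ε c, D]]`. -/
def extendHyperbolic (ε x : F) (c : μ → F) (D : Matrix μ μ F) :
    Matrix (Fin 1 ⊕ (Fin 1 ⊕ μ)) (Fin 1 ⊕ (Fin 1 ⊕ μ)) F :=
  reindex (Equiv.sumAssoc _ _ _) (Equiv.sumAssoc _ _ _) <|
    fromBlocks (hyperbolicBlock ε x) (of fun s k => s.elim 0 fun _ => c k)
      (of fun k s => s.elim 0 fun _ => ε * c k) D

theorem transpose_extendHyperbolic {ε x : F} (hε : ε * ε = 1) (hx : ε * x = x) (c : μ → F)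
    {D : Matrix μ μ F} (hD : Dᵀ = ε • D) :
    (extendHyperbolic ε x c D)ᵀ = ε • extendHyperbolic ε x c D := by
  ext (i | i | k) (j | j | l) <;>
    simp [extendHyperbolic, hyperbolicBlock, one_apply, Fin.fin_one_eq_zero, ← mul_assoc, hε, hx]
  exact congrFun (congrFun hD k) l

variable [DecidableEq μ]

theorem firstRow_extendHyperbolic (ε x : F) (c : μ → F) (D : Matrix μ μ F) :
    firstRow (extendHyperbolic ε x c D) = (0, Pi.single (.inl 0) 1) := by
  ext (j | k) <;> simp [firstRow, extendHyperbolic, hyperbolicBlock, Fin.fin_one_eq_zero]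

variable [Fintype μ]

theorem isUnit_extendHyperbolic_iff {ε : F} (hε : ε * ε = 1) (x : F) (c : μ → F)
    (D : Matrix μ μ F) : IsUnit (extendHyperbolic ε x c D) ↔ IsUnit D := by
  let _ := invertibleOfLeftInverse _ _ (hyperbolicBlockInv_mul hε x)
  rw [extendHyperbolic, isUnit_iff_isUnit_det, det_reindex_self, ← isUnit_iff_isUnit_det,
    isUnit_fromBlocks_iff_of_invertible₁₁]
  have hinv : ⅟(hyperbolicBlock ε x) = hyperbolicBlockInv ε x := rfl
  convert Iff.rfl using 2
  ext k l
  simp [hinv, hyperbolicBlockInv, mul_apply, Fintype.sum_sum_type]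

theorem eq_extendHyperbolic_of_mem_rowFiber {ε : F} {A : Matrix (Fin 1 ⊕ (Fin 1 ⊕ μ)) _ F}
    (hA : A ∈ rowFiber ε (0, Pi.single (.inl 0) 1)) :
    A = extendHyperbolic ε (A (.inr (.inl 0)) (.inr (.inl 0)))
      (fun k => A (.inr (.inl 0)) (.inr (.inr k)))
      (of fun k l => A (.inr (.inr k)) (.inr (.inr l))) := by
  obtain ⟨⟨hsymm, -⟩, hrow⟩ := hA
  simp only [Set.mem_preimage, Set.mem_singleton_iff, firstRow, Prod.mk.injEq, funext_iff] at hrow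
  have hs (i j) : A j i = ε * A i j := congrFun (congrFun hsymm i) j
  ext (i | i | k) (j | j | l) <;>
    simp [extendHyperbolic, hyperbolicBlock, one_apply, Fin.fin_one_eq_zero, hrow.1, hrow.2,
      hs (.inl 0) (.inr _), hs (.inr (.inl 0)) (.inr (.inr _))]

theorem card_rowFiber_single {ε : F} (hε : ε * ε = 1) :
    Nat.card (rowFiber ε ((0, Pi.single (.inl 0) 1) : F × (Fin 1 ⊕ μ → F))) =
      Nat.card {x : F // ε * x = x} * Nat.card (μ → F) * Nat.card (epsSymmUnits ε μ) := by
  rw [mul_assoc, ← Nat.card_prod, ← Nat.card_prod]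
  refine Nat.card_congr
    { toFun A := (⟨A.1 (.inr (.inl 0)) (.inr (.inl 0)), ?_⟩,
        fun k => A.1 (.inr (.inl 0)) (.inr (.inr k)),
        ⟨of fun k l => A.1 (.inr (.inr k)) (.inr (.inr l)), ?_, ?_⟩)
      invFun t := ⟨extendHyperbolic ε t.1 t.2.1 t.2.2,
        ⟨transpose_extendHyperbolic hε t.1.2 t.2.1 t.2.2.2.1,
          (isUnit_extendHyperbolic_iff hε _ _ _).2 t.2.2.2.2⟩,
        firstRow_extendHyperbolic _ _ _ _⟩
      left_inv A := Subtype.ext (eq_extendHyperbolic_of_mem_rowFiber A.2).symm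
      right_inv t := ?_ }
  · exact (congrFun (congrFun A.2.1.1 _) _).symm
  · ext k l
    exact congrFun (congrFun A.2.1.1 (.inr (.inr k))) (.inr (.inr l))
  · rw [← isUnit_extendHyperbolic_iff hε, ← eq_extendHyperbolic_of_mem_rowFiber A.2]
    exact A.2.1.2
  · obtain ⟨⟨x, hx⟩, c, D, hD⟩ := t
    ext <;> simp [extendHyperbolic, hyperbolicBlock]

theorem card_rowFiber_zero_fst {ε : F} (hε : ε * ε = 1) {b : Fin 1 ⊕ μ → F}
    (hb : b ≠ 0) :
    Nat.card (rowFiber ε (0, b)) =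
      Nat.card {x : F // ε * x = x} * Nat.card (μ → F) * Nat.card (epsSymmUnits ε μ) := by
  obtain ⟨G, hG, hGb⟩ := exists_isUnit_mulVec_eq hb (Pi.single_ne_zero_iff.mpr one_ne_zero)
  rw [card_rowFiber_eq_of_lowerBlock ε 0 hG, zero_smul, zero_add, hGb, card_rowFiber_single hε]

end Hyperbolic

section Counting

variable [Fintype F] {ν μ : Type*} [Fintype ν] [DecidableEq ν] [Fintype μ] [DecidableEq μ]

theorem card_epsSymmUnits_eq_sum_card_rowFiber (ε : F) :
    Nat.card (epsSymmUnits ε (Fin 1 ⊕ ν)) =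
      ∑ a : F, ∑ b : ν → F, Nat.card (rowFiber ε (a, b)) := by
  rw [card_eq_sum_card_inter_preimage_singleton _ firstRow, Fintype.sum_prod_type]
  rfl

theorem sum_card_rowFiber_zero_fst {ε : F} (hε : ε * ε = 1) :
    ∑ b : Fin 1 ⊕ μ → F, Nat.card (rowFiber ε (0, b)) =
      (Fintype.card F ^ (Fintype.card μ + 1) - 1) * (Nat.card {x : F // ε * x = x} *
        Fintype.card F ^ Fintype.card μ * Nat.card (epsSymmUnits ε μ)) := by
  rw [sum_eq_add_card_sub_one_mul _ 0 fun b hb => card_rowFiber_zero_fst hε hb,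
    rowFiber_zero_eq_empty]
  simp [Nat.card_eq_fintype_card, add_comm]

theorem card_epsSymmUnits_neg_one_eq_sum (h2 : (2 : F) ≠ 0) :
    Nat.card (epsSymmUnits (-1 : F) (Fin 1 ⊕ ν)) =
      ∑ b : ν → F, Nat.card (rowFiber (-1 : F) (0, b)) := by
  rw [card_epsSymmUnits_eq_sum_card_rowFiber, Fintype.sum_eq_single 0 fun a ha => ?_]
  refine Finset.sum_eq_zero fun b _ => ?_
  rw [rowFiber_eq_empty_of_mul_ne ?_ b]
  · simp
  · intro h
    exact ha ((mul_eq_zero.mp (by linear_combination -h : (2 : F) * a = 0)).resolve_left h2)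

theorem card_epsSymmUnits_one_eq_sum :
    Nat.card (epsSymmUnits (1 : F) (Fin 1 ⊕ ν)) =
      ∑ b : ν → F, Nat.card (rowFiber (1 : F) (0, b)) +
        (Fintype.card F - 1) * (Fintype.card F ^ Fintype.card ν *
          Nat.card (epsSymmUnits (1 : F) ν)) := by
  rw [card_epsSymmUnits_eq_sum_card_rowFiber, sum_eq_add_card_sub_one_mul _ 0 fun a ha => ?_]
  simp [card_rowFiber_of_ne_zero ha (one_mul a)]

theorem card_epsSymmUnits_neg_one_rec (h2 : (2 : F) ≠ 0) :
    Nat.card (epsSymmUnits (-1 : F) (Fin 1 ⊕ (Fin 1 ⊕ μ))) =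
      (Fintype.card F ^ (Fintype.card μ + 1) - 1) *
        (Fintype.card F ^ Fintype.card μ * Nat.card (epsSymmUnits (-1 : F) μ)) := by
  have hfix : Nat.card {x : F // -1 * x = x} = 1 := by
    refine Nat.card_eq_one_iff_unique.mpr
      ⟨⟨fun x y => Subtype.ext ?_⟩, ⟨⟨0, by simp⟩⟩⟩
    have h (x : {x : F // -1 * x = x}) : x.1 = 0 :=
      (mul_eq_zero.mp (by linear_combination -x.2 : (2 : F) * x = 0)).resolve_left h2
    rw [h x, h y]
  rw [card_epsSymmUnits_neg_one_eq_sum h2, sum_card_rowFiber_zero_fst (by norm_num), hfix,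
    one_mul]

theorem card_epsSymmUnits_one_rec :
    Nat.card (epsSymmUnits (1 : F) (Fin 1 ⊕ (Fin 1 ⊕ μ))) =
      (Fintype.card F ^ (Fintype.card μ + 1) - 1) *
          (Fintype.card F ^ (Fintype.card μ + 1) * Nat.card (epsSymmUnits (1 : F) μ)) +
        (Fintype.card F - 1) * (Fintype.card F ^ (Fintype.card μ + 1) *
          Nat.card (epsSymmUnits (1 : F) (Fin 1 ⊕ μ))) := by
  have hfix : Nat.card {x : F // 1 * x = x} = Fintype.card F := by
    simp [Nat.card_eq_fintype_card]
  rw [card_epsSymmUnits_one_eq_sum, sum_card_rowFiber_zero_fst (one_mul 1), hfix, ← pow_succ',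
    Fintype.card_sum, Fintype.card_fin, add_comm 1]

theorem card_epsSymmUnits_one_fin_one :
    Nat.card (epsSymmUnits (1 : F) (Fin 1)) = Fintype.card F - 1 := by
  rw [card_epsSymmUnits_congr 1 (Equiv.sumEmpty (Fin 1) (Fin 0)).symm,
    card_epsSymmUnits_one_eq_sum, Fintype.sum_unique, Subsingleton.elim (default : Fin 0 → F) 0,
    rowFiber_zero_eq_empty, card_epsSymmUnits_fin_zero]
  simp

theorem card_epsSymmUnits_neg_one_fin_add_two (h2 : (2 : F) ≠ 0) (n : ℕ) :
    (Nat.card (epsSymmUnits (-1 : F) (Fin (n + 2))) : ℤ) =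
      ((Fintype.card F : ℤ) ^ (n + 1) - 1) *
        (Fintype.card F ^ n * Nat.card (epsSymmUnits (-1 : F) (Fin n))) := by
  rw [card_epsSymmUnits_fin_succ, card_epsSymmUnits_congr _ (Equiv.sumCongr (Equiv.refl _)
    ((finCongr (Nat.add_comm n 1)).trans finSumFinEquiv.symm)),
    card_epsSymmUnits_neg_one_rec h2, Fintype.card_fin]
  push_cast [Nat.cast_sub (Nat.one_le_pow (n + 1) _ (Fintype.card_pos (α := F)))]
  rfl

theorem card_epsSymmUnits_one_fin_add_two (n : ℕ) :
    (Nat.card (epsSymmUnits (1 : F) (Fin (n + 2))) : ℤ) =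
      ((Fintype.card F : ℤ) ^ (n + 1) - 1) *
          (Fintype.card F ^ (n + 1) * Nat.card (epsSymmUnits (1 : F) (Fin n))) +
        (Fintype.card F - 1) *
          (Fintype.card F ^ (n + 1) * Nat.card (epsSymmUnits (1 : F) (Fin (n + 1)))) := by
  rw [card_epsSymmUnits_fin_succ, card_epsSymmUnits_congr _ (Equiv.sumCongr (Equiv.refl _)
    ((finCongr (Nat.add_comm n 1)).trans finSumFinEquiv.symm)), card_epsSymmUnits_one_rec,
    Fintype.card_fin, card_epsSymmUnits_fin_succ]
  push_cast [Nat.cast_sub (Nat.one_le_pow (n + 1) _ (Fintype.card_pos (α := F))),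
    Nat.cast_sub (Fintype.card_pos (α := F))]
  rfl

theorem card_epsSymmUnits_fin_even (h2 : (2 : F) ≠ 0) (m : ℕ) :
    (Nat.card (epsSymmUnits (-1 : F) (Fin (2 * m + 2))) : ℤ) =
        Nat.card (epsSymmUnits (1 : F) (Fin (2 * m + 1))) ∧
      (Nat.card (epsSymmUnits (1 : F) (Fin (2 * m + 2))) : ℤ) =
        (Fintype.card F : ℤ) ^ (2 * m + 2) *
          Nat.card (epsSymmUnits (1 : F) (Fin (2 * m + 1))) := by
  induction m with
  | zero =>
    have hsymm1 : (Nat.card (epsSymmUnits (1 : F) (Fin 1)) : ℤ) = Fintype.card F - 1 := by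
      rw [card_epsSymmUnits_one_fin_one, Nat.cast_sub Fintype.card_pos, Nat.cast_one]
    rw [card_epsSymmUnits_neg_one_fin_add_two h2, card_epsSymmUnits_one_fin_add_two, hsymm1,
      card_epsSymmUnits_fin_zero, card_epsSymmUnits_fin_zero]
    constructor <;> ring
  | succ m ih =>
    obtain ⟨hskew, hsymm⟩ := ih
    have hsymm_odd := card_epsSymmUnits_one_fin_add_two (F := F) (2 * m + 1)
    have hskew_next := card_epsSymmUnits_neg_one_fin_add_two h2 (2 * m + 2)
    have hsymm_next := card_epsSymmUnits_one_fin_add_two (F := F) (2 * m + 2)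
    rw [show 2 * m + 1 + 1 = 2 * m + 2 by ring] at hsymm_odd
    rw [show 2 * m + 2 + 1 = 2 * m + 1 + 2 by ring] at hsymm_next
    rw [show 2 * (m + 1) + 2 = 2 * m + 2 + 2 by ring, show 2 * (m + 1) + 1 = 2 * m + 1 + 2 by ring]
    set q : ℤ := (Fintype.card F : ℤ)
    constructor
    · linear_combination hskew_next - hsymm_odd +
        (q ^ (2 * m + 3) - 1) * q ^ (2 * m + 2) * hskew - (q - 1) * q ^ (2 * m + 2) * hsymm
    · linear_combination hsymm_next - q ^ (2 * m + 3) * hsymm_odd +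
        q ^ (2 * m + 3) * (q ^ (2 * m + 2) - 1) * hsymm

end Counting

end EpsSymm

theorem stmt10 (F : Type) [Field F] [Fintype F] (q : ℕ) (hq : Fintype.card F = q)
    (hodd : Odd q) (n : ℕ) (hn : 2 ≤ n) (he : Even n) :
    Nat.card {A : Matrix (Fin n) (Fin n) F // Aᵀ = -A ∧ IsUnit A} =
      Nat.card {A : Matrix (Fin (n - 1)) (Fin (n - 1)) F // A.IsSymm ∧ IsUnit A} := by
  have h2 : (2 : F) ≠ 0 := Ring.two_ne_zero fun h =>
    Nat.not_even_iff_odd.mpr hodd <|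
      hq ▸ Nat.even_iff.mpr (FiniteField.even_card_iff_char_two.mp h)
  obtain ⟨m, rfl⟩ : ∃ m, n = 2 * m + 2 := ⟨n / 2 - 1, by obtain ⟨k, rfl⟩ := he; omega⟩
  have hskew :
      Nat.card {A : Matrix (Fin (2 * m + 2)) (Fin (2 * m + 2)) F // Aᵀ = -A ∧ IsUnit A} =
      Nat.card (EpsSymm.epsSymmUnits (-1 : F) (Fin (2 * m + 2))) :=
    Nat.card_congr (Equiv.subtypeEquivRight fun A => by simp [EpsSymm.epsSymmUnits])
  have hsymm :
      Nat.card {A : Matrix (Fin (2 * m + 1)) (Fin (2 * m + 1)) F // A.IsSymm ∧ IsUnit A} =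
      Nat.card (EpsSymm.epsSymmUnits (1 : F) (Fin (2 * m + 1))) :=
    Nat.card_congr (Equiv.subtypeEquivRight fun A => by simp [EpsSymm.epsSymmUnits, IsSymm])
  rw [show 2 * m + 2 - 1 = 2 * m + 1 by omega, hskew, hsymm]
  exact_mod_cast (EpsSymm.card_epsSymmUnits_fin_even h2 m).1
end

section
/- Let q be odd and 0 ≤ r ≤ n. If r is odd then sk(n,r) = 0. If r is even then sk(n,r) = q^{r(r−2)/4} · (q−1)^{r/2} · [n]_q! / ([n−r]_q! · [r]_q!!). -/
open Matrix

/-- `[a]_q! = [a]_q · [a-1]_q ⋯ [1]_q`. -/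
def qFact (q a : ℕ) : ℕ := ∏ i ∈ Finset.range a, qNum q (i + 1)

/-- `[a]_q!! = [a]_q · [a-2]_q · [a-4]_q ⋯`, with `[0]_q!! = [-1]_q!! = 1`. -/
def qDFact (q : ℕ) : ℕ → ℕ
  | 0 => 1
  | 1 => 1
  | (a + 2) => qNum q (a + 2) * qDFact q a

set_option linter.unusedSectionVars false

open Module

/-- The number of `n × n` skew-symmetric matrices of rank `r` over a field with `q` elements. -/
def skf (q : ℕ) : ℕ → ℕ → ℕ
  | 0, 0 => 1
  | 0, _ + 1 => 0
  | n + 1, r =>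
      q ^ r * skf q n r + if 2 ≤ r then (q ^ n - q ^ (r - 2)) * skf q n (r - 2) else 0

lemma skf_odd (q : ℕ) (n : ℕ) : ∀ r, Odd r → skf q n r = 0 := by
  induction n with
  | zero =>
      intro r hr
      rcases r with _ | r
      · exact absurd hr (by simp)
      · rfl
  | succ n ih =>
      intro r hr
      rw [show skf q (n+1) r = q ^ r * skf q n r
          + (if 2 ≤ r then (q ^ n - q ^ (r - 2)) * skf q n (r - 2) else 0) from rfl]
      rw [ih r hr]
      by_cases h2r : 2 ≤ r
      · rw [if_pos h2r, ih (r-2) (by rw [Nat.odd_iff] at hr ⊢; omega)]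
        simp
      · rw [if_neg h2r]; simp

lemma skf_gt (q : ℕ) (n : ℕ) : ∀ r, n < r → skf q n r = 0 := by
  induction n with
  | zero =>
      intro r hr
      rcases r with _ | r
      · omega
      · rfl
  | succ n ih =>
      intro r hr
      rw [show skf q (n+1) r = q ^ r * skf q n r
          + (if 2 ≤ r then (q ^ n - q ^ (r - 2)) * skf q n (r - 2) else 0) from rfl]
      rw [ih r (by omega), if_pos (by omega : 2 ≤ r)]
      by_cases hc : n < r - 2
      · rw [ih (r-2) hc]; simp
      · have : r - 2 = n := by omega
        rw [this]
        simp

section Qalg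
variable {q : ℕ} (hq : 2 ≤ q)
include hq

lemma qNum_cast (a : ℕ) : (qNum q a : ℚ) = ((q : ℚ) ^ a - 1) / ((q : ℚ) - 1) := by
  have hq1 : (q : ℚ) ≠ 1 := by
    intro h
    have : ((q : ℚ)) ≥ 2 := by exact_mod_cast hq
    rw [h] at this; norm_num at this
  rw [qNum]
  push_cast
  exact geom_sum_eq hq1 a

lemma qNum_pos (a : ℕ) (ha : 1 ≤ a) : 0 < qNum q a := by
  rw [qNum]
  apply Finset.sum_pos
  · intro i _
    exact pow_pos (by omega) i
  · exact ⟨0, Finset.mem_range.mpr (by omega)⟩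

omit hq in
lemma qFact_succ (a : ℕ) : qFact q (a + 1) = qFact q a * qNum q (a + 1) :=
  Finset.prod_range_succ _ _

lemma qFact_pos (a : ℕ) : 0 < qFact q a := by
  rw [qFact]
  apply Finset.prod_pos
  intro i _
  exact qNum_pos hq (i+1) (by omega)

lemma qDFact_pos (a : ℕ) : 0 < qDFact q a := by
  induction a using Nat.strong_induction_on with
  | _ a ih =>
      match a with
      | 0 => exact Nat.one_pos
      | 1 => exact Nat.one_pos
      | (a + 2) =>
          rw [show qDFact q (a+2) = qNum q (a+2) * qDFact q a from rfl]
          exact Nat.mul_pos (qNum_pos hq _ (by omega)) (ih a (by omega))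

lemma pow_sub_one_ne (a : ℕ) (ha : 1 ≤ a) : (q : ℚ) ^ a - 1 ≠ 0 := by
  have h2 : (2 : ℚ) ≤ (q : ℚ) := by exact_mod_cast hq
  have : (1 : ℚ) < (q : ℚ) ^ a := by
    apply one_lt_pow₀ (by linarith) (by omega)
  linarith

lemma q_sub_one_ne : ((q : ℚ) - 1) ≠ 0 := by
  have h2 : (2 : ℚ) ≤ (q : ℚ) := by exact_mod_cast hq
  linarith

end Qalg

lemma nat_exp_identity (t : ℕ) : (t + 1) * t = t * (t - 1) + 2 * t := by
  cases t with
  | zero => rfl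
  | succ u => simp only [Nat.succ_sub_one]; ring

theorem skf_formula {q : ℕ} (hq : 2 ≤ q) (n : ℕ) :
    ∀ s : ℕ, 2 * s ≤ n →
    (skf q n (2 * s) : ℚ)
      = (q : ℚ) ^ (s * (s - 1)) * ((q : ℚ) - 1) ^ s * (qFact q n : ℚ)
        / ((qFact q (n - 2 * s) : ℚ) * (qDFact q (2 * s) : ℚ)) := by
  induction n with
  | zero =>
      intro s hs
      have hs0 : s = 0 := by omega
      subst hs0
      norm_num [skf, qFact, qDFact]
  | succ n ih =>
      intro s hs
      rcases Nat.eq_zero_or_pos s with hs0 | hspos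
      · subst hs0
        have h0 := ih 0 (by omega)
        rw [show (2*0 : ℕ) = 0 from rfl] at h0 ⊢
        rw [show skf q (n+1) 0 = q ^ 0 * skf q n 0 + (if (2:ℕ) ≤ 0 then
            (q ^ n - q ^ (0 - 2)) * skf q n (0 - 2) else 0) from rfl]
        rw [if_neg (by omega)]
        push_cast
        rw [h0]
        have h1 : (qFact q n : ℚ) ≠ 0 := by exact_mod_cast (qFact_pos hq n).ne'
        have h2 : (qFact q (n+1) : ℚ) ≠ 0 := by exact_mod_cast (qFact_pos hq (n+1)).ne'
        simp only [Nat.sub_zero, Nat.zero_mul, pow_zero, one_mul, mul_one, add_zero,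
          qDFact, Nat.cast_one]
        rw [div_self h1, div_self h2]
      · -- s = t + 1
        obtain ⟨t, rfl⟩ : ∃ t, s = t + 1 := ⟨s - 1, by omega⟩
        have hr2 : (2 : ℕ) ≤ 2 * (t+1) := by omega
        have hsub : 2 * (t + 1) - 2 = 2 * t := by omega
        rw [show skf q (n+1) (2*(t+1)) = q ^ (2*(t+1)) * skf q n (2*(t+1))
            + (if 2 ≤ 2*(t+1) then (q ^ n - q ^ (2*(t+1) - 2)) * skf q n (2*(t+1) - 2)
              else 0) from rfl, if_pos hr2, hsub]
        have hple : q ^ (2*t) ≤ q ^ n := Nat.pow_le_pow_right (by omega) (by omega)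
        have e4 : qDFact q (2*(t+1)) = qNum q (2*t+2) * qDFact q (2*t) := by
          rw [show 2*(t+1) = 2*t+2 by ring]; rfl
        have e5 : (t+1)*(t+1-1) = t*(t-1) + 2*t := by
          simpa using nat_exp_identity t
        have e5' : (t+1)*t = t*(t-1) + 2*t := nat_exp_identity t
        -- nonzero facts
        have hQ1 : ((q:ℚ) - 1) ≠ 0 := q_sub_one_ne hq
        have hQF : ∀ a : ℕ, (qFact q a : ℚ) ≠ 0 := fun a => by
          exact_mod_cast (qFact_pos hq a).ne'
        have hQD : ∀ a : ℕ, (qDFact q a : ℚ) ≠ 0 := fun a => by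
          exact_mod_cast (qDFact_pos hq a).ne'
        by_cases hcase : 2 * (t+1) ≤ n
        · -- main case
          obtain ⟨d, hd⟩ : ∃ d, n = 2 * (t + 1) + d := ⟨n - 2*(t+1), by omega⟩
          have h1 := ih (t+1) hcase
          have h2 := ih t (by omega)
          push_cast [Nat.cast_sub hple]
          rw [h1, h2]
          subst hd
          rw [show 2*(t+1) + d + 1 - 2*(t+1) = d + 1 by omega,
            show 2*(t+1) + d - 2*(t+1) = d by omega,
            show 2*(t+1) + d - 2*t = d + 2 by omega]
          have e1 : qFact q (2*(t+1)+d+1) = qFact q (2*(t+1)+d) * qNum q (2*(t+1)+d+1) :=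
            qFact_succ _
          have e2 : qFact q (d+2) = qFact q d * qNum q (d+1) * qNum q (d+2) := by
            rw [qFact_succ (d+1), qFact_succ d]
          have e3 : qFact q (d+1) = qFact q d * qNum q (d+1) := qFact_succ d
          rw [e1, e2, e3, e4, e5, e5']
          push_cast
          rw [qNum_cast hq (2*(t+1)+d+1), qNum_cast hq (d+1), qNum_cast hq (d+2),
            qNum_cast hq (2*t+2)]
          set Y1 := ((q:ℚ)^(2*(t+1)+d+1) - 1) with hY1
          set Y2 := ((q:ℚ)^(d+1) - 1) with hY2
          set Y3 := ((q:ℚ)^(d+2) - 1) with hY3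
          set Y4 := ((q:ℚ)^(2*t+2) - 1) with hY4
          have p1 : Y1 ≠ 0 := pow_sub_one_ne hq _ (by omega)
          have p2 : Y2 ≠ 0 := pow_sub_one_ne hq _ (by omega)
          have p3 : Y3 ≠ 0 := pow_sub_one_ne hq _ (by omega)
          have p4 : Y4 ≠ 0 := pow_sub_one_ne hq _ (by omega)
          have pF : (qFact q d : ℚ) ≠ 0 := hQF d
          have pD : (qDFact q (2*t) : ℚ) ≠ 0 := hQD (2*t)
          field_simp
          rw [hY1, hY2, hY3, hY4]
          ring
        · -- edge case : 2*(t+1) = n+1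
          have hn : n = 2 * t + 1 := by omega
          have h0 : skf q n (2*(t+1)) = 0 := skf_gt q n _ (by omega)
          have h2 := ih t (by omega)
          push_cast [Nat.cast_sub hple]
          rw [h0, h2]
          subst hn
          rw [show 2*t+1+1 - 2*(t+1) = 0 by omega,
            show 2*t+1 - 2*t = 1 by omega]
          have e1 : qFact q (2*t+1+1) = qFact q (2*t+1) * qNum q (2*t+2) := qFact_succ (2*t+1)
          have eq1 : qFact q 1 = 1 := by
            rw [qFact, Finset.prod_range_one]; simp [qNum]
          have eq0 : qFact q 0 = 1 := rfl
          rw [e1, e4, e5', eq1, eq0]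
          have pN : (qNum q (2*t+2) : ℚ) ≠ 0 := by
            exact_mod_cast (qNum_pos hq (2*t+2) (by omega)).ne'
          have pD : (qDFact q (2*t) : ℚ) ≠ 0 := hQD (2*t)
          push_cast
          field_simp
          ring

section LinAlg
variable {F : Type} [Field F] {ι : Type} [Fintype ι] [DecidableEq ι]

/-- Extension of a square matrix by a last row/column in skew fashion. -/
def skewExt (B : Matrix ι ι F) (v : ι → F) : Matrix (ι ⊕ Fin 1) (ι ⊕ Fin 1) F :=
  Matrix.of fun i j =>
    match i, j with
    | .inl i, .inl j => B i j
    | .inl i, .inr _ => v i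
    | .inr _, .inl j => -(v j)
    | .inr _, .inr _ => 0

lemma skewExt_transpose (B : Matrix ι ι F) (v : ι → F) (hB : Bᵀ = -B) :
    (skewExt B v)ᵀ = -(skewExt B v) := by
  funext i j
  cases i <;> cases j <;>
    simp [skewExt, Matrix.transpose_apply, Matrix.neg_apply] <;>
    exact congrFun (congrFun hB _) _

lemma skewExt_mulVec (B : Matrix ι ι F) (v : ι → F) (x : ι ⊕ Fin 1 → F) :
    skewExt B v *ᵥ x =
      Sum.elim (B *ᵥ (x ∘ Sum.inl) + x (Sum.inr 0) • v)
        (fun _ => -(v ⬝ᵥ (x ∘ Sum.inl))) := by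
  funext i
  cases i with
  | inl i =>
      simp only [Matrix.mulVec, dotProduct, Fintype.sum_sum_type, Sum.elim_inl]
      simp [skewExt, Pi.add_apply, Matrix.mulVec, dotProduct, mul_comm,
        Finset.sum_neg_distrib]
  | inr i =>
      simp only [Matrix.mulVec, dotProduct, Fintype.sum_sum_type, Sum.elim_inr]
      simp [skewExt, dotProduct, Finset.sum_neg_distrib]

end LinAlg

section RankLemmas
variable {F : Type} [Field F] {ι : Type} [Fintype ι] [DecidableEq ι]

lemma skew_self_dot (B : Matrix ι ι F) (hB : Bᵀ = -B) (h2 : (2 : F) ≠ 0) (u : ι → F) :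
    u ⬝ᵥ (B *ᵥ u) = 0 := by
  have h : u ⬝ᵥ (B *ᵥ u) = -(u ⬝ᵥ (B *ᵥ u)) := by
    conv_lhs => rw [Matrix.dotProduct_mulVec, ← Matrix.mulVec_transpose, hB,
      Matrix.neg_mulVec, neg_dotProduct, dotProduct_comm]
  have h2' : (2 : F) * (u ⬝ᵥ (B *ᵥ u)) = 0 := by linear_combination h
  rcases mul_eq_zero.mp h2' with h | h
  · exact absurd h h2
  · exact h

lemma skew_dot_comm (B : Matrix ι ι F) (hB : Bᵀ = -B) (u x : ι → F) :
    u ⬝ᵥ (B *ᵥ x) = -((B *ᵥ u) ⬝ᵥ x) := by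
  have h1 : u ᵥ* B = -(B *ᵥ u) := by rw [← Matrix.mulVec_transpose, hB, Matrix.neg_mulVec]
  rw [Matrix.dotProduct_mulVec, h1, neg_dotProduct]

lemma range_neg_mulVecLin (B : Matrix ι ι F) :
    LinearMap.range (-B : Matrix ι ι F).mulVecLin = LinearMap.range B.mulVecLin := by
  have : (-B : Matrix ι ι F).mulVecLin = -B.mulVecLin := by
    ext x; simp [Matrix.mulVecLin_apply, Matrix.neg_mulVec]
  rw [this, LinearMap.range_neg]

lemma rank_skewExt_mem (B : Matrix ι ι F) (v : ι → F) (hB : Bᵀ = -B) (h2 : (2 : F) ≠ 0)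
    (hv : v ∈ LinearMap.range B.mulVecLin) : (skewExt B v).rank = B.rank := by
  obtain ⟨u, hu⟩ := hv
  rw [Matrix.mulVecLin_apply] at hu
  -- the projection map
  let L : ((ι ⊕ Fin 1) → F) →ₗ[F] (ι → F) :=
    { toFun := fun x => x ∘ Sum.inl + x (Sum.inr 0) • u
      map_add' := by intro x y; funext i; simp [add_smul]; ring
      map_smul' := by intro c x; funext i; simp [mul_add, smul_smul, mul_assoc] }
  let e : (ι → F) →ₗ[F] ((ι ⊕ Fin 1) → F) :=
    { toFun := fun w => Sum.elim w (fun _ => u ⬝ᵥ w)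
      map_add' := by intro x y; funext i; cases i <;> simp [dotProduct_add]
      map_smul' := by intro c x; funext i; cases i <;> simp [dotProduct_smul] }
  have hcomp : (skewExt B v).mulVecLin = e ∘ₗ (B.mulVecLin ∘ₗ L) := by
    refine LinearMap.ext fun x => ?_
    simp only [LinearMap.comp_apply, Matrix.mulVecLin_apply, skewExt_mulVec]
    have hL : B *ᵥ (L x) = B *ᵥ (x ∘ Sum.inl) + x (Sum.inr 0) • v := by
      simp only [L, LinearMap.coe_mk, AddHom.coe_mk, Matrix.mulVec_add, Matrix.mulVec_smul, hu]
    rw [hL]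
    show _ = Sum.elim _ (fun _ => u ⬝ᵥ _)
    congr 1
    funext i
    rw [dotProduct_add, dotProduct_smul, ← hu,
      skew_dot_comm B hB u (x ∘ Sum.inl), skew_self_dot B hB h2 u]
    simp
  have hLsurj : LinearMap.range L = ⊤ := by
    rw [LinearMap.range_eq_top]
    intro w
    refine ⟨Sum.elim w 0, ?_⟩
    simp only [L, LinearMap.coe_mk, AddHom.coe_mk]
    funext i; simp
  have heinj : Function.Injective e := by
    intro a b hab
    funext i
    exact congrFun hab (Sum.inl i)
  rw [Matrix.rank, Matrix.rank, hcomp, LinearMap.range_comp, LinearMap.range_comp, hLsurj,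
    Submodule.map_top]
  exact (((LinearMap.range B.mulVecLin).equivMapOfInjective e heinj).symm).finrank_eq

end RankLemmas

section RankLemmas2
variable {F : Type} [Field F] {ι : Type} [Fintype ι] [DecidableEq ι]

lemma finrank_sup_span_singleton {V : Type} [AddCommGroup V] [Module F V]
    [FiniteDimensional F V] (W : Submodule F V) (v : V) (hv : v ∉ W) :
    finrank F ↥(W ⊔ Submodule.span F {v}) = finrank F W + 1 := by
  have hv0 : v ≠ 0 := fun h => hv (h ▸ W.zero_mem)
  have hdisj : Disjoint W (Submodule.span F {v}) :=
    (Submodule.disjoint_span_singleton).mpr (fun h => absurd h hv)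
  have := Submodule.finrank_sup_add_finrank_inf_eq W (Submodule.span F {v})
  rw [hdisj.eq_bot, finrank_bot, finrank_span_singleton hv0] at this
  omega

lemma rank_skewExt_notMem (B : Matrix ι ι F) (v : ι → F) (hB : Bᵀ = -B)
    (hv : v ∉ LinearMap.range B.mulVecLin) : (skewExt B v).rank = B.rank + 2 := by
  classical
  -- the matrix B with the row v appended
  set N : Matrix (ι ⊕ Fin 1) ι F :=
    Matrix.of (fun i j => Sum.elim (fun i' => B i' j) (fun _ => v j) i) with hNdef
  have hN : ∀ x : ι → F, N *ᵥ x = Sum.elim (B *ᵥ x) (fun _ => v ⬝ᵥ x) := by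
    intro x; funext i; cases i <;> rfl
  have hNT : ∀ y : (ι ⊕ Fin 1) → F,
      Nᵀ *ᵥ y = Bᵀ *ᵥ (y ∘ Sum.inl) + y (Sum.inr 0) • v := by
    intro y; funext j
    simp only [Matrix.mulVec, dotProduct, Fintype.sum_sum_type, Matrix.transpose_apply,
      Pi.add_apply, Pi.smul_apply, smul_eq_mul]
    congr 1 <;> simp [N, Matrix.mulVec, dotProduct, mul_comm]
  have hrangeBT : LinearMap.range Bᵀ.mulVecLin = LinearMap.range B.mulVecLin := by
    rw [hB, range_neg_mulVecLin]
  have hrangeNT : LinearMap.range Nᵀ.mulVecLin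
      = LinearMap.range B.mulVecLin ⊔ Submodule.span F {v} := by
    apply le_antisymm
    · rintro w ⟨y, rfl⟩
      rw [Matrix.mulVecLin_apply, hNT]
      refine Submodule.add_mem_sup ?_ ?_
      · rw [← hrangeBT]; exact ⟨y ∘ Sum.inl, rfl⟩
      · exact Submodule.smul_mem _ _ (Submodule.subset_span rfl)
    · refine sup_le ?_ ?_
      · rintro w ⟨z, rfl⟩
        have hmem : B.mulVecLin z ∈ LinearMap.range Bᵀ.mulVecLin := hrangeBT.symm ▸ ⟨z, rfl⟩
        obtain ⟨z', hz'⟩ := hmem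
        refine ⟨Sum.elim z' 0, ?_⟩
        rw [Matrix.mulVecLin_apply, hNT]
        simp only [Matrix.mulVecLin_apply] at hz'
        simpa using hz'
      · rw [Submodule.span_le, Set.singleton_subset_iff]
        exact ⟨Sum.elim 0 1, by rw [Matrix.mulVecLin_apply, hNT]; simp⟩
  have hrankN : N.rank = B.rank + 1 := by
    rw [← Matrix.rank_transpose N, Matrix.rank, hrangeNT, finrank_sup_span_singleton _ _ hv,
      ← Matrix.rank_transpose B, Matrix.rank, hrangeBT]
  -- the embedding w ↦ (w, 0)
  let e₀ : (ι → F) →ₗ[F] ((ι ⊕ Fin 1) → F) :=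
    { toFun := fun w => Sum.elim w 0
      map_add' := by intro x y; funext i; cases i <;> simp
      map_smul' := by intro c x; funext i; cases i <;> simp }
  have he₀ : Function.Injective e₀ := fun a b hab => funext fun i => congrFun hab (Sum.inl i)
  have hker : LinearMap.ker (skewExt B v).mulVecLin
      = Submodule.map e₀ (LinearMap.ker N.mulVecLin) := by
    ext x
    constructor
    · intro hx
      rw [LinearMap.mem_ker, Matrix.mulVecLin_apply, skewExt_mulVec] at hx
      have ha : B *ᵥ (x ∘ Sum.inl) + x (Sum.inr 0) • v = 0 := by
        funext i; exact congrFun hx (Sum.inl i)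
      have hb : v ⬝ᵥ (x ∘ Sum.inl) = 0 := by
        have := congrFun hx (Sum.inr 0); simpa using this
      have ht : x (Sum.inr 0) = 0 := by
        by_contra h
        apply hv
        refine ⟨-((x (Sum.inr 0))⁻¹ • (x ∘ Sum.inl)), ?_⟩
        rw [Matrix.mulVecLin_apply, Matrix.mulVec_neg, Matrix.mulVec_smul]
        have : B *ᵥ (x ∘ Sum.inl) = -(x (Sum.inr 0) • v) := by
          rw [eq_neg_iff_add_eq_zero]; exact ha
        rw [this]
        rw [smul_neg, neg_neg, smul_smul, inv_mul_cancel₀ h, one_smul]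
      refine ⟨x ∘ Sum.inl, ?_, ?_⟩
      · rw [SetLike.mem_coe, LinearMap.mem_ker, Matrix.mulVecLin_apply, hN]
        have hB0 : B *ᵥ (x ∘ Sum.inl) = 0 := by
          have := ha; rw [ht, zero_smul, add_zero] at this; exact this
        funext i; cases i <;> simp [hB0, hb]
      · funext i
        cases i with
        | inl i => rfl
        | inr c =>
            have : c = 0 := Subsingleton.elim _ _
            subst this
            exact ht.symm
    · rintro ⟨w, hw, rfl⟩
      rw [SetLike.mem_coe, LinearMap.mem_ker, Matrix.mulVecLin_apply, hN] at hw
      have hB0 : B *ᵥ w = 0 := by funext i; exact congrFun hw (Sum.inl i)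
      have hvw : v ⬝ᵥ w = 0 := congrFun hw (Sum.inr 0)
      rw [LinearMap.mem_ker, Matrix.mulVecLin_apply, skewExt_mulVec]
      have h1 : (e₀ w) ∘ Sum.inl = w := rfl
      have h2 : (e₀ w) (Sum.inr 0) = 0 := rfl
      rw [h1, h2, hB0, zero_smul, add_zero, hvw]
      funext i; cases i <;> simp
  have hkerrank : finrank F ↥(LinearMap.ker (skewExt B v).mulVecLin)
      = finrank F ↥(LinearMap.ker N.mulVecLin) := by
    rw [hker]
    exact (((LinearMap.ker N.mulVecLin).equivMapOfInjective e₀ he₀)).symm.finrank_eq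
  have rn1 := LinearMap.finrank_range_add_finrank_ker N.mulVecLin
  have rn2 := LinearMap.finrank_range_add_finrank_ker (skewExt B v).mulVecLin
  rw [Module.finrank_pi] at rn1 rn2
  rw [hkerrank] at rn2
  have hcard : Fintype.card (ι ⊕ Fin 1) = Fintype.card ι + 1 := by simp
  rw [hcard] at rn2
  have hrN : finrank F ↥(LinearMap.range N.mulVecLin) = B.rank + 1 := hrankN
  rw [hrN] at rn1
  have : finrank F ↥(LinearMap.range (skewExt B v).mulVecLin) = (skewExt B v).rank := rfl
  omega

end RankLemmas2

section Counting
variable {F : Type} [Field F] [Fintype F] {ι : Type} [Fintype ι] [DecidableEq ι]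

lemma skew_diag_zero {κ : Type} (A : Matrix κ κ F) (hA : Aᵀ = -A) (h2 : (2 : F) ≠ 0)
    (i : κ) : A i i = 0 := by
  have h : A i i = -(A i i) := congrFun (congrFun hA i) i
  have h' : (2 : F) * A i i = 0 := by linear_combination h
  rcases mul_eq_zero.mp h' with h'' | h''
  · exact absurd h'' h2
  · exact h''

lemma skew_reconstruct (A : Matrix (ι ⊕ Fin 1) (ι ⊕ Fin 1) F) (hA : Aᵀ = -A)
    (h2 : (2 : F) ≠ 0) :
    skewExt (Matrix.of fun i j => A (Sum.inl i) (Sum.inl j))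
      (fun i => A (Sum.inl i) (Sum.inr 0)) = A := by
  funext i j
  cases i with
  | inl i =>
      cases j with
      | inl j => rfl
      | inr c => obtain rfl : c = 0 := Subsingleton.elim c 0; rfl
  | inr c =>
      obtain rfl : c = 0 := Subsingleton.elim c 0
      cases j with
      | inl j =>
          show -(A (Sum.inl j) (Sum.inr 0)) = A (Sum.inr 0) (Sum.inl j)
          have h : A (Sum.inl j) (Sum.inr 0) = -(A (Sum.inr 0) (Sum.inl j)) :=
            congrFun (congrFun hA (Sum.inr 0)) (Sum.inl j)
          rw [h, neg_neg]
      | inr c' =>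
          obtain rfl : c' = 0 := Subsingleton.elim c' 0
          exact (skew_diag_zero A hA h2 _).symm

lemma skew_sub_skew (A : Matrix (ι ⊕ Fin 1) (ι ⊕ Fin 1) F) (hA : Aᵀ = -A) :
    (Matrix.of fun i j => A (Sum.inl i) (Sum.inl j))ᵀ
      = -(Matrix.of fun i j => A (Sum.inl i) (Sum.inl j)) := by
  funext i j
  exact congrFun (congrFun hA (Sum.inl i)) (Sum.inl j)

lemma fiber_count (B : Matrix ι ι F) (hB : Bᵀ = -B) (h2 : (2 : F) ≠ 0) (r : ℕ) :
    Nat.card {v : ι → F // (skewExt B v).rank = r}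
      = if B.rank = r then (Fintype.card F) ^ r
        else if B.rank + 2 = r then
          (Fintype.card F) ^ (Fintype.card ι) - (Fintype.card F) ^ (r - 2)
        else 0 := by
  classical
  by_cases h1 : B.rank = r
  · rw [if_pos h1]
    have hcond : ∀ v : ι → F, (skewExt B v).rank = r ↔ v ∈ LinearMap.range B.mulVecLin := by
      intro v
      constructor
      · intro h
        by_contra hmem
        rw [rank_skewExt_notMem B v hB hmem, h1] at h
        omega
      · intro hmem
        rw [rank_skewExt_mem B v hB h2 hmem, h1]
    rw [Nat.card_congr (Equiv.subtypeEquivRight hcond), Nat.card_eq_fintype_card,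
      ← h1, Matrix.rank]
    exact card_eq_pow_finrank
  · rw [if_neg h1]
    by_cases hh : B.rank + 2 = r
    · rw [if_pos hh]
      have hcond : ∀ v : ι → F, (skewExt B v).rank = r ↔ v ∉ LinearMap.range B.mulVecLin := by
        intro v
        constructor
        · intro h hmem
          rw [rank_skewExt_mem B v hB h2 hmem] at h
          exact h1 h
        · intro hmem
          rw [rank_skewExt_notMem B v hB hmem, hh]
      rw [Nat.card_congr (Equiv.subtypeEquivRight hcond), Nat.card_eq_fintype_card,
        Fintype.card_subtype_compl]
      have hc1 : Fintype.card (ι → F) = (Fintype.card F) ^ (Fintype.card ι) :=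
        Fintype.card_fun
      have hc2 : Fintype.card {v : ι → F // v ∈ LinearMap.range B.mulVecLin}
          = (Fintype.card F) ^ (r - 2) := by
        have : r - 2 = B.rank := by omega
        rw [this, Matrix.rank]
        exact card_eq_pow_finrank
      rw [hc1, hc2]
    · rw [if_neg hh]
      rw [Nat.card_eq_zero]
      left
      constructor
      intro v
      by_cases hmem : v.1 ∈ LinearMap.range B.mulVecLin
      · exact h1 ((rank_skewExt_mem B v.1 hB h2 hmem) ▸ v.2)
      · exact hh ((rank_skewExt_notMem B v.1 hB hmem) ▸ v.2)

end Counting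

section CountStep
variable {F : Type} [Field F] [Fintype F] {ι : Type} [Fintype ι] [DecidableEq ι]

lemma count_step (h2 : (2 : F) ≠ 0) (r : ℕ) :
    Nat.card {A : Matrix (ι ⊕ Fin 1) (ι ⊕ Fin 1) F // Aᵀ = -A ∧ A.rank = r}
      = (Fintype.card F) ^ r * Nat.card {B : Matrix ι ι F // Bᵀ = -B ∧ B.rank = r}
        + (if 2 ≤ r then
            ((Fintype.card F) ^ (Fintype.card ι) - (Fintype.card F) ^ (r - 2))
              * Nat.card {B : Matrix ι ι F // Bᵀ = -B ∧ B.rank = r - 2}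
          else 0) := by
  classical
  set q := Fintype.card F with hq
  -- step 1 : the subtype is equivalent to pairs
  have Ψ : {A : Matrix (ι ⊕ Fin 1) (ι ⊕ Fin 1) F // Aᵀ = -A ∧ A.rank = r}
      ≃ {p : {B : Matrix ι ι F // Bᵀ = -B} × (ι → F) // (skewExt p.1.1 p.2).rank = r} :=
    { toFun := fun A => ⟨(⟨Matrix.of fun i j => A.1 (Sum.inl i) (Sum.inl j),
        skew_sub_skew A.1 A.2.1⟩, fun i => A.1 (Sum.inl i) (Sum.inr 0)), by
          rw [skew_reconstruct A.1 A.2.1 h2]; exact A.2.2⟩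
      invFun := fun p => ⟨skewExt p.1.1.1 p.1.2,
        skewExt_transpose p.1.1.1 p.1.2 p.1.1.2, p.2⟩
      left_inv := fun A => Subtype.ext (skew_reconstruct A.1 A.2.1 h2)
      right_inv := fun p => rfl }
  rw [Nat.card_congr Ψ,
    Nat.card_congr (Equiv.subtypeProdEquivSigmaSubtype
      (fun (B : {B : Matrix ι ι F // Bᵀ = -B}) (v : ι → F) => (skewExt B.1 v).rank = r)),
    Nat.card_eq_fintype_card, Fintype.card_sigma]
  have hterm : ∀ B : {B : Matrix ι ι F // Bᵀ = -B},
      Fintype.card {v : ι → F // (skewExt B.1 v).rank = r}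
        = (if B.1.rank = r then q ^ r else 0)
          + (if B.1.rank + 2 = r then q ^ (Fintype.card ι) - q ^ (r - 2) else 0) := by
    intro B
    rw [← Nat.card_eq_fintype_card, fiber_count B.1 B.2 h2 r]
    by_cases h1 : B.1.rank = r
    · rw [if_pos h1, if_pos h1, if_neg (by omega), add_zero]
    · rw [if_neg h1, if_neg h1, zero_add]
  rw [Finset.sum_congr rfl (fun B _ => hterm B), Finset.sum_add_distrib]
  congr 1
  · rw [Finset.sum_ite, Finset.sum_const, Finset.sum_const_zero, add_zero, smul_eq_mul, mul_comm]
    congr 1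
    rw [← Fintype.card_subtype, ← Nat.card_eq_fintype_card]
    apply Nat.card_congr
    exact (Equiv.subtypeSubtypeEquivSubtypeInter (fun B : Matrix ι ι F => Bᵀ = -B)
      (fun B => B.rank = r))
  · by_cases h2r : 2 ≤ r
    · rw [if_pos h2r, Finset.sum_ite, Finset.sum_const, Finset.sum_const_zero, add_zero,
        smul_eq_mul, mul_comm]
      congr 1
      rw [← Fintype.card_subtype, ← Nat.card_eq_fintype_card]
      apply Nat.card_congr
      have : ∀ B : {B : Matrix ι ι F // Bᵀ = -B}, B.1.rank + 2 = r ↔ B.1.rank = r - 2 := by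
        intro B; omega
      exact (Equiv.subtypeEquivRight this).trans
        (Equiv.subtypeSubtypeEquivSubtypeInter (fun B : Matrix ι ι F => Bᵀ = -B)
          (fun B => B.rank = r - 2))
    · rw [if_neg h2r]
      apply Finset.sum_eq_zero
      intro B _
      rw [if_neg (by omega)]

end CountStep

section CountAll
variable {F : Type} [Field F] [Fintype F]

theorem count_all (h2 : (2 : F) ≠ 0) (n r : ℕ) :
    Nat.card {A : Matrix (Fin n) (Fin n) F // Aᵀ = -A ∧ A.rank = r}
      = skf (Fintype.card F) n r := by
  classical
  induction n generalizing r with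
  | zero =>
      have hrank : ∀ A : Matrix (Fin 0) (Fin 0) F, A.rank = 0 := by
        intro A
        have := Matrix.rank_le_card_width A
        simpa using this
      have hskew : ∀ A : Matrix (Fin 0) (Fin 0) F, Aᵀ = -A := by
        intro A; funext i j; exact absurd i.2 (by omega)
      cases r with
      | zero =>
          rw [show skf (Fintype.card F) 0 0 = 1 from rfl]
          rw [Nat.card_eq_fintype_card]
          rw [Fintype.card_eq_one_iff]
          refine ⟨⟨0, hskew 0, hrank 0⟩, ?_⟩
          rintro ⟨A, hA⟩
          apply Subtype.ext
          funext i j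
          exact absurd i.2 (by omega)
      | succ r =>
          rw [show skf (Fintype.card F) 0 (r + 1) = 0 from rfl, Nat.card_eq_zero]
          left
          exact ⟨fun A => by have := A.2.2; rw [hrank A.1] at this; omega⟩
  | succ n ih =>
      have e : Fin n ⊕ Fin 1 ≃ Fin (n + 1) := finSumFinEquiv
      have hre : ∀ A : Matrix (Fin (n+1)) (Fin (n+1)) F,
          (Aᵀ = -A ∧ A.rank = r) ↔
          ((Matrix.reindex e.symm e.symm A)ᵀ = -(Matrix.reindex e.symm e.symm A)
            ∧ (Matrix.reindex e.symm e.symm A).rank = r) := by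
        intro A
        have h1 : (Matrix.reindex e.symm e.symm A)ᵀ = Matrix.reindex e.symm e.symm Aᵀ :=
          Matrix.transpose_reindex _ _ _
        have h2' : -(Matrix.reindex e.symm e.symm A) = Matrix.reindex e.symm e.symm (-A) := by
          ext i j; simp
        have h3 : (Matrix.reindex e.symm e.symm A).rank = A.rank := Matrix.rank_reindex _ _ _
        rw [h1, h2', h3, (Matrix.reindex e.symm e.symm).injective.eq_iff.symm]
      have Φ : {A : Matrix (Fin (n+1)) (Fin (n+1)) F // Aᵀ = -A ∧ A.rank = r}
          ≃ {A : Matrix (Fin n ⊕ Fin 1) (Fin n ⊕ Fin 1) F // Aᵀ = -A ∧ A.rank = r} :=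
        (Equiv.subtypeEquiv (Matrix.reindex e.symm e.symm) hre)
      rw [Nat.card_congr Φ, count_step h2 r, ih r]
      rw [show skf (Fintype.card F) (n+1) r
          = (Fintype.card F) ^ r * skf (Fintype.card F) n r
            + (if 2 ≤ r then ((Fintype.card F) ^ n - (Fintype.card F) ^ (r - 2))
                * skf (Fintype.card F) n (r - 2) else 0) from rfl]
      congr 1
      by_cases h2r : 2 ≤ r
      · rw [if_pos h2r, if_pos h2r, ih (r - 2), Fintype.card_fin]
      · rw [if_neg h2r, if_neg h2r]

end CountAll

lemma two_mul_div_aux (s : ℕ) : 2 * s * (2 * s - 2) / 4 = s * (s - 1) := by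
  cases s with
  | zero => rfl
  | succ t =>
      have h1 : 2 * (t+1) - 2 = 2 * t := by omega
      have h2 : (t+1) - 1 = t := by omega
      rw [h1, h2, show 2 * (t+1) * (2*t) = 4 * ((t+1) * t) by ring]
      exact Nat.mul_div_cancel_left _ (by norm_num)

theorem stmt11 (F : Type) [Field F] [Fintype F] (q : ℕ) (hq : Fintype.card F = q)
    (hodd : Odd q) (n r : ℕ) (hr : r ≤ n) :
    (Odd r →
      Nat.card {A : Matrix (Fin n) (Fin n) F // Aᵀ = -A ∧ A.rank = r} = 0) ∧
    (Even r →
      (Nat.card {A : Matrix (Fin n) (Fin n) F // Aᵀ = -A ∧ A.rank = r} : ℚ) =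
        (q : ℚ) ^ (r * (r - 2) / 4) * ((q : ℚ) - 1) ^ (r / 2) * (qFact q n : ℚ) /
          ((qFact q (n - r) : ℚ) * (qDFact q r : ℚ))) := by
  classical
  subst hq
  have hq2 : 2 ≤ Fintype.card F := Fintype.one_lt_card
  have hchar : ringChar F ≠ 2 := by
    intro h
    have := FiniteField.even_card_of_char_two h
    rw [Nat.odd_iff] at hodd
    omega
  have h2 : (2 : F) ≠ 0 := Ring.two_ne_zero hchar
  constructor
  · intro hoddr
    rw [count_all h2 n r]
    exact skf_odd _ n r hoddr
  · intro hevenr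
    obtain ⟨s, hs⟩ : ∃ s, r = 2 * s := by
      rw [Nat.even_iff] at hevenr; exact ⟨r / 2, by omega⟩
    subst hs
    rw [count_all h2 n (2 * s), skf_formula hq2 n s (by omega),
      two_mul_div_aux s, Nat.mul_div_cancel_left s (by norm_num : 0 < 2)]
end

section
/- Let q be odd, let B be an n×n symmetric matrix over F_q of rank r ≥ 1, and let δ ∈ F_q^× and M ∈ GL_n(F_q) be such that B = M·diag(1^{r−1}, δ, 0^{n−r})·Mᵀ. For v ∈ F_q^n, let A_v be the (n+1)×(n+1) symmetric matrix with (1,1)-entry 0, first row (0, v), first column (0, v)ᵀ, and lower-right n×n block B. Then, among the q^n matrices A_v: exactly N_δ(r) have rank r, exactly q^r − N_δ(r) have rank r+1, and exactly q^n − q^r have rank r+2. -/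
open Matrix

/-- `N_δ(m)`: the number of `x ∈ F^m` with `x₁² + ⋯ + x_{m-1}² + δ·x_m² = 0`. -/
noncomputable def Ndelta (F : Type) [Field F] [Fintype F] (δ : F) (m : ℕ) : ℕ :=
  Nat.card {x : Fin m → F //
    ∑ i : Fin m, (if (i : ℕ) = m - 1 then δ else 1) * x i ^ 2 = 0}

/-- The diagonal matrix `diag(1^a, c, 0^(n-a-1))`. -/
def diagSeq (F : Type) [Field F] (n a : ℕ) (c : F) : Matrix (Fin n) (Fin n) F :=
  Matrix.diagonal (fun i => if (i : ℕ) < a then 1 else if (i : ℕ) = a then c else 0)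

/-- The `(n+1) × (n+1)` matrix with `(1,1)`-entry `0`, first row `(0, v)`,
first column `(0, v)ᵀ`, and lower-right `n × n` block `B`. -/
def border {F : Type} [Field F] {n : ℕ} (B : Matrix (Fin n) (Fin n) F)
    (v : Fin n → F) : Matrix (Fin (n + 1)) (Fin (n + 1)) F :=
  Matrix.of (Fin.cons (Fin.cons 0 v) (fun i => Fin.cons (v i) (B i)))

/-!
Write `diagSeq F n (r - 1) δ = diagonal d`. Conjugating by `1 ⊕ M` turns `border B (M w)` into
`border (diagonal d) w`, so it suffices to count vectors `w`.

If `w` vanishes wherever `d` does, clearing the first row and column against `diagonal d`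
makes `border (diagonal d) w` congruent to `diagonal (-Q w, d)` with `Q w = ∑ wᵢ² / dᵢ`, of
rank `r` or `r + 1` according as `Q w = 0`; the substitution `xᵢ = wᵢ / dᵢ` matches the `w`
with `Q w = 0` with the solutions counted by `N_δ(r)`.

If `w j ≠ 0` while `d j = 0`, row `j` of `border (diagonal d) w` is `(w j, 0, …, 0)`; clearing
the first column (and symmetrically the first row) with it leaves, up to a row swap, a diagonal
matrix with two more nonzero entries than `diagonal d`, hence rank `r + 2`.
-/

namespace Matrix

variable {R : Type*} {n : ℕ}

/-- The block matrix `!![a, uᵀ; v, B]`. -/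
def bordered (a : R) (u v : Fin n → R) (B : Matrix (Fin n) (Fin n) R) :
    Matrix (Fin (n + 1)) (Fin (n + 1)) R :=
  of (Fin.cons (Fin.cons a u) fun i => Fin.cons (v i) (B i))

section Entries
variable (a : R) (u v : Fin n → R) (B : Matrix (Fin n) (Fin n) R) (i j : Fin n)

@[simp] lemma bordered_zero_zero : bordered a u v B 0 0 = a := rfl
@[simp] lemma bordered_zero_succ : bordered a u v B 0 j.succ = u j := rfl
@[simp] lemma bordered_succ_zero : bordered a u v B i.succ 0 = v i := by simp [bordered]
@[simp] lemma bordered_succ_succ : bordered a u v B i.succ j.succ = B i j := by simp [bordered]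

end Entries

lemma transpose_bordered (a : R) (u v : Fin n → R) (B : Matrix (Fin n) (Fin n) R) :
    (bordered a u v B)ᵀ = bordered a v u Bᵀ := by
  ext i j
  refine Fin.cases ?_ (fun i => ?_) i <;> refine Fin.cases ?_ (fun j => ?_) j <;> simp

lemma bordered_diagonal [Zero R] (a : R) (d : Fin n → R) :
    bordered a 0 0 (diagonal d) = diagonal (Fin.cons a d) := by
  ext i j
  refine Fin.cases ?_ (fun i => ?_) i <;> refine Fin.cases ?_ (fun j => ?_) j <;>
    simp [diagonal_apply, Fin.succ_ne_zero, (Fin.succ_ne_zero _).symm]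

lemma bordered_mul_bordered [CommSemiring R] (a a' : R) (u v u' v' : Fin n → R)
    (B B' : Matrix (Fin n) (Fin n) R) :
    bordered a u v B * bordered a' u' v' B' =
      bordered (a * a' + u ⬝ᵥ v') (a • u' + u ᵥ* B') (a' • v + B *ᵥ v')
        (vecMulVec v u' + B * B') := by
  ext i j
  refine Fin.cases ?_ (fun i => ?_) i <;> refine Fin.cases ?_ (fun j => ?_) j <;>
    simp [mul_apply, Fin.sum_univ_succ, dotProduct, vecMul, mulVec, vecMulVec, mul_comm]

lemma det_bordered_zero_left [CommRing R] (a : R) (u : Fin n → R)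
    (B : Matrix (Fin n) (Fin n) R) :
    (bordered a u 0 B).det = a * B.det := by
  rw [det_succ_column_zero, Fin.sum_univ_succ]
  simp [submatrix]
  rfl

lemma isUnit_bordered_one [CommRing R] (u : Fin n → R) {B : Matrix (Fin n) (Fin n) R}
    (hB : IsUnit B) : IsUnit (bordered 1 u 0 B) := by
  rw [isUnit_iff_isUnit_det, det_bordered_zero_left, one_mul, ← isUnit_iff_isUnit_det]
  exact hB

lemma rank_mul_mul_transpose_of_isUnit [CommRing R] {m : Type*} [Fintype m] [DecidableEq m]
    {P : Matrix m m R} (hP : IsUnit P) (A : Matrix m m R) : (P * A * Pᵀ).rank = A.rank := by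
  rw [isUnit_iff_isUnit_det] at hP
  rw [rank_mul_eq_left_of_isUnit_det _ _ (by rwa [det_transpose]),
    rank_mul_eq_right_of_isUnit_det _ _ hP]

lemma rank_diagonal_cons {F : Type*} [Field F] [DecidableEq F] (a : F) (d : Fin n → F) :
    (diagonal (Fin.cons a d : Fin (n + 1) → F)).rank =
      (diagonal d).rank + if a = 0 then 0 else 1 := by
  simp only [rank_diagonal, Fintype.card_subtype, Finset.card_filter, Fin.sum_univ_succ,
    Fin.cons_zero, Fin.cons_succ]
  split_ifs <;> simp_all [add_comm]

lemma rank_diagonal_update_of_eq_zero {F : Type*} [Field F] {d : Fin n → F} {j : Fin n}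
    (hj : d j = 0) {c : F} (hc : c ≠ 0) :
    (diagonal (Function.update d j c)).rank = (diagonal d).rank + 1 := by
  classical
  simp only [rank_diagonal, Fintype.card_subtype]
  rw [← Finset.card_insert_of_notMem (s := Finset.univ.filter fun i => d i ≠ 0) (a := j)
    (by simp [hj])]
  congr 1
  ext i
  by_cases hi : i = j <;> simp [hi, hc]

/-- `wᵀ D⁺ w` for `D = diagonal d`: as `x / 0 = 0`, only indices with `d i ≠ 0` contribute. -/
def invDiagForm {K : Type*} [Field K] (d w : Fin n → K) : K := ∑ i, w i ^ 2 / d i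

section Border

variable {F : Type} [Field F]

lemma border_eq_bordered (B : Matrix (Fin n) (Fin n) F) (v : Fin n → F) :
    border B v = bordered 0 v v B := rfl

lemma bordered_one_mul_border_mul_transpose (M D : Matrix (Fin n) (Fin n) F) (w : Fin n → F) :
    bordered 1 0 0 M * border D w * (bordered 1 0 0 M)ᵀ = border (M * D * Mᵀ) (M *ᵥ w) := by
  simp [border_eq_bordered, transpose_bordered, bordered_mul_bordered, vecMul_transpose]

lemma card_rank_border_congr {M : Matrix (Fin n) (Fin n) F} (hM : IsUnit M)
    (D : Matrix (Fin n) (Fin n) F) (P : ℕ → Prop) :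
    Nat.card {v // P (border (M * D * Mᵀ) v).rank} = Nat.card {w // P (border D w).rank} := by
  refine (Nat.card_congr ((Equiv.ofBijective _ ⟨mulVec_injective_iff_isUnit.mpr hM,
    mulVec_surjective_iff_isUnit.mpr hM⟩).subtypeEquiv fun w => ?_)).symm
  change P _ ↔ P (border _ (M *ᵥ w)).rank
  rw [← bordered_one_mul_border_mul_transpose,
    rank_mul_mul_transpose_of_isUnit (isUnit_bordered_one 0 hM)]

lemma rank_border_diagonal_of_support_subset {d w : Fin n → F} (hw : w.support ⊆ d.support) :
    (border (diagonal d) w).rank = (diagonal (Fin.cons (-invDiagForm d w) d)).rank := by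
  set c : Fin n → F := fun i => -(w i / d i)
  have hcD : c ᵥ* diagonal d = -w := funext fun i => by
    simp [vecMul_diagonal, c, div_mul_cancel_of_imp fun h =>
      Function.support_subset_iff'.mp hw i (Function.notMem_support.mpr h)]
  have hDc : diagonal d *ᵥ c = -w := by rw [← vecMul_transpose, diagonal_transpose, hcD]
  have hcw : c ⬝ᵥ w = -invDiagForm d w := by
    simp only [dotProduct, invDiagForm, c, ← Finset.sum_neg_distrib]
    exact Finset.sum_congr rfl fun i _ => by ring
  have hconj : bordered 1 c 0 1 * border (diagonal d) w * (bordered 1 c 0 1)ᵀ =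
      bordered (-invDiagForm d w) 0 0 (diagonal d) := by
    simp [border_eq_bordered, transpose_bordered, bordered_mul_bordered, hcD, hDc, hcw]
  rw [← rank_mul_mul_transpose_of_isUnit (isUnit_bordered_one c isUnit_one), hconj,
    bordered_diagonal]

lemma rank_border_diagonal_single {d : Fin n → F} {j : Fin n} (hj : d j = 0) {c : F}
    (hc : c ≠ 0) : (border (diagonal d) (Pi.single j c)).rank = (diagonal d).rank + 2 := by
  classical
  have hswap : (border (diagonal d) (Pi.single j c)).submatrix (Equiv.swap 0 j.succ)
      (Equiv.refl _) = diagonal (Fin.cons c (Function.update d j c)) := by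
    ext i k
    refine Fin.cases ?_ (fun i => ?_) i <;> refine Fin.cases ?_ (fun k => ?_) k
    · simp [border_eq_bordered, Function.update_apply]
    · simp [border_eq_bordered, diagonal_apply, hj, (Fin.succ_ne_zero k).symm]
    · by_cases hi : i = j
      · simp [border_eq_bordered, hi]
      · simp [border_eq_bordered, hi, Equiv.swap_apply_of_ne_of_ne, Fin.succ_ne_zero]
    · by_cases hi : i = j
      · simp [border_eq_bordered, hi, diagonal_apply, Pi.single_apply, eq_comm]
      · simp [border_eq_bordered, hi, Equiv.swap_apply_of_ne_of_ne, Fin.succ_ne_zero,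
          diagonal_apply]
  rw [← rank_submatrix _ (Equiv.swap 0 j.succ) (Equiv.refl _), hswap, rank_diagonal_cons,
    rank_diagonal_update_of_eq_zero hj hc, if_neg hc]

lemma exists_isUnit_conj_diagonal_mulVec_eq_single {d w : Fin n → F} {j : Fin n} (hj : d j = 0)
    (hwj : w j ≠ 0) : ∃ N : Matrix (Fin n) (Fin n) F, IsUnit N ∧
      N * diagonal d * Nᵀ = diagonal d ∧ N *ᵥ w = Pi.single j (w j) := by
  set u := (w j)⁻¹ • (w - Pi.single j (w j))
  set C := vecMulVec u (Pi.single j 1)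
  have hCC : C * C = 0 := by simp [C, vecMulVec_mul_vecMulVec, u]
  have hCD : C * diagonal d = 0 := by simp [C, vecMulVec_mul, hj]
  refine ⟨1 - C, IsUnit.of_mul_eq_one (1 + C) ?_, ?_, ?_⟩
  · rw [sub_mul, one_mul, mul_add, mul_one, hCC]; abel
  · rw [sub_mul, one_mul, hCD, sub_zero, transpose_sub, transpose_one, mul_sub, mul_one,
      ← diagonal_transpose d, ← transpose_mul, hCD, diagonal_transpose, transpose_zero,
      sub_zero]
  · rw [sub_mulVec, one_mulVec, vecMulVec_mulVec, single_dotProduct, one_mul, op_smul_eq_smul,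
      smul_smul, mul_inv_cancel₀ hwj, one_smul, sub_sub_cancel]

lemma rank_border_diagonal_of_eq_zero {d w : Fin n → F} {j : Fin n} (hj : d j = 0)
    (hwj : w j ≠ 0) : (border (diagonal d) w).rank = (diagonal d).rank + 2 := by
  obtain ⟨N, hN, hND, hNw⟩ := exists_isUnit_conj_diagonal_mulVec_eq_single hj hwj
  rw [← rank_mul_mul_transpose_of_isUnit (isUnit_bordered_one 0 hN),
    bordered_one_mul_border_mul_transpose, hND, hNw, rank_border_diagonal_single hj hwj]

open Classical in
lemma rank_border_diagonal (d w : Fin n → F) :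
    (border (diagonal d) w).rank = (diagonal d).rank +
      if w.support ⊆ d.support then (if invDiagForm d w = 0 then 0 else 1) else 2 := by
  split_ifs with hS hQ
  · rw [rank_border_diagonal_of_support_subset hS, rank_diagonal_cons,
      if_pos (neg_eq_zero.mpr hQ)]
  · rw [rank_border_diagonal_of_support_subset hS, rank_diagonal_cons,
      if_neg (neg_ne_zero.mpr hQ)]
  · obtain ⟨j, hwj, hj⟩ := Set.not_subset.mp hS
    exact rank_border_diagonal_of_eq_zero (Function.notMem_support.mp hj) hwj

lemma rank_border_diagonal_eq_rank_iff {d w : Fin n → F} :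
    (border (diagonal d) w).rank = (diagonal d).rank ↔
      w.support ⊆ d.support ∧ invDiagForm d w = 0 := by
  rw [rank_border_diagonal]; split_ifs <;> simp_all

lemma rank_border_diagonal_eq_rank_add_one_iff {d w : Fin n → F} :
    (border (diagonal d) w).rank = (diagonal d).rank + 1 ↔
      w.support ⊆ d.support ∧ ¬invDiagForm d w = 0 := by
  rw [rank_border_diagonal]; split_ifs <;> simp_all

lemma rank_border_diagonal_eq_rank_add_two_iff {d w : Fin n → F} :
    (border (diagonal d) w).rank = (diagonal d).rank + 2 ↔ ¬w.support ⊆ d.support := by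
  rw [rank_border_diagonal]; split_ifs <;> simp_all

end Border

section Supported

variable {F : Type*} [Field F] {r k : ℕ} {d : Fin (r + k) → F}

def diagSupportEquiv (hd : ∀ y, d (Fin.castAdd k y) ≠ 0) (hd0 : ∀ z, d (Fin.natAdd r z) = 0) :
    {w : Fin (r + k) → F // w.support ⊆ d.support} ≃ (Fin r → F) where
  toFun w y := w.1 (Fin.castAdd k y) / d (Fin.castAdd k y)
  invFun x := ⟨Fin.append (fun y => x y * d (Fin.castAdd k y)) 0, fun i hi => by
    induction i using Fin.addCases with
    | left y => exact hd y
    | right z => simp at hi⟩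
  left_inv w := by
    ext i
    refine Fin.addCases (fun y => ?_) (fun z => ?_) i
    · simp [div_mul_cancel₀ _ (hd y)]
    · simp [Function.support_subset_iff'.mp w.2 _ (Function.notMem_support.mpr (hd0 z))]
  right_inv x := by
    ext y
    simp [mul_div_cancel_right₀ _ (hd y)]

lemma invDiagForm_eq_sum_diagSupportEquiv (hd : ∀ y, d (Fin.castAdd k y) ≠ 0)
    (hd0 : ∀ z, d (Fin.natAdd r z) = 0) (w : {w : Fin (r + k) → F // w.support ⊆ d.support}) :
    invDiagForm d w.1 = ∑ y, d (Fin.castAdd k y) * diagSupportEquiv hd hd0 w y ^ 2 := by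
  rw [invDiagForm, Fin.sum_univ_add]
  simp only [hd0, div_zero, Finset.sum_const_zero, add_zero]
  refine Finset.sum_congr rfl fun y _ => ?_
  simp only [diagSupportEquiv, Equiv.coe_fn_mk]
  field_simp [hd y]

lemma card_support_subset_and (hd : ∀ y, d (Fin.castAdd k y) ≠ 0)
    (hd0 : ∀ z, d (Fin.natAdd r z) = 0) (p : F → Prop) :
    Nat.card {w // w.support ⊆ d.support ∧ p (invDiagForm d w)} =
      Nat.card {x : Fin r → F // p (∑ y, d (Fin.castAdd k y) * x y ^ 2)} :=
  Nat.card_congr <| (Equiv.subtypeSubtypeEquivSubtypeInter _ _).symm.trans <|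
    (diagSupportEquiv hd hd0).subtypeEquiv fun w => by
      rw [invDiagForm_eq_sum_diagSupportEquiv hd hd0]

end Supported

end Matrix

lemma exists_diagSeq_eq_diagonal {F : Type} [Field F] {r k : ℕ} (hr : 1 ≤ r) (δ : F) :
    ∃ d : Fin (r + k) → F, diagSeq F (r + k) (r - 1) δ = diagonal d ∧
      (∀ y, d (Fin.castAdd k y) = if (y : ℕ) = r - 1 then δ else 1) ∧
      ∀ z, d (Fin.natAdd r z) = 0 := by
  refine ⟨_, rfl, fun y => ?_, fun z => ?_⟩
  · have := y.2
    simp only [Fin.val_castAdd]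
    split_ifs <;> first | rfl | omega
  · simp only [Fin.val_natAdd]
    rw [if_neg (by omega), if_neg (by omega)]

lemma Nat.cast_card_subtype_not {α : Type*} [Finite α] (p : α → Prop) :
    (Nat.card {x // ¬ p x} : ℤ) = Nat.card α - Nat.card {x // p x} := by
  classical
  rw [← Nat.card_congr (Equiv.sumCompl p), Nat.card_sum]
  push_cast
  ring

theorem stmt12_general (F : Type) [Field F] [Fintype F] (q : ℕ) (hq : Fintype.card F = q)
    (n r : ℕ) (hr : 1 ≤ r)
    (B : Matrix (Fin n) (Fin n) F) (hrank : B.rank = r)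
    (δ : F) (hδ : δ ≠ 0) (M : Matrix (Fin n) (Fin n) F) (hM : IsUnit M)
    (hfact : B = M * diagSeq F n (r - 1) δ * Mᵀ) :
    Nat.card {v : Fin n → F // (border B v).rank = r} = Ndelta F δ r ∧
    (Nat.card {v : Fin n → F // (border B v).rank = r + 1} : ℤ) =
      (q : ℤ) ^ r - (Ndelta F δ r : ℤ) ∧
    (Nat.card {v : Fin n → F // (border B v).rank = r + 2} : ℤ) =
      (q : ℤ) ^ n - (q : ℤ) ^ r := by
  obtain ⟨k, rfl⟩ := Nat.exists_eq_add_of_le (hrank ▸ B.rank_le_width)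
  obtain ⟨d, hdiag, hd, hd0⟩ := exists_diagSeq_eq_diagonal (k := k) hr δ
  rw [hdiag] at hfact
  have hdne : ∀ y, d (Fin.castAdd k y) ≠ 0 := fun y => by rw [hd]; split_ifs <;> simp [hδ]
  have hD : (diagonal d).rank = r := by
    rwa [hfact, rank_mul_mul_transpose_of_isUnit hM] at hrank
  have hcard (j : ℕ) (P : (Fin (r + k) → F) → Prop)
      (hP : ∀ w, (border (diagonal d) w).rank = (diagonal d).rank + j ↔ P w) :
      Nat.card {v // (border B v).rank = r + j} = Nat.card {w // P w} :=
    (hfact ▸ card_rank_border_congr hM (diagonal d) (· = r + j)).trans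
      (Nat.card_congr (Equiv.subtypeEquivRight fun w => by rw [← hP w, hD]))
  have hform (p : F → Prop) :
      Nat.card {w // w.support ⊆ d.support ∧ p (invDiagForm d w)} =
        Nat.card {x : Fin r → F //
          p (∑ y : Fin r, (if (y : ℕ) = r - 1 then δ else 1) * x y ^ 2)} := by
    simpa only [hd] using card_support_subset_and hdne hd0 p
  have hpow (m : ℕ) : Nat.card (Fin m → F) = q ^ m := by
    rw [Nat.card_fun, Nat.card_eq_fintype_card, hq, Nat.card_fin]
  refine ⟨(hcard 0 _ fun _ => rank_border_diagonal_eq_rank_iff).trans (hform (· = 0)), ?_, ?_⟩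
  · rw [hcard 1 _ fun _ => rank_border_diagonal_eq_rank_add_one_iff, hform (¬ · = 0),
      Nat.cast_card_subtype_not, hpow]
    rfl
  · rw [hcard 2 _ fun _ => rank_border_diagonal_eq_rank_add_two_iff, Nat.cast_card_subtype_not,
      Nat.card_congr (diagSupportEquiv hdne hd0), hpow, hpow]
    push_cast; rfl

theorem stmt12 (F : Type) [Field F] [Fintype F] (q : ℕ) (hq : Fintype.card F = q)
    (hodd : Odd q) (n r : ℕ) (hr : 1 ≤ r)
    (B : Matrix (Fin n) (Fin n) F) (hB : B.IsSymm) (hrank : B.rank = r)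
    (δ : F) (hδ : δ ≠ 0) (M : Matrix (Fin n) (Fin n) F) (hM : IsUnit M)
    (hfact : B = M * diagSeq F n (r - 1) δ * Mᵀ) :
    Nat.card {v : Fin n → F // (border B v).rank = r} = Ndelta F δ r ∧
    (Nat.card {v : Fin n → F // (border B v).rank = r + 1} : ℤ) =
      (q : ℤ) ^ r - (Ndelta F δ r : ℤ) ∧
    (Nat.card {v : Fin n → F // (border B v).rank = r + 2} : ℤ) =
      (q : ℤ) ^ n - (q : ℤ) ^ r :=
  stmt12_general F q hq n r hr B hrank δ hδ M hM hfact
end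

section
/- Let q be odd, m ≥ 1, and 0 ≤ k ≤ 2m. Among the invertible (2m+1)×(2m+1) symmetric matrices over F_q whose first k+1 diagonal entries are zero, the number whose determinant is a square in F_q^× equals the number whose determinant is a non-square in F_q^×; that is, symz^+(2m+1, k+1) = (1/2)·symz(2m+1, k+1). -/
open Matrix

theorem stmt17 (F : Type) [Field F] [Fintype F] (q : ℕ) (hq : Fintype.card F = q)
    (hodd : Odd q) (m k : ℕ) (hm : 1 ≤ m) (hk : k ≤ 2 * m) :
    2 * Nat.card {A : Matrix (Fin (2 * m + 1)) (Fin (2 * m + 1)) F //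
        A.IsSymm ∧ IsUnit A ∧
        (∀ i : Fin (2 * m + 1), (i : ℕ) < k + 1 → A i i = 0) ∧ IsSquare A.det} =
      Nat.card {A : Matrix (Fin (2 * m + 1)) (Fin (2 * m + 1)) F //
        A.IsSymm ∧ IsUnit A ∧
        ∀ i : Fin (2 * m + 1), (i : ℕ) < k + 1 → A i i = 0} := by
  classical
  -- ringChar F ≠ 2
  have hchar : ringChar F ≠ 2 := by
    intro h
    have := FiniteField.even_card_of_char_two h
    obtain ⟨t, ht⟩ := hodd
    rw [hq] at this
    omega
  obtain ⟨c, hc⟩ := FiniteField.exists_nonsquare (F := F) hchar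
  have hc0 : c ≠ 0 := by rintro rfl; exact hc ⟨0, by simp⟩
  set n := 2 * m + 1 with hn
  have hcardn : Fintype.card (Fin n) = n := Fintype.card_fin n
  -- key: for d ≠ 0, IsSquare (c ^ n * d) ↔ ¬ IsSquare d
  have key : ∀ d : F, d ≠ 0 → (IsSquare (c ^ n * d) ↔ ¬ IsSquare d) := by
    intro d hd
    have hqc : quadraticChar F c = -1 := quadraticChar_neg_one_iff_not_isSquare.mpr hc
    have hmul : quadraticChar F (c ^ n * d) = - quadraticChar F d := by
      rw [_root_.map_mul, map_pow, hqc, Odd.neg_one_pow ⟨m, by omega⟩, neg_one_mul]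
    constructor
    · intro hs hsd
      have h1 : quadraticChar F d = 1 := (quadraticChar_one_iff_isSquare hd).mpr hsd
      have h2 : quadraticChar F (c ^ n * d) = 1 :=
        (quadraticChar_one_iff_isSquare (by
          exact mul_ne_zero (pow_ne_zero _ hc0) hd)).mpr hs
      rw [hmul, h1] at h2
      norm_num at h2
    · intro hsd
      by_contra hns
      have h1 : quadraticChar F (c ^ n * d) = -1 :=
        quadraticChar_neg_one_iff_not_isSquare.mpr hns
      have h2 : quadraticChar F d = -1 :=
        quadraticChar_neg_one_iff_not_isSquare.mpr hsd
      rw [hmul, h2] at h1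
      norm_num at h1
  -- abbreviations
  set P : Matrix (Fin n) (Fin n) F → Prop := fun A =>
    A.IsSymm ∧ IsUnit A ∧ ∀ i : Fin n, (i : ℕ) < k + 1 → A i i = 0 with hP
  -- scaling by c preserves P and flips squareness
  have hPsmul : ∀ (a : F), a ≠ 0 → ∀ A, P A → P (a • A) := by
    rintro a ha A ⟨h1, h2, h3⟩
    refine ⟨?_, ?_, ?_⟩
    · unfold Matrix.IsSymm at *
      rw [transpose_smul, h1]
    · rw [Matrix.isUnit_iff_isUnit_det] at h2 ⊢
      rw [det_smul, hcardn]
      exact (IsUnit.mk0 _ (pow_ne_zero _ ha)).mul h2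
    · intro i hi
      simp [h3 i hi]
  have hdetne : ∀ A, P A → A.det ≠ 0 := fun A hA =>
    (Matrix.isUnit_iff_isUnit_det A).mp hA.2.1 |>.ne_zero
  -- equivalence between square-det and nonsquare-det subtypes
  have e : {A : Matrix (Fin n) (Fin n) F // P A ∧ IsSquare A.det} ≃
      {A : Matrix (Fin n) (Fin n) F // P A ∧ ¬ IsSquare A.det} := by
    refine ⟨fun A => ⟨c • A.1, hPsmul c hc0 A.1 A.2.1, ?_⟩,
      fun A => ⟨c⁻¹ • A.1, hPsmul c⁻¹ (inv_ne_zero hc0) A.1 A.2.1, ?_⟩, ?_, ?_⟩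
    · rw [det_smul, hcardn]
      rw [not_iff_not.mpr (key A.1.det (hdetne A.1 A.2.1)), not_not]
      exact A.2.2
    · obtain ⟨A, hPA, hA⟩ := A
      have hd := hdetne A hPA
      have : A = c • (c⁻¹ • A) := by rw [smul_smul, mul_inv_cancel₀ hc0, one_smul]
      by_contra hns
      apply hA
      rw [this, det_smul, hcardn]
      exact (key _ (by rw [det_smul, hcardn]; exact mul_ne_zero (pow_ne_zero _ (inv_ne_zero hc0)) hd)).mpr hns
    · rintro ⟨A, hA⟩
      simp [smul_smul, inv_mul_cancel₀ hc0]
    · rintro ⟨A, hA⟩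
      simp [smul_smul, mul_inv_cancel₀ hc0]
  -- now count
  have hsplit : Nat.card {A : Matrix (Fin n) (Fin n) F // P A} =
      Nat.card {A : Matrix (Fin n) (Fin n) F // P A ∧ IsSquare A.det} +
      Nat.card {A : Matrix (Fin n) (Fin n) F // P A ∧ ¬ IsSquare A.det} := by
    rw [← Nat.card_sum]
    apply Nat.card_congr
    exact (Equiv.sumCongr
      (Equiv.subtypeSubtypeEquivSubtypeInter P (fun A => IsSquare A.det)).symm
      (Equiv.subtypeSubtypeEquivSubtypeInter P (fun A => ¬ IsSquare A.det)).symm).trans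
      (Equiv.sumCompl (fun x : {A : Matrix (Fin n) (Fin n) F // P A} => IsSquare x.1.det)) |>.symm
  have hcongr : Nat.card {A : Matrix (Fin n) (Fin n) F // P A ∧ ¬ IsSquare A.det} =
      Nat.card {A : Matrix (Fin n) (Fin n) F // P A ∧ IsSquare A.det} :=
    Nat.card_congr e.symm
  have : Nat.card {A : Matrix (Fin n) (Fin n) F // P A ∧ IsSquare A.det} =
      Nat.card {A : Matrix (Fin n) (Fin n) F //
        A.IsSymm ∧ IsUnit A ∧ (∀ i : Fin n, (i : ℕ) < k + 1 → A i i = 0) ∧ IsSquare A.det} := by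
    apply Nat.card_congr
    exact Equiv.subtypeEquivRight (fun A => by rw [hP]; tauto)
  rw [← this]
  rw [hsplit, hcongr]
  ring
end

section
/- Fix integers m, n ≥ 1 and r ≥ 0, and fix a set S of positions, S ⊆ {(i,j) : 1 ≤ i ≤ m, 1 ≤ j ≤ n}. Let #T_q be the number of m×n matrices A over F_q of rank r with A_{ij} = 0 for all (i,j) ∈ S, and let #T_1 be the number of m×n matrices with entries in {0,1} having exactly r entries equal to 1, no two of which lie in the same row or column, and whose entries at all positions of S are 0. Then #T_q ≡ #T_1 · (q−1)^r (mod (q−1)^{r+1}). -/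
/-!
The torus `(Fˣ)^m × (Fˣ)^n` acts on matrices by rescaling rows and columns, preserving rank,
support and vanishing on `S`. Sort the matrices of `T_q` by their support `P`. If `P` is a partial
permutation of size `r` avoiding `S`, every matrix with support `P` lies in `T_q`, and there are
`(q - 1)^r` of them; these `P` are exactly the supports of the matrices in `T_1`. Otherwise a
matrix of rank `r` with support `P` has a nonzero `r × r` minor, hence a partial permutation
`M ⊆ P` of size `r`, and there is a cell `p₀ ∈ P \ M`. The torus maps onto the weights
`t_i s_j` of the `r + 1` cells of `M ∪ {p₀}`, and the kernel of this map contains the stabiliser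
of every matrix with support `P`, so all orbits in the fibre over `P` have size divisible by
`(q - 1)^(r + 1)`.
-/

open Finset Matrix

def IsPartialPerm {ι κ : Type*} (P : Finset (ι × κ)) : Prop :=
  Set.InjOn Prod.fst (P : Set (ι × κ)) ∧ Set.InjOn Prod.snd (P : Set (ι × κ))

theorem IsPartialPerm.exists_mul_eq_on_insert {ι κ G : Type*} [DecidableEq ι] [DecidableEq κ]
    [CommGroup G] {M : Finset (ι × κ)} (hM : IsPartialPerm M) {p₀ : ι × κ} (hp₀ : p₀ ∉ M)
    (g : ι × κ → G) :
    ∃ a : ι → G, ∃ b : κ → G, ∀ p ∈ insert p₀ M, a p.1 * b p.2 = g p := by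
  classical
  have : Nonempty (ι × κ) := ⟨p₀⟩
  -- If `p₀` shares its row with `s ∈ M`, the column of `p₀` carries the ratio `g p₀ / g s`.
  by_cases hrow : ∃ s ∈ M, s.1 = p₀.1
  · obtain ⟨s, hs, hs₁⟩ := hrow
    have hs₂ : s.2 ≠ p₀.2 := fun h => hp₀ (Prod.ext hs₁ h ▸ hs)
    let b : κ → G := Pi.mulSingle p₀.2 (g p₀ / g s)
    let a : ι → G := (fun p => g p / b p.2) ∘ Function.invFunOn Prod.fst M
    have ha : ∀ p ∈ M, a p.1 = g p / b p.2 := fun p hp => by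
      simp only [a, Function.comp_apply, hM.1.leftInvOn_invFunOn (mem_coe.mpr hp)]
    refine ⟨a, b, fun p hp => ?_⟩
    obtain rfl | hp := mem_insert.mp hp
    · rw [← hs₁, ha s hs]
      simp [b, Pi.mulSingle_eq_of_ne hs₂]
    · rw [ha p hp, div_mul_cancel]
  · push Not at hrow
    have hinj : Set.InjOn Prod.fst ((insert p₀ M : Finset _) : Set (ι × κ)) := by
      rw [coe_insert, Set.injOn_insert (mem_coe.not.mpr hp₀)]
      exact ⟨hM.1, fun ⟨s, hs, h⟩ => hrow s hs h⟩
    refine ⟨g ∘ Function.invFunOn Prod.fst (insert p₀ M : Finset _), 1, fun p hp => ?_⟩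
    rw [Pi.one_apply, mul_one, Function.comp_apply, hinj.leftInvOn_invFunOn (mem_coe.mpr hp)]

theorem MulAction.index_dvd_card_of_stabilizer_le {G α : Type*} [Group G] [MulAction G α]
    [Finite α] (K : Subgroup G) (hK : ∀ a : α, stabilizer G a ≤ K) :
    K.index ∣ Nat.card α := by
  classical
  have := Fintype.ofFinite α
  rw [Nat.card_congr (selfEquivSigmaOrbits G α), Nat.card_sigma]
  refine dvd_sum fun ω _ => ?_
  rw [Nat.card_coe_set_eq, ← index_stabilizer]
  exact Subgroup.index_dvd_of_le (hK _)

theorem MulAction.index_dvd_card_finset_of_stabilizer_le {G α : Type*} [Group G]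
    [MulAction G α] (K : Subgroup G) (s : Finset α) (hs : ∀ g : G, ∀ a ∈ s, g • a ∈ s)
    (hK : ∀ a ∈ s, stabilizer G a ≤ K) : K.index ∣ #s := by
  let s' : SubMulAction G α := ⟨s, fun g a ha => hs g a ha⟩
  have : Finite s' := s.finite_toSet
  have h := index_dvd_card_of_stabilizer_le (α := s') K fun a g hg =>
    hK a a.2 (Subtype.ext_iff.mp hg)
  rwa [show Nat.card s' = #s from (Nat.card_coe_set_eq (s : Set α)).trans
    (Set.ncard_coe_finset s)] at h

namespace Matrix

variable {ι κ R F : Type*}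

theorem exists_perm_forall_ne_zero_of_det_ne_zero {n R : Type*} [Fintype n] [DecidableEq n]
    [CommRing R] {A : Matrix n n R} (h : A.det ≠ 0) :
    ∃ σ : Equiv.Perm n, ∀ i, A (σ i) i ≠ 0 := by
  contrapose! h
  rw [det_apply]
  refine sum_eq_zero fun σ _ => ?_
  obtain ⟨i, hi⟩ := h σ
  rw [prod_eq_zero (f := fun j => A (σ j) j) (mem_univ i) hi, smul_zero]

section Support

variable [Fintype ι] [Fintype κ]

def support [Zero R] [DecidableEq R] (A : Matrix ι κ R) : Finset (ι × κ) :=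
  {p | A p.1 p.2 ≠ 0}

@[simp] theorem mem_support [Zero R] [DecidableEq R] {A : Matrix ι κ R} {p : ι × κ} :
    p ∈ A.support ↔ A p.1 p.2 ≠ 0 := by
  simp [support]

theorem card_filter_support_eq [DecidableEq ι] [DecidableEq κ] [GroupWithZero F] [Fintype F]
    [DecidableEq F] (P : Finset (ι × κ)) :
    #{A : Matrix ι κ F | A.support = P} = (Fintype.card F - 1) ^ #P := by
  rw [← Fintype.card_subtype, ← Fintype.card_units, ← Fintype.card_coe P,
    ← Fintype.card_fun]
  refine Fintype.card_congr
    { toFun := fun A p => Units.mk0 (A.1 p.1.1 p.1.2) (mem_support.mp (by rw [A.2]; exact p.2))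
      invFun := fun u => ⟨of fun i j => if h : (i, j) ∈ P then (u ⟨_, h⟩ : F) else 0, ?_⟩
      left_inv := fun A => ?_
      right_inv := fun u => ?_ }
  · ext p
    by_cases hp : p ∈ P <;> simp [hp]
  · ext i j
    by_cases h : (i, j) ∈ P
    · simp [h]
    · have hA : (i, j) ∉ A.1.support := by rwa [A.2]
      simp [h, not_not.mp (mem_support.not.mp hA)]
  · ext p
    simp

variable [Field F]

theorem exists_submatrix_det_ne_zero (A : Matrix ι κ F) :
    ∃ (f : Fin A.rank → ι) (g : Fin A.rank → κ), f.Injective ∧ g.Injective ∧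
      (A.submatrix f g).det ≠ 0 := by
  classical
  obtain ⟨κ', a, ha, hspan_a, hli_a⟩ := exists_linearIndependent' F A.col
  have : Fintype κ' := Fintype.ofInjective a ha
  set B := A.submatrix id a
  obtain ⟨ι', b, hb, hspan_b, hli_b⟩ := exists_linearIndependent' F B.row
  have : Fintype ι' := Fintype.ofInjective b hb
  have hrankA : A.rank = Fintype.card κ' := by
    rw [rank_eq_finrank_span_cols, ← hspan_a, finrank_span_eq_card hli_a]
  have hrankB : B.rank = Fintype.card κ' := by
    rw [rank_eq_finrank_span_cols]
    exact finrank_span_eq_card (b := B.col) hli_a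
  have hcard : Fintype.card ι' = A.rank := by
    rw [hrankA, ← hrankB, rank_eq_finrank_span_row, ← hspan_b, finrank_span_eq_card hli_b]
  let e₁ : Fin A.rank ≃ ι' := (Fintype.equivFinOfCardEq hcard).symm
  let e₂ : Fin A.rank ≃ κ' := (Fintype.equivFinOfCardEq hrankA.symm).symm
  refine ⟨b ∘ e₁, a ∘ e₂, hb.comp e₁.injective, ha.comp e₂.injective, ?_⟩
  have hli : LinearIndependent F (A.submatrix (b ∘ e₁) (a ∘ e₂)).row :=
    (hli_b.comp e₁ e₁.injective).map' (LinearEquiv.funCongrLeft F F e₂).toLinearMap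
      (LinearEquiv.ker _)
  exact ((isUnit_iff_isUnit_det _).mp (linearIndependent_rows_iff_isUnit.mp hli)).ne_zero

variable [DecidableEq F]

theorem rank_eq_card_support {A : Matrix ι κ F} (hA : IsPartialPerm A.support) :
    A.rank = #A.support := by
  classical
  apply le_antisymm
  · refine (rank_le_card_of_support_subset A (A.support.image Prod.fst) ?_).trans
      (card_image_of_injOn hA.1).le
    intro i hi
    obtain ⟨j, hj⟩ := Function.ne_iff.mp (Function.mem_support.mp hi)
    exact mem_image.mpr ⟨(i, j), mem_support.mpr hj, rfl⟩
  · have hdiag : A.submatrix (fun p : A.support => p.1.1) (fun p => p.1.2) =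
        diagonal fun p => A p.1.1 p.1.2 := by
      ext p p'
      by_cases h : p = p'
      · simp [h]
      · rw [submatrix_apply, diagonal_apply_ne _ h]
        by_contra hne
        apply h
        have hmem : ((p : ι × κ).1, (p' : ι × κ).2) ∈ A.support := mem_support.mpr hne
        have h1 := hA.1 (mem_coe.mpr hmem) (mem_coe.mpr p.2) rfl
        have h2 := hA.2 (mem_coe.mpr hmem) (mem_coe.mpr p'.2) rfl
        exact Subtype.ext (h1.symm.trans h2)
    calc #A.support = (diagonal fun p : A.support => A p.1.1 p.1.2).rank := by
          rw [rank_diagonal, Fintype.card_congr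
            (Equiv.subtypeUnivEquiv fun p : A.support => mem_support.mp p.2), Fintype.card_coe]
      _ = (A.submatrix (fun p : A.support => p.1.1) (fun p : A.support => p.1.2)).rank := by
          rw [hdiag]
      _ ≤ A.rank := rank_submatrix_le _ _ _

theorem exists_isPartialPerm_subset_support (A : Matrix ι κ F) :
    ∃ M ⊆ A.support, IsPartialPerm M ∧ #M = A.rank := by
  classical
  obtain ⟨f, g, hf, hg, hdet⟩ := exists_submatrix_det_ne_zero A
  obtain ⟨σ, hσ⟩ := exists_perm_forall_ne_zero_of_det_ne_zero hdet
  let φ : Fin A.rank → ι × κ := fun s => (f (σ s), g s)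
  have hφ₁ : (Prod.fst ∘ φ).Injective := hf.comp σ.injective
  have hφ₂ : (Prod.snd ∘ φ).Injective := hg
  refine ⟨univ.image φ, fun p hp => ?_, ⟨?_, ?_⟩, ?_⟩
  · obtain ⟨s, -, rfl⟩ := mem_image.mp hp
    exact mem_support.mpr (hσ s)
  · rw [coe_image, coe_univ]
    exact hφ₁.injOn.image_of_comp
  · rw [coe_image, coe_univ]
    exact hφ₂.injOn.image_of_comp
  · rw [card_image_of_injective _ hφ₂.of_comp, card_univ, Fintype.card_fin]

end Support

section Torus

instance [CommMonoid R] : SMul ((ι → Rˣ) × (κ → Rˣ)) (Matrix ι κ R) :=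
  ⟨fun t A => of fun i j => t.1 i * A i j * t.2 j⟩

theorem torus_smul_apply [CommMonoid R] (t : (ι → Rˣ) × (κ → Rˣ)) (A : Matrix ι κ R)
    (i : ι) (j : κ) : (t • A) i j = t.1 i * A i j * t.2 j := rfl

instance [CommMonoid R] : MulAction ((ι → Rˣ) × (κ → Rˣ)) (Matrix ι κ R) where
  one_smul A := by ext; simp [torus_smul_apply]
  mul_smul s t A := by
    ext
    simp only [torus_smul_apply, Prod.fst_mul, Prod.snd_mul, Pi.mul_apply, Units.val_mul]
    ac_rfl

theorem support_torus_smul [Fintype ι] [Fintype κ] [CommMonoidWithZero R] [DecidableEq R]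
    (t : (ι → Rˣ) × (κ → Rˣ)) (A : Matrix ι κ R) : (t • A).support = A.support := by
  ext
  simp [torus_smul_apply]

theorem rank_torus_smul [Fintype ι] [Fintype κ] [DecidableEq ι] [DecidableEq κ] [CommRing R]
    (t : (ι → Rˣ) × (κ → Rˣ)) (A : Matrix ι κ R) : (t • A).rank = A.rank := by
  have hdiag : t • A = diagonal (fun i => (t.1 i : R)) * A * diagonal (fun j => (t.2 j : R)) := by
    ext
    simp [torus_smul_apply, mul_diagonal, diagonal_mul]
  rw [hdiag, rank_mul_eq_left_of_isUnit_det, rank_mul_eq_right_of_isUnit_det] <;>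
  · rw [det_diagonal, ← Units.coe_prod]
    exact Units.isUnit _

def torusWeight (R : Type*) [CommMonoid R] (E : Finset (ι × κ)) :
    (ι → Rˣ) × (κ → Rˣ) →* (E → Rˣ) where
  toFun t p := t.1 p.1.1 * t.2 p.1.2
  map_one' := by ext; simp
  map_mul' s t := by
    ext
    simp only [Prod.fst_mul, Prod.snd_mul, Pi.mul_apply, Units.val_mul]
    ac_rfl

theorem torusWeight_apply [CommMonoid R] (E : Finset (ι × κ)) (t : (ι → Rˣ) × (κ → Rˣ))
    (p : E) : torusWeight R E t p = t.1 p.1.1 * t.2 p.1.2 := rfl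

theorem stabilizer_le_ker_torusWeight [Fintype ι] [Fintype κ] [CommMonoidWithZero R]
    [IsCancelMulZero R] [DecidableEq R] {A : Matrix ι κ R} {E : Finset (ι × κ)}
    (hE : E ⊆ A.support) : MulAction.stabilizer _ A ≤ (torusWeight R E).ker := by
  intro t ht
  ext p
  have hp := mem_support.mp (hE p.2)
  have h : (t • A) p.1.1 p.1.2 = A p.1.1 p.1.2 := by rw [MulAction.mem_stabilizer_iff.mp ht]
  rw [torus_smul_apply, mul_right_comm] at h
  simpa [torusWeight_apply] using mul_right_cancel₀ hp (h.trans (one_mul _).symm)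

theorem torusWeight_insert_surjective [DecidableEq ι] [DecidableEq κ] [CommMonoid R]
    {M : Finset (ι × κ)} (hM : IsPartialPerm M) {p₀ : ι × κ} (hp₀ : p₀ ∉ M) :
    Function.Surjective (torusWeight R (insert p₀ M)) := by
  classical
  intro g
  obtain ⟨a, b, hab⟩ :=
    hM.exists_mul_eq_on_insert hp₀ fun p => if h : p ∈ insert p₀ M then g ⟨p, h⟩ else 1
  refine ⟨(a, b), funext fun p => ?_⟩
  simp [torusWeight_apply, hab p p.2]

end Torus

section Counting

variable [Fintype ι] [Fintype κ] [DecidableEq ι] [DecidableEq κ] [Field F] [Fintype F]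
  [DecidableEq F]

theorem pow_succ_dvd_card_of_not_isPartialPerm {r : ℕ} {P : Finset (ι × κ)}
    (hP : ¬(IsPartialPerm P ∧ #P = r)) (s : Finset (Matrix ι κ F))
    (hs : ∀ t : (ι → Fˣ) × (κ → Fˣ), ∀ A ∈ s, t • A ∈ s)
    (hsP : ∀ A ∈ s, A.rank = r ∧ A.support = P) :
    (Fintype.card F - 1) ^ (r + 1) ∣ #s := by
  obtain rfl | ⟨A₀, hA₀⟩ := s.eq_empty_or_nonempty
  · simp
  obtain ⟨hr, rfl⟩ := hsP A₀ hA₀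
  obtain ⟨M, hMA, hM, hMr⟩ := A₀.exists_isPartialPerm_subset_support
  obtain ⟨p₀, hp₀A, hp₀M⟩ : ∃ p₀ ∈ A₀.support, p₀ ∉ M := by
    by_contra! h
    exact hP (subset_antisymm hMA h ▸ ⟨hM, hMr.trans hr⟩)
  have hindex : (torusWeight F (insert p₀ M)).ker.index = (Fintype.card F - 1) ^ (r + 1) := by
    rw [Subgroup.index_ker, MonoidHom.range_eq_top.mpr (torusWeight_insert_surjective hM hp₀M),
      Subgroup.card_top, Nat.card_fun, Nat.card_units, Nat.card_eq_fintype_card,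
      Nat.card_eq_fintype_card, Fintype.card_coe, card_insert_of_notMem hp₀M, hMr, hr]
  rw [← hindex]
  refine MulAction.index_dvd_card_finset_of_stabilizer_le _ s hs fun A hA => ?_
  exact stabilizer_le_ker_torusWeight ((hsP A hA).2 ▸ insert_subset hp₀A hMA)

variable (r : ℕ) (S : Set (ι × κ))

open Classical in
theorem card_filter_rank_support_eq_of_isPartialPerm {P : Finset (ι × κ)}
    (hP : IsPartialPerm P ∧ #P = r ∧ ∀ p ∈ P, p ∉ S) :
    #{A : Matrix ι κ F | (A.rank = r ∧ ∀ p ∈ S, A p.1 p.2 = 0) ∧ A.support = P} =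
      (Fintype.card F - 1) ^ r := by
  obtain ⟨hP, hPr, hPS⟩ := hP
  rw [← hPr, ← card_filter_support_eq]
  congr 1
  ext A
  simp only [mem_filter, mem_univ, true_and, and_iff_right_iff_imp]
  rintro rfl
  exact ⟨rank_eq_card_support hP,
    fun p hpS => not_not.mp fun hp => hPS p (mem_support.mpr hp) hpS⟩

open Classical in
theorem pow_succ_dvd_card_filter_rank_support_eq {P : Finset (ι × κ)}
    (hP : ¬(IsPartialPerm P ∧ #P = r ∧ ∀ p ∈ P, p ∉ S)) :
    (Fintype.card F - 1) ^ (r + 1) ∣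
      #{A : Matrix ι κ F | (A.rank = r ∧ ∀ p ∈ S, A p.1 p.2 = 0) ∧ A.support = P} := by
  by_cases hPS : ∀ p ∈ P, p ∉ S
  · refine pow_succ_dvd_card_of_not_isPartialPerm (fun h => hP ⟨h.1, h.2, hPS⟩) _
      (fun t A hA => ?_) fun A hA => ⟨(mem_filter.mp hA).2.1.1, (mem_filter.mp hA).2.2⟩
    obtain ⟨⟨hr, hS⟩, hsupp⟩ := (mem_filter.mp hA).2
    refine mem_filter.mpr ⟨mem_univ _, ⟨rank_torus_smul t A ▸ hr, fun p hp => ?_⟩,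
      (support_torus_smul t A).trans hsupp⟩
    rw [torus_smul_apply, hS p hp, mul_zero, zero_mul]
  · push Not at hPS
    obtain ⟨p, hp, hpS⟩ := hPS
    rw [filter_false_of_mem fun A _ ⟨⟨_, hS⟩, hA⟩ => mem_support.mp (hA ▸ hp) (hS p hpS),
      card_empty]
    exact dvd_zero _

end Counting

end Matrix

open Classical in
theorem card_partialPermMatrix_eq {ι κ : Type*} [Fintype ι] [Fintype κ] [DecidableEq ι]
    [DecidableEq κ] (r : ℕ) (S : Set (ι × κ)) :
    Nat.card {A : Matrix ι κ ℕ //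
        (∀ i j, A i j = 0 ∨ A i j = 1) ∧
        Nat.card {p : ι × κ // A p.1 p.2 = 1} = r ∧
        (∀ i j j', A i j = 1 → A i j' = 1 → j = j') ∧
        (∀ i i' j, A i j = 1 → A i' j = 1 → i = i') ∧
        (∀ p ∈ S, A p.1 p.2 = 0)} =
      #{P : Finset (ι × κ) | IsPartialPerm P ∧ #P = r ∧ ∀ p ∈ P, p ∉ S} := by
  classical
  rw [← Fintype.card_subtype, ← Nat.card_eq_fintype_card]
  refine Nat.card_congr
    { toFun := fun A => ⟨({p | A.1 p.1 p.2 = 1} : Finset (ι × κ)), ?_⟩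
      invFun := fun P => ⟨of fun i j => if (i, j) ∈ P.1 then 1 else 0, ?_⟩
      left_inv := fun A => ?_
      right_inv := fun P => ?_ }
  · obtain ⟨-, hcard, hrow, hcol, hS⟩ := A.2
    refine ⟨⟨fun p hp q hq h => Prod.ext h ?_, fun p hp q hq h => Prod.ext ?_ h⟩, ?_, ?_⟩
    · simp only [coe_filter, mem_univ, true_and, Set.mem_ofPred_eq] at hp hq
      exact hrow _ _ _ hp (h ▸ hq)
    · simp only [coe_filter, mem_univ, true_and, Set.mem_ofPred_eq] at hp hq
      exact hcol _ _ _ hp (h ▸ hq)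
    · rwa [Nat.card_eq_fintype_card, Fintype.card_subtype] at hcard
    · intro p hp hpS
      simp [hS p hpS] at hp
  · obtain ⟨P, ⟨hrow, hcol⟩, hcard, hS⟩ := P
    refine ⟨fun i j => ?_, ?_, fun i j j' h h' => ?_, fun i i' j h h' => ?_, fun p hp => ?_⟩
    · by_cases h : (i, j) ∈ P <;> simp [h]
    · simpa [Nat.card_eq_fintype_card] using hcard
    · simp only [of_apply, ite_eq_left_iff, zero_ne_one, imp_false, not_not] at h h'
      exact congrArg Prod.snd (hrow (mem_coe.mpr h) (mem_coe.mpr h') rfl)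
    · simp only [of_apply, ite_eq_left_iff, zero_ne_one, imp_false, not_not] at h h'
      exact congrArg Prod.fst (hcol (mem_coe.mpr h) (mem_coe.mpr h') rfl)
    · simpa using fun h => hS p h hp
  · ext i j
    rcases A.2.1 i j with h | h <;> simp [h]
  · ext p
    simp

theorem stmt18_general (F : Type) [Field F] [Fintype F] (q : ℕ) (hq : Fintype.card F = q)
    (m n r : ℕ) (S : Set (Fin m × Fin n)) :
    Nat.card {A : Matrix (Fin m) (Fin n) F //
        A.rank = r ∧ ∀ p ∈ S, A p.1 p.2 = 0} ≡
      Nat.card {A : Matrix (Fin m) (Fin n) ℕ //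
        (∀ i j, A i j = 0 ∨ A i j = 1) ∧
        Nat.card {p : Fin m × Fin n // A p.1 p.2 = 1} = r ∧
        (∀ i j j', A i j = 1 → A i j' = 1 → j = j') ∧
        (∀ i i' j, A i j = 1 → A i' j = 1 → i = i') ∧
        (∀ p ∈ S, A p.1 p.2 = 0)} * (q - 1) ^ r [MOD (q - 1) ^ (r + 1)] := by
  classical
  subst hq
  rw [card_partialPermMatrix_eq, Nat.card_eq_fintype_card, Fintype.card_subtype,
    card_eq_sum_card_fiberwise (f := Matrix.support) (t := univ) (by simp),
    ← sum_filter_add_sum_filter_not univ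
      fun P => IsPartialPerm P ∧ #P = r ∧ ∀ p ∈ P, p ∉ S]
  simp only [filter_filter]
  rw [sum_congr rfl fun P hP =>
    card_filter_rank_support_eq_of_isPartialPerm r S (mem_filter.mp hP).2, sum_const, smul_eq_mul]
  obtain ⟨k, hk⟩ := dvd_sum fun P hP =>
    pow_succ_dvd_card_filter_rank_support_eq (F := F) r S (mem_filter.mp hP).2
  rw [hk]
  exact Nat.add_mul_mod_self_left _ _ _

theorem stmt18 (F : Type) [Field F] [Fintype F] (q : ℕ) (hq : Fintype.card F = q)
    (m n r : ℕ) (hm : 1 ≤ m) (hn : 1 ≤ n) (S : Set (Fin m × Fin n)) :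
    Nat.card {A : Matrix (Fin m) (Fin n) F //
        A.rank = r ∧ ∀ p ∈ S, A p.1 p.2 = 0} ≡
      Nat.card {A : Matrix (Fin m) (Fin n) ℕ //
        (∀ i j, A i j = 0 ∨ A i j = 1) ∧
        Nat.card {p : Fin m × Fin n // A p.1 p.2 = 1} = r ∧
        (∀ i j j', A i j = 1 → A i j' = 1 → j = j') ∧
        (∀ i i' j, A i j = 1 → A i' j = 1 → i = i') ∧
        (∀ p ∈ S, A p.1 p.2 = 0)} * (q - 1) ^ r [MOD (q - 1) ^ (r + 1)] :=
  stmt18_general F q hq m n r S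
end
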